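/- arXiv:2202.10078 — 10 statements merged into one kernel-verified Lean document; each statement's English description precedes it below -/
import Mathlib

section
/- Under Assumptions (A1), the normalizing random variable C_n converges in mean square to 1, i.e. E[|C_n − 1|²] → 0 as n → ∞. -/
open MeasureTheory ProbabilityTheory Filter Topology

/-!
Everything is deterministic once every `X i` lies in `T`. Swapping the sums,
`C_n = n⁻¹ ∑_{i<n} ∑_{y ∈ T} K_{y,h_n}(X_i)`, so it suffices that `∑_{y ∈ T} K_{y,h}(z) → 1`
uniformly in `z ∈ T`. By Chebyshev and (A1), the kernel centred at `z` puts mass at least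
`1 - 4 Var/α²` on `z`, and a kernel centred at `y ≠ z` puts mass at most `4 Var/(y - z)²` on `z`;
since `T` is `α`-separated, `∑_{y ≠ z} (y - z)⁻²` is bounded by `(4/α²) ∑_{k ∈ ℤ} k⁻²`.
Uniform almost sure convergence of `C_n` to `1` then gives convergence in mean square.
-/

theorem ae_apply_ne_zero_of_measure_preimage_singleton
    {Ω β : Type*} [MeasurableSpace Ω] [MeasurableSpace β] [MeasurableSingletonClass β]
    {P : Measure Ω} [IsProbabilityMeasure P] {X : Ω → β} (hX : Measurable X)
    {f : β → ℝ} (hf0 : ∀ x, 0 ≤ f x) (hf1 : HasSum f 1)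
    (hXd : ∀ x, P (X ⁻¹' {x}) = ENNReal.ofReal (f x)) :
    ∀ᵐ ω ∂P, f (X ω) ≠ 0 := by
  have hsupp : (Function.support f).Countable := hf1.summable.countable_support
  have hprob : P (X ⁻¹' Function.support f) = 1 := by
    rw [← tsum_measure_preimage_singleton hsupp fun y _ => hX (measurableSet_singleton y)]
    simp only [hXd]
    rw [← ENNReal.ofReal_tsum_of_nonneg (fun x => hf0 _) (hf1.summable.subtype _),
      tsum_subtype_eq_of_support_subset subset_rfl, hf1.tsum_eq, ENNReal.ofReal_one]
  exact mem_ae_iff.2 ((prob_compl_eq_zero_iff (hX hsupp.measurableSet)).2 hprob)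

theorem le_mul_sq_div_sq {a d t : ℝ} (ha : 0 ≤ a) (hd : 0 < d) (ht : d ≤ |t|) :
    a ≤ a * t ^ 2 / d ^ 2 := by
  rw [le_div_iff₀ (by positivity), ← sq_abs t]
  gcongr

theorem le_div_sq_of_hasSum_mul_sub_sq {k : ℝ → ℝ} {E V d z : ℝ} (hk0 : ∀ w, 0 ≤ k w)
    (hV : HasSum (fun w => k w * (w - E) ^ 2) V) (hd : 0 < d) (hz : d ≤ |z - E|) :
    k z ≤ V / d ^ 2 :=
  (le_mul_sq_div_sq (hk0 z) hd hz).trans <| div_le_div_of_nonneg_right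
    (le_hasSum hV z fun w _ => mul_nonneg (hk0 w) (sq_nonneg _)) (by positivity)

theorem abs_apply_self_sub_one_le {k : ℝ → ℝ} {s : Set ℝ} {x E V α : ℝ} (hα : 0 < α)
    (hk0 : ∀ w, 0 ≤ k w) (hk1 : HasSum k 1) (hks : ∀ w ∉ s, k w = 0)
    (hsep : ∀ w ∈ s, w ≠ x → α ≤ |w - x|) (hE : |E - x| ≤ α / 2)
    (hV : HasSum (fun w => k w * (w - E) ^ 2) V) :
    |k x - 1| ≤ 4 / α ^ 2 * V := by
  set r : ℝ → ℝ := fun w => if w = x then 0 else k w with hr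
  have hr0 : ∀ w, 0 ≤ r w := fun w => by
    by_cases hw : w = x <;> simp [hr, hw, hk0 w]
  have hrle : ∀ w, r w ≤ 4 / α ^ 2 * (k w * (w - E) ^ 2) := by
    intro w
    by_cases hw : w = x
    · simp only [hr, if_pos hw]
      exact mul_nonneg (by positivity) (mul_nonneg (hk0 w) (sq_nonneg _))
    by_cases hws : w ∈ s
    · have hwE : α / 2 ≤ |w - E| := by
        linarith [hsep w hws hw, abs_sub_le w E x]
      calc r w = k w := if_neg hw
        _ ≤ k w * (w - E) ^ 2 / (α / 2) ^ 2 := le_mul_sq_div_sq (hk0 w) (by positivity) hwE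
        _ = 4 / α ^ 2 * (k w * (w - E) ^ 2) := by ring
    · simp only [hr, if_neg hw, hks w hws]
      exact mul_nonneg (by positivity) (mul_nonneg le_rfl (sq_nonneg _))
  have hsplit : 1 = k x + ∑' w, r w := by
    simpa [hk1.tsum_eq] using hk1.summable.tsum_eq_add_tsum_ite x
  have hVs := (hV.mul_left (4 / α ^ 2))
  have hrsum : ∑' w, r w ≤ 4 / α ^ 2 * V :=
    hVs.tsum_eq ▸ Summable.tsum_le_tsum hrle (hVs.summable.of_nonneg_of_le hr0 hrle) hVs.summable
  rw [abs_sub_comm, abs_of_nonneg (by linarith [show 0 ≤ ∑' w, r w from tsum_nonneg hr0])]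
  linarith

theorem one_div_sq_le_of_le_abs {α t : ℝ} (hα : 0 < α) (ht : α ≤ |t|) :
    1 / t ^ 2 ≤ 4 / α ^ 2 * (1 / (⌊t / α⌋ : ℝ) ^ 2) := by
  set a := t / α
  have ha : 1 ≤ |a| := by rwa [abs_div, abs_of_pos hα, le_div_iff₀ hα, one_mul]
  have hfract : |a - ⌊a⌋| < 1 := by
    rw [← Int.fract, abs_of_nonneg (Int.fract_nonneg a)]; exact Int.fract_lt_one a
  have hk : |(⌊a⌋ : ℝ)| ≤ 2 * |a| := by linarith [abs_sub_abs_le_abs_sub (⌊a⌋ : ℝ) a, abs_sub_comm (⌊a⌋ : ℝ) a]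
  have hk0 : (⌊a⌋ : ℝ) ≠ 0 := by
    intro h
    rw [h, sub_zero] at hfract
    linarith
  have ha2 : 0 < a ^ 2 := by rw [← sq_abs]; exact pow_pos (by linarith) 2
  have hk2 : 0 < (⌊a⌋ : ℝ) ^ 2 := by positivity
  have hka : (⌊a⌋ : ℝ) ^ 2 ≤ 4 * a ^ 2 := by
    rw [← sq_abs, ← sq_abs a]; nlinarith [abs_nonneg (⌊a⌋ : ℝ)]
  calc 1 / t ^ 2 = 1 / (α ^ 2 * a ^ 2) := by rw [← mul_pow, mul_div_cancel₀ t hα.ne']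
    _ ≤ 4 / α ^ 2 * (1 / (⌊a⌋ : ℝ) ^ 2) := by
      rw [div_mul_div_comm, mul_one, div_le_div_iff₀ (by positivity) (by positivity)]
      nlinarith [sq_nonneg α]

theorem injective_floor_sub_div {T : Set ℝ} {α : ℝ} (hα : 0 < α)
    (hT : T.Pairwise fun y y' => α ≤ |y - y'|) (z : ℝ) :
    Function.Injective fun y : T => ⌊((y : ℝ) - z) / α⌋ := by
  intro y y' h
  by_contra hne
  have hlt := Int.abs_sub_lt_one_of_floor_eq_floor h
  rw [← sub_div, sub_sub_sub_cancel_right, abs_div, abs_of_pos hα, div_lt_one hα] at hlt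
  exact (hT y.2 y'.2 (Subtype.coe_injective.ne hne)).not_gt hlt

-- Distinct points of `T` have distinct `⌊(y - z) / α⌋`, so the sum is compared with `∑ k⁻²`.
theorem summable_and_tsum_le_of_pairwise_le_abs_sub {T : Set ℝ} {α c z : ℝ} (hα : 0 < α)
    (hc : 0 ≤ c) (hT : T.Pairwise fun y y' => α ≤ |y - y'|) (hz : z ∈ T) {g : T → ℝ}
    (hg0 : ∀ y, 0 ≤ g y) (hgz : ∀ y : T, (y : ℝ) = z → g y = 0)
    (hg : ∀ y : T, (y : ℝ) ≠ z → g y ≤ c / ((y : ℝ) - z) ^ 2) :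
    Summable g ∧ ∑' y, g y ≤ 4 * c / α ^ 2 * ∑' k : ℤ, 1 / (k : ℝ) ^ 2 := by
  set W : ℤ → ℝ := fun k => 4 * c / α ^ 2 * (1 / (k : ℝ) ^ 2)
  have hW : Summable W := (Real.summable_one_div_int_pow.2 one_lt_two).mul_left _
  have hW0 : ∀ k, 0 ≤ W k := fun k => by positivity
  have hgW : ∀ y : T, g y ≤ W ⌊((y : ℝ) - z) / α⌋ := by
    intro y
    by_cases hy : (y : ℝ) = z
    · exact (hgz y hy).trans_le (hW0 _)
    calc g y ≤ c * (1 / ((y : ℝ) - z) ^ 2) := by rw [mul_one_div]; exact hg y hy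
      _ ≤ c * (4 / α ^ 2 * (1 / (⌊((y : ℝ) - z) / α⌋ : ℝ) ^ 2)) :=
        mul_le_mul_of_nonneg_left (one_div_sq_le_of_le_abs hα (hT y.2 hz hy)) hc
      _ = W ⌊((y : ℝ) - z) / α⌋ := by ring
  have hinj := injective_floor_sub_div hα hT z
  have hgs : Summable g := Summable.of_nonneg_of_le hg0 hgW (hW.comp_injective hinj)
  exact ⟨hgs, (Summable.tsum_le_tsum_of_inj _ hinj (fun k _ => hW0 k) hgW hgs hW).trans_eq
    tsum_mul_left⟩

theorem summable_and_abs_tsum_sub_one_le {T : Set ℝ} {S : ℝ → Set ℝ} {K : ℝ → ℝ → ℝ}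
    {E V : ℝ → ℝ} {α ε z : ℝ} (hα : 0 < α)
    (hK0 : ∀ x ∈ T, ∀ w, 0 ≤ K x w) (hKS : ∀ x ∈ T, ∀ w ∉ S x, K x w = 0)
    (hK1 : ∀ x ∈ T, HasSum (K x) 1) (hsep : ∀ x ∈ T, ∀ w ∈ (T ∪ S x) \ {x}, α ≤ |w - x|)
    (hV : ∀ x ∈ T, HasSum (fun w => K x w * (w - E x) ^ 2) (V x))
    (hE : ∀ x ∈ T, |E x - x| ≤ α / 2) (hVε : ∀ x ∈ T, V x ≤ ε) (hz : z ∈ T) :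
    Summable (fun y : T => K y z) ∧
      |∑' y : T, K y z - 1| ≤ 4 / α ^ 2 * (1 + 4 * ∑' k : ℤ, 1 / (k : ℝ) ^ 2) * ε := by
  have hT : T.Pairwise fun y y' => α ≤ |y - y'| := fun y hy y' hy' hne =>
    hsep y' hy' y ⟨Or.inl hy, hne⟩
  have hε : 0 ≤ ε :=
    (hV z hz).nonneg (fun w => mul_nonneg (hK0 z hz w) (sq_nonneg _)) |>.trans (hVε z hz)
  set g : T → ℝ := fun y => if (y : ℝ) = z then 0 else K y z with hg
  have hg0 : ∀ y, 0 ≤ g y := fun y => by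
    by_cases hy : (y : ℝ) = z <;> simp [hg, hy, hK0 y y.2 z]
  have hgz : ∀ y : T, (y : ℝ) = z → g y = 0 := fun y hy => if_pos hy
  -- Chebyshev at distance `|z - y| / 2`, which is at most `|z - E y|`
  -- because `E y` is `α / 2`-close to `y`.
  have hgle : ∀ y : T, (y : ℝ) ≠ z → g y ≤ 4 * ε / ((y : ℝ) - z) ^ 2 := by
    intro y hy
    have hyz : α ≤ |z - y| := hsep y y.2 z ⟨Or.inl hz, Ne.symm hy⟩
    have hd : |z - y| / 2 ≤ |z - E y| := by linarith [abs_sub_le z (E y) y, hE y y.2]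
    calc g y = K y z := if_neg hy
      _ ≤ V y / (|z - y| / 2) ^ 2 :=
        le_div_sq_of_hasSum_mul_sub_sq (hK0 y y.2) (hV y y.2) (by positivity) hd
      _ = 4 * V y / ((y : ℝ) - z) ^ 2 := by rw [div_pow, sq_abs, ← neg_sub, neg_sq, div_div_eq_mul_div]; ring
      _ ≤ 4 * ε / ((y : ℝ) - z) ^ 2 := by gcongr; exact hVε y y.2
  obtain ⟨hgs, hgsum⟩ :=
    summable_and_tsum_le_of_pairwise_le_abs_sub hα (by positivity) hT hz hg0 hgz hgle
  have hdiag : |K z z - 1| ≤ 4 / α ^ 2 * ε :=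
    (abs_apply_self_sub_one_le hα (hK0 z hz) (hK1 z hz) (hKS z hz)
      (fun w hw hwz => hsep z hz w ⟨Or.inr hw, hwz⟩) (hE z hz) (hV z hz)).trans
      (by gcongr; exact hVε z hz)
  have hsplit : HasSum (fun y : T => K y z) (∑' y, g y + K z z) := by
    convert hgs.hasSum.add (hasSum_ite_eq (⟨z, hz⟩ : T) (K z z)) using 1
    ext y
    by_cases hy : (y : ℝ) = z
    · simp [hg, hy, Subtype.ext_iff]
    · simp [hg, hy, Subtype.ext_iff]
  refine ⟨hsplit.summable, ?_⟩
  rw [hsplit.tsum_eq, add_sub_assoc]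
  calc |∑' y, g y + (K z z - 1)| ≤ ∑' y, g y + |K z z - 1| := by
        simpa only [abs_of_nonneg (tsum_nonneg hg0)] using abs_add_le (∑' y, g y) (K z z - 1)
    _ ≤ 4 * (4 * ε) / α ^ 2 * ∑' k : ℤ, 1 / (k : ℝ) ^ 2 + 4 / α ^ 2 * ε := add_le_add hgsum hdiag
    _ = 4 / α ^ 2 * (1 + 4 * ∑' k : ℤ, 1 / (k : ℝ) ^ 2) * ε := by ring

theorem abs_tsum_average_sub_one_le {ι : Type*} {n : ℕ} (hn : 0 < n) {k : ι → ℕ → ℝ} {ε : ℝ}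
    (hk : ∀ i ∈ Finset.range n, Summable fun y => k y i)
    (hε : ∀ i ∈ Finset.range n, |∑' y, k y i - 1| ≤ ε) :
    |∑' y, (n : ℝ)⁻¹ * ∑ i ∈ Finset.range n, k y i - 1| ≤ ε := by
  have hn' : (n : ℝ) ≠ 0 := by positivity
  rw [tsum_mul_left, Summable.tsum_finsetSum hk]
  calc |(n : ℝ)⁻¹ * ∑ i ∈ Finset.range n, ∑' y, k y i - 1|
      = |(n : ℝ)⁻¹ * ∑ i ∈ Finset.range n, (∑' y, k y i - 1)| := by
        rw [Finset.sum_sub_distrib, Finset.sum_const, Finset.card_range, nsmul_eq_mul, mul_one,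
          mul_sub, inv_mul_cancel₀ hn']
    _ ≤ (n : ℝ)⁻¹ * ∑ i ∈ Finset.range n, |∑' y, k y i - 1| := by
        rw [abs_mul, abs_inv, Nat.abs_cast]
        gcongr
        exact Finset.abs_sum_le_sum_abs _ _
    _ ≤ (n : ℝ)⁻¹ * ∑ _i ∈ Finset.range n, ε := by gcongr with i hi; exact hε i hi
    _ = ε := by rw [Finset.sum_const, Finset.card_range, nsmul_eq_mul, inv_mul_cancel_left₀ hn']

theorem tendsto_integral_sq_of_eventually_ae_abs_le {Ω ι : Type*} [MeasurableSpace Ω]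
    {P : Measure Ω} [IsProbabilityMeasure P] {l : Filter ι} {F : ι → Ω → ℝ}
    (h : ∀ ε > 0, ∀ᶠ n in l, ∀ᵐ ω ∂P, |F n ω| ≤ ε) :
    Tendsto (fun n => ∫ ω, F n ω ^ 2 ∂P) l (𝓝 0) := by
  refine Metric.tendsto_nhds.2 fun δ hδ => ?_
  filter_upwards [h (Real.sqrt (δ / 2)) (by positivity)] with n hn
  have hbound : ‖∫ ω, F n ω ^ 2 ∂P‖ ≤ δ / 2 := by
    simpa using norm_integral_le_of_norm_le_const (μ := P) (f := fun ω => F n ω ^ 2) (hn.mono fun ω hω => by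
      rw [Real.norm_eq_abs, abs_pow, ← Real.sq_sqrt (by positivity : 0 ≤ δ / 2)]
      gcongr)
  rw [dist_zero_right]
  linarith

theorem normalizing_constant_L2_to_one_general
    {Ω : Type*} [MeasurableSpace Ω] (P : Measure Ω) [IsProbabilityMeasure P]
    (T : Set ℝ)
    (f : ℝ → ℝ) (hf0 : ∀ x, 0 ≤ f x) (hfT : ∀ x ∉ T, f x = 0) (hf1 : HasSum f 1)
    (S : ℝ → Set ℝ)
    (K : ℝ → ℝ → ℝ → ℝ)
    (hK0 : ∀ x ∈ T, ∀ h > (0:ℝ), ∀ z, 0 ≤ K x h z)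
    (hKS : ∀ x ∈ T, ∀ h > (0:ℝ), ∀ z ∉ S x, K x h z = 0)
    (hK1 : ∀ x ∈ T, ∀ h > (0:ℝ), HasSum (K x h) 1)
    (α : ℝ) (hα : 0 < α)
    (hsep : ∀ x ∈ T, ∀ z ∈ (T ∪ S x) \ {x}, α ≤ |z - x|)
    (H : ℕ → ℝ) (hH : ∀ n, 0 < H n)
    (X : ℕ → Ω → ℝ) (hXm : ∀ i, Measurable (X i))
    (hXd : ∀ i, ∀ x : ℝ, P (X i ⁻¹' {x}) = ENNReal.ofReal (f x))
    (EZ VZ : ℝ → ℝ → ℝ)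
    (hVZ : ∀ x ∈ T, ∀ h > (0:ℝ), HasSum (fun z : ℝ => K x h z * (z - EZ x h) ^ 2) (VZ x h))
    (hA1E : ∀ ε > (0:ℝ), ∃ N : ℕ, ∀ n ≥ N, ∀ x ∈ T, |EZ x (H n) - x| ≤ ε)
    (hA1V : ∀ ε > (0:ℝ), ∃ N : ℕ, ∀ n ≥ N, ∀ x ∈ T, VZ x (H n) ≤ ε)
    :
    Tendsto
      (fun n : ℕ =>
        ∫ ω, (((∑' y : T, (n:ℝ)⁻¹ * ∑ i ∈ Finset.range n, K (y:ℝ) (H n) (X i ω))) - 1) ^ 2 ∂P)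
      atTop (𝓝 0) := by
  set D : ℝ := 4 / α ^ 2 * (1 + 4 * ∑' k : ℤ, 1 / (k : ℝ) ^ 2)
  have hD : 0 < D := by positivity
  have hkernel : ∀ ε > 0, ∀ᶠ n in atTop, ∀ z ∈ T,
      Summable (fun y : T => K y (H n) z) ∧ |∑' y : T, K y (H n) z - 1| ≤ ε := by
    intro ε hε
    obtain ⟨N₁, hN₁⟩ := hA1E (α / 2) (by positivity)
    obtain ⟨N₂, hN₂⟩ := hA1V (ε / D) (by positivity)
    filter_upwards [eventually_ge_atTop N₁, eventually_ge_atTop N₂] with n hn₁ hn₂ z hz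
    rw [← mul_div_cancel₀ ε hD.ne']
    exact summable_and_abs_tsum_sub_one_le hα (fun x hx => hK0 x hx _ (hH n))
      (fun x hx => hKS x hx _ (hH n)) (fun x hx => hK1 x hx _ (hH n)) hsep
      (fun x hx => hVZ x hx _ (hH n)) (hN₁ n hn₁) (hN₂ n hn₂) hz
  have hXT : ∀ᵐ ω ∂P, ∀ i, X i ω ∈ T := ae_all_iff.2 fun i =>
    (ae_apply_ne_zero_of_measure_preimage_singleton (hXm i) hf0 hf1 (hXd i)).mono
      fun ω hω => not_not.1 (mt (hfT _) hω)
  refine tendsto_integral_sq_of_eventually_ae_abs_le fun ε hε => ?_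
  filter_upwards [hkernel ε hε, eventually_gt_atTop 0] with n hn hn₀
  filter_upwards [hXT] with ω hω
  exact abs_tsum_average_sub_one_le hn₀ (fun i _ => (hn _ (hω i)).1) fun i _ => (hn _ (hω i)).2

theorem normalizing_constant_L2_to_one
    {Ω : Type*} [MeasurableSpace Ω] (P : Measure Ω) [IsProbabilityMeasure P]
    (T : Set ℝ) (hTc : T.Countable)
    (f : ℝ → ℝ) (hf0 : ∀ x, 0 ≤ f x) (hfT : ∀ x ∉ T, f x = 0) (hf1 : HasSum f 1)
    (S : ℝ → Set ℝ) (hSc : ∀ x ∈ T, (S x).Countable)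
    (K : ℝ → ℝ → ℝ → ℝ)
    (hK0 : ∀ x ∈ T, ∀ h > (0:ℝ), ∀ z, 0 ≤ K x h z)
    (hKS : ∀ x ∈ T, ∀ h > (0:ℝ), ∀ z ∉ S x, K x h z = 0)
    (hK1 : ∀ x ∈ T, ∀ h > (0:ℝ), HasSum (K x h) 1)
    (hKm : ∀ x h, Measurable (K x h))
    (hxS : ∀ x ∈ T, x ∈ S x)
    (α : ℝ) (hα : 0 < α)
    (hsep : ∀ x ∈ T, ∀ z ∈ (T ∪ S x) \ {x}, α ≤ |z - x|)
    (H : ℕ → ℝ) (hH : ∀ n, 0 < H n) (hH0 : Tendsto H atTop (𝓝 0))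
    (X : ℕ → Ω → ℝ) (hXm : ∀ i, Measurable (X i))
    (hXind : iIndepFun X P)
    (hXd : ∀ i, ∀ x : ℝ, P (X i ⁻¹' {x}) = ENNReal.ofReal (f x))
    (EZ VZ : ℝ → ℝ → ℝ)
    (hEZ : ∀ x ∈ T, ∀ h > (0:ℝ), HasSum (fun z : ℝ => K x h z * z) (EZ x h))
    (hVZ : ∀ x ∈ T, ∀ h > (0:ℝ), HasSum (fun z : ℝ => K x h z * (z - EZ x h) ^ 2) (VZ x h))
    (hA1E : ∀ ε > (0:ℝ), ∃ N : ℕ, ∀ n ≥ N, ∀ x ∈ T, |EZ x (H n) - x| ≤ ε)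
    (hA1V : ∀ ε > (0:ℝ), ∃ N : ℕ, ∀ n ≥ N, ∀ x ∈ T, VZ x (H n) ≤ ε)
    :
    Tendsto
      (fun n : ℕ =>
        ∫ ω, (((∑' y : T, (n:ℝ)⁻¹ * ∑ i ∈ Finset.range n, K (y:ℝ) (H n) (X i ω))) - 1) ^ 2 ∂P)
      atTop (𝓝 0) :=
  normalizing_constant_L2_to_one_general P T f hf0 hfT hf1 S K hK0 hKS hK1 α hα hsep H hH X hXm hXd
    EZ VZ hVZ hA1E hA1V
end

section
/- Under Assumptions (A1), for every x ∈ T the normalized estimator f̂_n(x) = f̃_n(x)/C_n converges in probability to f(x) as n → ∞. -/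
/-!
Fix a bandwidth `h` at which every kernel `K_{y,h}`, `y ∈ T`, has variance at most `θ` and mean
within `α / 2` of `y`. Chebyshev then gives `1 - K_{y,h}(y) ≤ 4θ/α²` (all other mass lies at
distance `≥ α/2` from the mean) and `K_{y,h}(t) ≤ 4θ/(t - y)²` for `t ≠ y`. Since `T` is
`α`-separated, `∑_{y ∈ T \ {t}} 1/(y - t)²` is bounded by a constant times `1/α²` (compare with
`∑ 1/m²` through `y ↦ ⌊(y - t)/α⌋`), so every column sum `∑_{y ∈ T} K_{y,h}(t)` is `1 + O(θ)`.
Hence, surely on `{X_i ∈ T ∀ i}`, the normaliser `C_n` is an average of numbers `1 + O(θ)`.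
The numerator is a sample mean of independent `[0,1]`-valued variables with mean
`∑_t f(t) K_{x,h}(t) = f(x) + O(1 - K_{x,h}(x))`, and Chebyshev's inequality controls its
deviation by `1/(4nδ²)`.
-/

open MeasureTheory ProbabilityTheory Filter Topology

lemma sq_sub_le_four_mul_sq_sub {y z m : ℝ} (h : 2 * |m - y| ≤ |z - y|) :
    (z - y) ^ 2 ≤ 4 * (z - m) ^ 2 := by
  have hzm : |z - y| ≤ 2 * |z - m| := by linarith [abs_sub_le z m y]
  nlinarith [sq_abs (z - y), sq_abs (z - m), abs_nonneg (z - y)]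

section Concentration

variable {κ : ℝ → ℝ} {y m v : ℝ}

lemma mul_sq_sub_le_four_mul (hκ0 : ∀ z, 0 ≤ κ z) (hv : HasSum (fun z => κ z * (z - m) ^ 2) v)
    {z : ℝ} (hz : 2 * |m - y| ≤ |z - y|) : κ z * (z - y) ^ 2 ≤ 4 * v :=
  calc κ z * (z - y) ^ 2 ≤ 4 * (κ z * (z - m) ^ 2) := by
        nlinarith [hκ0 z, sq_sub_le_four_mul_sq_sub hz]
    _ ≤ 4 * v := by
        gcongr
        exact le_hasSum hv z fun b _ => mul_nonneg (hκ0 b) (sq_nonneg _)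

lemma one_sub_le_four_mul_div_sq (hκ0 : ∀ z, 0 ≤ κ z) (hκ1 : HasSum κ 1)
    (hv : HasSum (fun z => κ z * (z - m) ^ 2) v) {α : ℝ} (hα : 0 < α)
    (hsupp : ∀ z, z ≠ y → κ z ≠ 0 → α ≤ |z - y|) (hm : 2 * |m - y| ≤ α) :
    1 - κ y ≤ 4 * v / α ^ 2 := by
  classical
  rw [le_div_iff₀ (by positivity)]
  have htail : HasSum (fun z => Function.update κ y 0 z * α ^ 2) ((1 - κ y) * α ^ 2) := by
    have := (hκ1.update y 0).mul_right (α ^ 2)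
    rwa [zero_sub, neg_add_eq_sub] at this
  refine hasSum_le (fun z => ?_) htail (hv.mul_left 4)
  rcases eq_or_ne z y with rfl | hzy
  · simpa using mul_nonneg (hκ0 z) (sq_nonneg (z - m))
  rcases eq_or_ne (κ z) 0 with hκz | hκz
  · simp [hzy, hκz]
  have hαz := hsupp z hzy hκz
  have hsq : α ^ 2 ≤ (z - y) ^ 2 := by nlinarith [sq_abs (z - y)]
  have := sq_sub_le_four_mul_sq_sub (hm.trans hαz)
  rw [Function.update_of_ne hzy]
  nlinarith [hκ0 z]

lemma le_four_mul_div_sq_of_ne (hκ0 : ∀ z, 0 ≤ κ z) (hv : HasSum (fun z => κ z * (z - m) ^ 2) v)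
    {z : ℝ} (hzy : z ≠ y) (hz : 2 * |m - y| ≤ |z - y|) : κ z ≤ 4 * v * (1 / (z - y) ^ 2) := by
  have hpos : 0 < (z - y) ^ 2 := by positivity [sub_ne_zero.2 hzy]
  rw [mul_one_div, le_div_iff₀ hpos]
  exact mul_sq_sub_le_four_mul hκ0 hv hz

end Concentration

lemma one_div_sq_le_four_mul_one_div_floor_sq {u : ℝ} (hu : u = 0 ∨ 1 ≤ |u|) :
    1 / u ^ 2 ≤ 4 * (1 / (⌊u⌋ : ℝ) ^ 2) := by
  rcases hu with rfl | hu
  · simp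
  have hfloor : (1 : ℝ) ≤ |(⌊u⌋ : ℝ)| ∧ |(⌊u⌋ : ℝ)| ≤ 2 * |u| := by
    have h1 := Int.floor_le u
    have h2 := Int.lt_floor_add_one u
    rcases le_abs'.1 hu with hneg | hpos
    · have : (⌊u⌋ : ℝ) ≤ -1 := by exact_mod_cast (Int.floor_le_floor hneg).trans (by simp)
      rw [abs_of_neg (by linarith : (⌊u⌋ : ℝ) < 0), abs_of_neg (by linarith : u < 0)]
      constructor <;> linarith
    · have : (1 : ℝ) ≤ ⌊u⌋ := by exact_mod_cast Int.le_floor.2 (by exact_mod_cast hpos)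
      rw [abs_of_pos (by linarith : (0:ℝ) < ⌊u⌋), abs_of_pos (by linarith : (0:ℝ) < u)]
      constructor <;> linarith
  have hu0 : u ≠ 0 := abs_pos.1 (by linarith)
  have hfloor0 : (⌊u⌋ : ℝ) ≠ 0 := abs_pos.1 (by linarith)
  rw [mul_one_div, div_le_div_iff₀ (by positivity) (by positivity)]
  nlinarith [sq_abs u, sq_abs (⌊u⌋ : ℝ), abs_nonneg (⌊u⌋ : ℝ)]

/-- The term `y = t` is the junk value `1 / 0 = 0`. -/
lemma summable_one_div_sq_sub_and_tsum_le {T : Set ℝ} {α t : ℝ} (hα : 0 < α)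
    (hT : T.Pairwise fun a b => α ≤ |a - b|) (ht : t ∈ T) :
    Summable (fun y : T => 1 / ((y : ℝ) - t) ^ 2) ∧
      ∑' y : T, 1 / ((y : ℝ) - t) ^ 2 ≤ 4 / α ^ 2 * ∑' m : ℤ, 1 / (m : ℝ) ^ 2 := by
  set idx : T → ℤ := fun y => ⌊((y : ℝ) - t) / α⌋
  have hidx : Function.Injective idx := by
    intro y₁ y₂ h
    by_contra hne
    have hsep := hT y₁.2 y₂.2 (Subtype.coe_injective.ne hne)
    have hlt := Int.abs_sub_lt_one_of_floor_eq_floor h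
    rw [← sub_div, sub_sub_sub_cancel_right, abs_div, abs_of_pos hα, div_lt_one hα] at hlt
    linarith
  set g : ℤ → ℝ := fun m => 4 / α ^ 2 * (1 / (m : ℝ) ^ 2)
  have hg : Summable g := (Real.summable_one_div_int_pow.2 one_lt_two).mul_left _
  have hle : ∀ y : T, 1 / ((y : ℝ) - t) ^ 2 ≤ g (idx y) := by
    intro y
    have hu : ((y : ℝ) - t) / α = 0 ∨ 1 ≤ |((y : ℝ) - t) / α| := by
      rcases eq_or_ne (y : ℝ) t with hyt | hyt
      · simp [hyt]
      · right
        rw [abs_div, abs_of_pos hα, one_le_div hα, abs_sub_comm]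
        exact hT ht y.2 (Ne.symm hyt)
    calc 1 / ((y : ℝ) - t) ^ 2 = 1 / α ^ 2 * (1 / (((y : ℝ) - t) / α) ^ 2) := by
          field_simp
      _ ≤ 1 / α ^ 2 * (4 * (1 / (idx y : ℝ) ^ 2)) := by
          gcongr
          exact one_div_sq_le_four_mul_one_div_floor_sq hu
      _ = g (idx y) := by ring
  have hsum : Summable (fun y : T => 1 / ((y : ℝ) - t) ^ 2) :=
    .of_nonneg_of_le (fun _ => by positivity) hle (hg.comp_injective hidx)
  refine ⟨hsum, ?_⟩
  calc ∑' y : T, 1 / ((y : ℝ) - t) ^ 2 ≤ ∑' m, g m :=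
        hsum.tsum_le_tsum_of_inj idx hidx (fun _ _ => by positivity) hle hg
    _ = 4 / α ^ 2 * ∑' m : ℤ, 1 / (m : ℝ) ^ 2 := tsum_mul_left

lemma abs_tsum_mul_sub_le_one_sub {ι : Type*} {f κ : ι → ℝ} (hf0 : ∀ i, 0 ≤ f i)
    (hf1 : HasSum f 1) (hκ0 : ∀ i, 0 ≤ κ i) (hκ1 : HasSum κ 1) (i : ι) :
    |∑' j, f j * κ j - f i| ≤ 1 - κ i := by
  classical
  have hf_le : ∀ j, f j ≤ 1 := fun j => le_hasSum hf1 j fun k _ => hf0 k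
  have hκ_le : κ i ≤ 1 := le_hasSum hκ1 i fun k _ => hκ0 k
  have hsum : Summable fun j => f j * κ j :=
    .of_nonneg_of_le (fun j => mul_nonneg (hf0 j) (hκ0 j))
      (fun j => mul_le_of_le_one_left (hκ0 j) (hf_le j)) hκ1.summable
  refine abs_sub_le_iff.2 ⟨?_, ?_⟩
  · have hdom := (hasSum_pi_single i (f i)).add (hκ1.update i 0)
    have hle : ∀ j, f j * κ j ≤ (Pi.single i (f i) : ι → ℝ) j + Function.update κ i 0 j := by
      intro j
      rcases eq_or_ne j i with rfl | hji
      · simpa using mul_le_of_le_one_right (hf0 j) hκ_le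
      · simpa [hji] using mul_le_of_le_one_left (hκ0 j) (hf_le j)
    linarith [hasSum_le hle hsum.hasSum hdom]
  · have hself : f i * κ i ≤ ∑' j, f j * κ j :=
      hsum.le_tsum i fun j _ => mul_nonneg (hf0 j) (hκ0 j)
    nlinarith [hf0 i, hf_le i]

/-- `κ y` stands for the pmf `K_{y,h}` at one fixed bandwidth `h`, with `v y` its second moment
about `m y`. -/
structure IsConcentratedKernel (T : Set ℝ) (α θ : ℝ) (κ : ℝ → ℝ → ℝ) (m v : ℝ → ℝ) : Prop where
  nonneg : ∀ y ∈ T, ∀ z, 0 ≤ κ y z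
  hasSum_one : ∀ y ∈ T, HasSum (κ y) 1
  hasSum_variance : ∀ y ∈ T, HasSum (fun z => κ y z * (z - m y) ^ 2) (v y)
  support_sep : ∀ y ∈ T, ∀ z, z ≠ y → κ y z ≠ 0 → α ≤ |z - y|
  mean_near : ∀ y ∈ T, 2 * |m y - y| ≤ α
  variance_le : ∀ y ∈ T, v y ≤ θ

namespace IsConcentratedKernel

variable {T : Set ℝ} {α θ : ℝ} {κ : ℝ → ℝ → ℝ} {m v : ℝ → ℝ}

lemma one_sub_self_le (hκ : IsConcentratedKernel T α θ κ m v) (hα : 0 < α) {t : ℝ} (ht : t ∈ T) :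
    1 - κ t t ≤ 4 * θ / α ^ 2 := by
  refine (one_sub_le_four_mul_div_sq (hκ.nonneg t ht) (hκ.hasSum_one t ht)
    (hκ.hasSum_variance t ht) hα (hκ.support_sep t ht) (hκ.mean_near t ht)).trans ?_
  gcongr
  exact hκ.variance_le t ht

lemma apply_mem_Icc (hκ : IsConcentratedKernel T α θ κ m v) {y : ℝ} (hy : y ∈ T) (z : ℝ) :
    κ y z ∈ Set.Icc (0 : ℝ) 1 :=
  ⟨hκ.nonneg y hy z, le_hasSum (hκ.hasSum_one y hy) z fun w _ => hκ.nonneg y hy w⟩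

lemma apply_le_single_add (hκ : IsConcentratedKernel T α θ κ m v)
    (hT : T.Pairwise fun a b => α ≤ |a - b|) {t : ℝ} (ht : t ∈ T) (y : T) :
    κ y t ≤ (Pi.single (⟨t, ht⟩ : T) 1 : T → ℝ) y + 4 * θ * (1 / ((y : ℝ) - t) ^ 2) := by
  rcases eq_or_ne y ⟨t, ht⟩ with rfl | hyt
  · simpa using (hκ.apply_mem_Icc ht t).2
  have hyt' : t ≠ (y : ℝ) := fun h => hyt (Subtype.ext h.symm)
  rw [Pi.single_eq_of_ne hyt, zero_add, ← neg_sub, even_two.neg_pow]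
  calc κ y t ≤ 4 * v y * (1 / (t - y) ^ 2) :=
        le_four_mul_div_sq_of_ne (hκ.nonneg y y.2) (hκ.hasSum_variance y y.2) hyt'
          ((hκ.mean_near y y.2).trans (hT ht y.2 hyt'))
    _ ≤ 4 * θ * (1 / (t - y) ^ 2) := by gcongr; exact hκ.variance_le y y.2

lemma summable_and_abs_tsum_sub_one_le (hκ : IsConcentratedKernel T α θ κ m v) (hα : 0 < α)
    (hT : T.Pairwise fun a b => α ≤ |a - b|) {t : ℝ} (ht : t ∈ T) :
    Summable (fun y : T => κ y t) ∧
      |∑' y : T, κ y t - 1| ≤ 4 * θ / α ^ 2 * (1 + 4 * ∑' m : ℤ, 1 / (m : ℝ) ^ 2) := by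
  obtain ⟨hinv, hinv_le⟩ := summable_one_div_sq_sub_and_tsum_le hα hT ht
  have hle := hκ.apply_le_single_add hT ht
  have hdom := (hasSum_pi_single (⟨t, ht⟩ : T) (1 : ℝ)).add (hinv.hasSum.mul_left (4 * θ))
  have hsum : Summable (fun y : T => κ y t) :=
    .of_nonneg_of_le (fun y => hκ.nonneg y y.2 t) hle hdom.summable
  have hθ : 0 ≤ θ := (hasSum_le (fun z => mul_nonneg (hκ.nonneg t ht z) (sq_nonneg _))
    hasSum_zero (hκ.hasSum_variance t ht)).trans (hκ.variance_le t ht)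
  have hB : 0 ≤ ∑' m : ℤ, 1 / (m : ℝ) ^ 2 := tsum_nonneg fun _ => by positivity
  have hθα : 0 ≤ 4 * θ / α ^ 2 := by positivity
  refine ⟨hsum, abs_sub_le_iff.2 (And.intro ?_ ?_)⟩
  · have hupper := hasSum_le hle hsum.hasSum hdom
    have : 4 * θ * ∑' y : T, 1 / ((y : ℝ) - t) ^ 2 ≤
        4 * θ * (4 / α ^ 2 * ∑' m : ℤ, 1 / (m : ℝ) ^ 2) := by gcongr
    have : 4 * θ * (4 / α ^ 2 * ∑' m : ℤ, 1 / (m : ℝ) ^ 2) =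
        4 * θ / α ^ 2 * (4 * ∑' m : ℤ, 1 / (m : ℝ) ^ 2) := by ring
    linarith
  · have hself : κ t t ≤ ∑' y : T, κ y t := hsum.le_tsum ⟨t, ht⟩ fun y _ => hκ.nonneg y y.2 t
    nlinarith [hκ.one_sub_self_le hα ht]

lemma abs_tsum_mul_sub_le (hκ : IsConcentratedKernel T α θ κ m v) (hα : 0 < α) {f : ℝ → ℝ}
    (hf0 : ∀ z, 0 ≤ f z) (hf1 : HasSum f 1) {x : ℝ} (hx : x ∈ T) :
    |∑' z, f z * κ x z - f x| ≤ 4 * θ / α ^ 2 * (1 + 4 * ∑' m : ℤ, 1 / (m : ℝ) ^ 2) := by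
  have hcentre := hκ.one_sub_self_le hα hx
  have hθ : 0 ≤ 4 * θ / α ^ 2 := (sub_nonneg.2 (hκ.apply_mem_Icc hx x).2).trans hcentre
  have hB : 0 ≤ ∑' m : ℤ, 1 / (m : ℝ) ^ 2 := tsum_nonneg fun _ => by positivity
  exact (abs_tsum_mul_sub_le_one_sub hf0 hf1 (hκ.nonneg x hx) (hκ.hasSum_one x hx) x).trans
    (hcentre.trans (le_mul_of_one_le_right hθ (by linarith)))

end IsConcentratedKernel

lemma abs_div_sub_le {A C a δ : ℝ} (ha0 : 0 ≤ a) (ha1 : a ≤ 1) (hA : |A - a| ≤ δ)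
    (hC : |C - 1| ≤ δ) (hδ : δ ≤ 1 / 2) : |A / C - a| ≤ 4 * δ := by
  have hC' := abs_le.1 hC
  have hCpos : 0 < C := by linarith
  have hnum : |(A - a) + a * (1 - C)| ≤ 2 * δ := by
    calc |(A - a) + a * (1 - C)| ≤ |A - a| + a * |1 - C| := by
          rw [← abs_of_nonneg ha0, ← abs_mul, abs_of_nonneg ha0]; exact abs_add_le _ _
      _ ≤ δ + 1 * δ := by rw [abs_sub_comm 1 C]; gcongr
      _ = 2 * δ := by ring
  rw [show A / C - a = ((A - a) + a * (1 - C)) / C by field_simp; ring, abs_div,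
    abs_of_pos hCpos, div_le_iff₀ hCpos]
  nlinarith

lemma abs_inv_mul_sum_sub_one_le {a : ℕ → ℝ} {n : ℕ} (hn : 0 < n) {δ : ℝ}
    (ha : ∀ i < n, |a i - 1| ≤ δ) : |(n : ℝ)⁻¹ * ∑ i ∈ Finset.range n, a i - 1| ≤ δ := by
  have hn' : (0 : ℝ) < n := by exact_mod_cast hn
  have : (n : ℝ)⁻¹ * ∑ i ∈ Finset.range n, a i - 1 =
      (n : ℝ)⁻¹ * ∑ i ∈ Finset.range n, (a i - 1) := by
    rw [Finset.sum_sub_distrib, mul_sub]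
    simp only [Finset.sum_const, Finset.card_range, nsmul_eq_mul, mul_one]
    field_simp
  rw [this, abs_mul, abs_inv, abs_of_pos hn', inv_mul_le_iff₀ hn']
  calc |∑ i ∈ Finset.range n, (a i - 1)| ≤ ∑ i ∈ Finset.range n, |a i - 1| :=
        Finset.abs_sum_le_sum_abs _ _
    _ ≤ ∑ _i ∈ Finset.range n, δ := Finset.sum_le_sum fun i hi => ha i (Finset.mem_range.1 hi)
    _ = n * δ := by simp

section Sampling

variable {Ω : Type*} [MeasurableSpace Ω] {P : Measure Ω} [IsProbabilityMeasure P]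
  {T : Set ℝ} {f : ℝ → ℝ} {X : Ω → ℝ}

lemma measure_preimage_compl_eq_zero (hTc : T.Countable) (hf0 : ∀ z, 0 ≤ f z)
    (hfT : ∀ z ∉ T, f z = 0) (hf1 : HasSum f 1) (hXm : Measurable X)
    (hXd : ∀ z, P (X ⁻¹' {z}) = ENNReal.ofReal (f z)) : P (X ⁻¹' Tᶜ) = 0 := by
  have := hTc.to_subtype
  have hT : P (X ⁻¹' T) = 1 := by
    rw [← Set.biUnion_of_singleton T, Set.preimage_iUnion₂, measure_biUnion hTc
      (fun a _ b _ hab => Disjoint.preimage X (Set.disjoint_singleton.2 hab))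
      (fun z _ => hXm (measurableSet_singleton z))]
    simp_rw [hXd]
    rw [← ENNReal.ofReal_tsum_of_nonneg (fun _ => hf0 _) (hf1.summable.subtype _),
      tsum_subtype_eq_of_support_subset fun z hz => by_contra fun hzT => hz (hfT z hzT),
      hf1.tsum_eq, ENNReal.ofReal_one]
  rw [Set.preimage_compl, measure_compl (hXm hTc.measurableSet) (measure_ne_top _ _), hT]
  simp

lemma integral_comp_eq_tsum (hTc : T.Countable) (hf0 : ∀ z, 0 ≤ f z)
    (hfT : ∀ z ∉ T, f z = 0) (hf1 : HasSum f 1) (hXm : Measurable X)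
    (hXd : ∀ z, P (X ⁻¹' {z}) = ENNReal.ofReal (f z)) {φ : ℝ → ℝ} (hφm : Measurable φ)
    (hφ : ∀ z, φ z ∈ Set.Icc (0 : ℝ) 1) :
    ∫ ω, φ (X ω) ∂P = ∑' z, f z * φ z := by
  have : IsProbabilityMeasure (P.map X) := Measure.isProbabilityMeasure_map hXm.aemeasurable
  have hint : Integrable φ (P.map X) :=
    (memLp_of_bounded (ae_of_all _ hφ) hφm.aestronglyMeasurable 1).integrable le_rfl
  have hae : ∀ᵐ z ∂P.map X, z ∈ T := by
    change P.map X Tᶜ = 0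
    rw [Measure.map_apply hXm hTc.measurableSet.compl]
    exact measure_preimage_compl_eq_zero hTc hf0 hfT hf1 hXm hXd
  rw [← integral_map hXm.aemeasurable hφm.aestronglyMeasurable,
    ← Measure.restrict_eq_self_of_ae_mem hae, setIntegral_countable φ hTc hint.integrableOn,
    ← tsum_subtype_eq_of_support_subset (s := T) fun z hz =>
      by_contra fun hzT => hz (by simp [hfT z hzT])]
  congr 1 with t
  rw [measureReal_def, Measure.map_apply hXm (measurableSet_singleton _), hXd,
    ENNReal.toReal_ofReal (hf0 _), smul_eq_mul]

end Sampling

lemma measure_abs_sampleMean_sub_ge_le {Ω : Type*} [MeasurableSpace Ω] {P : Measure Ω}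
    [IsProbabilityMeasure P] {Y : ℕ → Ω → ℝ} (hYm : ∀ i, Measurable (Y i))
    (hind : Pairwise fun i j => IndepFun (Y i) (Y j) P) (hY : ∀ i ω, Y i ω ∈ Set.Icc (0 : ℝ) 1)
    {n : ℕ} (hn : 0 < n) {δ : ℝ} (hδ : 0 < δ) :
    P {ω | δ ≤ |(n : ℝ)⁻¹ * ∑ i ∈ Finset.range n, Y i ω -
        (n : ℝ)⁻¹ * ∑ i ∈ Finset.range n, ∫ ω', Y i ω' ∂P|} ≤
      ENNReal.ofReal (1 / (4 * n * δ ^ 2)) := by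
  have hn' : (0 : ℝ) < n := by exact_mod_cast hn
  have hYL2 : ∀ i, MemLp (Y i) 2 P := fun i =>
    memLp_of_bounded (ae_of_all _ (hY i)) (hYm i).aestronglyMeasurable 2
  set S := ∑ i ∈ Finset.range n, Y i
  have hS : ∀ ω, S ω = ∑ i ∈ Finset.range n, Y i ω := fun ω => Finset.sum_apply ω _ _
  have hES : ∫ ω, S ω ∂P = ∑ i ∈ Finset.range n, ∫ ω, Y i ω ∂P := by
    simp_rw [hS]
    exact integral_finsetSum _ fun i _ => (hYL2 i).integrable one_le_two
  have hvar : variance S P ≤ n / 4 := by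
    rw [IndepFun.variance_sum (fun i _ => hYL2 i) fun i _ j _ hij => hind hij]
    calc ∑ i ∈ Finset.range n, variance (Y i) P ≤ ∑ _i ∈ Finset.range n, ((1 - 0) / 2) ^ 2 :=
          Finset.sum_le_sum fun i _ =>
            variance_le_sq_of_bounded (ae_of_all _ (hY i)) (hYm i).aemeasurable
      _ = n / 4 := by simp only [Finset.sum_const, Finset.card_range, nsmul_eq_mul]; ring
  have hset : {ω | δ ≤ |(n : ℝ)⁻¹ * ∑ i ∈ Finset.range n, Y i ω -
      (n : ℝ)⁻¹ * ∑ i ∈ Finset.range n, ∫ ω', Y i ω' ∂P|} =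
      {ω | n * δ ≤ |S ω - ∫ ω', S ω' ∂P|} := by
    ext ω
    rw [Set.mem_ofPred_eq, Set.mem_ofPred_eq, hS, hES, ← mul_sub, abs_mul, abs_inv,
      abs_of_pos hn', le_inv_mul_iff₀ hn']
  rw [hset]
  refine (meas_ge_le_variance_div_sq (memLp_finsetSum' _ fun i _ => hYL2 i)
    (by positivity)).trans (ENNReal.ofReal_le_ofReal ?_)
  calc variance S P / (n * δ) ^ 2 ≤ (n / 4) / (n * δ) ^ 2 := by gcongr
    _ = 1 / (4 * n * δ ^ 2) := by field_simp

lemma abs_estimator_sub_le {T : Set ℝ} {κ : ℝ → ℝ → ℝ} {a : ℕ → ℝ} {n : ℕ} (hn : 0 < n)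
    (ha : ∀ i, a i ∈ T) {x p μ δ : ℝ} (hp0 : 0 ≤ p) (hp1 : p ≤ 1) (hδ : δ ≤ 1 / 2)
    (hmass : ∀ t ∈ T, Summable (fun y : T => κ y t) ∧ |∑' y : T, κ y t - 1| ≤ δ)
    (hμ : |μ - p| ≤ δ / 2) (hA : |(n : ℝ)⁻¹ * ∑ i ∈ Finset.range n, κ x (a i) - μ| < δ / 2) :
    |((n : ℝ)⁻¹ * ∑ i ∈ Finset.range n, κ x (a i)) /
      (∑' y : T, (n : ℝ)⁻¹ * ∑ i ∈ Finset.range n, κ y (a i)) - p| ≤ 4 * δ := by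
  rw [tsum_mul_left, Summable.tsum_finsetSum fun i _ => (hmass _ (ha i)).1]
  refine abs_div_sub_le hp0 hp1 ?_
    (abs_inv_mul_sum_sub_one_le hn fun i _ => (hmass _ (ha i)).2) hδ
  calc _ ≤ |(n : ℝ)⁻¹ * ∑ i ∈ Finset.range n, κ x (a i) - μ| + |μ - p| := abs_sub_le _ _ _
    _ ≤ δ := by linarith

lemma measure_dist_estimator_ge_le {Ω : Type*} [MeasurableSpace Ω] {P : Measure Ω}
    [IsProbabilityMeasure P] {T : Set ℝ} (hTc : T.Countable) {f : ℝ → ℝ} (hf0 : ∀ z, 0 ≤ f z)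
    (hfT : ∀ z ∉ T, f z = 0) (hf1 : HasSum f 1) {X : ℕ → Ω → ℝ} (hXm : ∀ i, Measurable (X i))
    (hXind : iIndepFun X P) (hXd : ∀ i z, P (X i ⁻¹' {z}) = ENNReal.ofReal (f z))
    {α θ : ℝ} {κ : ℝ → ℝ → ℝ} {m v : ℝ → ℝ} (hκ : IsConcentratedKernel T α θ κ m v) (hα : 0 < α)
    (hT : T.Pairwise fun a b => α ≤ |a - b|) {x : ℝ} (hx : x ∈ T) (hκm : Measurable (κ x))
    {δ ε : ℝ} (hδ : 0 < δ) (hδ1 : δ ≤ 1 / 2) (hδε : 4 * δ < ε)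
    (hθ : 4 * θ / α ^ 2 * (1 + 4 * ∑' m : ℤ, 1 / (m : ℝ) ^ 2) ≤ δ / 2) {n : ℕ} (hn : 0 < n) :
    P {ω | ε ≤ dist (((n : ℝ)⁻¹ * ∑ i ∈ Finset.range n, κ x (X i ω)) /
      (∑' y : T, (n : ℝ)⁻¹ * ∑ i ∈ Finset.range n, κ y (X i ω))) (f x)} ≤
      ENNReal.ofReal (1 / (n * δ ^ 2)) := by
  set μ := ∑' z, f z * κ x z
  have hmass : ∀ t ∈ T, Summable (fun y : T => κ y t) ∧ |∑' y : T, κ y t - 1| ≤ δ := fun t ht =>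
    (hκ.summable_and_abs_tsum_sub_one_le hα hT ht).imp_right fun h => by linarith
  have hμ : |μ - f x| ≤ δ / 2 := (hκ.abs_tsum_mul_sub_le hα hf0 hf1 hx).trans hθ
  have hbad : P (⋃ i, X i ⁻¹' Tᶜ) = 0 := measure_iUnion_null fun i =>
    measure_preimage_compl_eq_zero hTc hf0 hfT hf1 (hXm i) (hXd i)
  have hE : ∀ i, ∫ ω, κ x (X i ω) ∂P = μ := fun i =>
    integral_comp_eq_tsum hTc hf0 hfT hf1 (hXm i) (hXd i) hκm (hκ.apply_mem_Icc hx)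
  have hcheb := measure_abs_sampleMean_sub_ge_le (P := P) (Y := fun i ω => κ x (X i ω))
    (fun i => hκm.comp (hXm i)) (fun i j hij => (hXind.indepFun hij).comp hκm hκm)
    (fun i ω => hκ.apply_mem_Icc hx _) hn (half_pos hδ)
  have hn' : (n : ℝ) ≠ 0 := by exact_mod_cast hn.ne'
  simp only [hE, Finset.sum_const, Finset.card_range, nsmul_eq_mul, inv_mul_cancel_left₀ hn']
    at hcheb
  have hincl : {ω | ε ≤ dist (((n : ℝ)⁻¹ * ∑ i ∈ Finset.range n, κ x (X i ω)) /
      (∑' y : T, (n : ℝ)⁻¹ * ∑ i ∈ Finset.range n, κ y (X i ω))) (f x)} ⊆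
      (⋃ i, X i ⁻¹' Tᶜ) ∪
        {ω | δ / 2 ≤ |(n : ℝ)⁻¹ * ∑ i ∈ Finset.range n, κ x (X i ω) - μ|} := by
    intro ω hω
    by_contra hout
    simp only [Set.mem_union, Set.mem_iUnion, Set.mem_preimage, Set.mem_compl_iff, not_or,
      not_exists, not_not, Set.mem_ofPred_eq, not_le] at hout
    have := abs_estimator_sub_le hn hout.1 (hf0 x) (le_hasSum hf1 x fun z _ => hf0 z) hδ1 hmass
      hμ hout.2
    rw [Set.mem_ofPred_eq, Real.dist_eq] at hω
    linarith
  calc _ ≤ P ((⋃ i, X i ⁻¹' Tᶜ) ∪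
        {ω | δ / 2 ≤ |(n : ℝ)⁻¹ * ∑ i ∈ Finset.range n, κ x (X i ω) - μ|}) := measure_mono hincl
    _ ≤ _ := measure_union_le _ _
    _ ≤ ENNReal.ofReal (1 / (4 * n * (δ / 2) ^ 2)) := by rw [hbad, zero_add]; exact hcheb
    _ = ENNReal.ofReal (1 / (n * δ ^ 2)) := by congr 1; ring

theorem normalized_estimator_consistency_general
    {Ω : Type*} [MeasurableSpace Ω] (P : Measure Ω) [IsProbabilityMeasure P]
    (T : Set ℝ) (hTc : T.Countable)
    (f : ℝ → ℝ) (hf0 : ∀ x, 0 ≤ f x) (hfT : ∀ x ∉ T, f x = 0) (hf1 : HasSum f 1)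
    (S : ℝ → Set ℝ)
    (K : ℝ → ℝ → ℝ → ℝ)
    (hK0 : ∀ x ∈ T, ∀ h > (0:ℝ), ∀ z, 0 ≤ K x h z)
    (hKS : ∀ x ∈ T, ∀ h > (0:ℝ), ∀ z ∉ S x, K x h z = 0)
    (hK1 : ∀ x ∈ T, ∀ h > (0:ℝ), HasSum (K x h) 1)
    (hKm : ∀ x h, Measurable (K x h))
    (α : ℝ) (hα : 0 < α)
    (hsep : ∀ x ∈ T, ∀ z ∈ (T ∪ S x) \ {x}, α ≤ |z - x|)
    (H : ℕ → ℝ) (hH : ∀ n, 0 < H n)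
    (X : ℕ → Ω → ℝ) (hXm : ∀ i, Measurable (X i))
    (hXind : iIndepFun X P)
    (hXd : ∀ i, ∀ x : ℝ, P (X i ⁻¹' {x}) = ENNReal.ofReal (f x))
    (EZ VZ : ℝ → ℝ → ℝ)
    (hVZ : ∀ x ∈ T, ∀ h > (0:ℝ), HasSum (fun z : ℝ => K x h z * (z - EZ x h) ^ 2) (VZ x h))
    (hA1E : ∀ ε > (0:ℝ), ∃ N : ℕ, ∀ n ≥ N, ∀ x ∈ T, |EZ x (H n) - x| ≤ ε)
    (hA1V : ∀ ε > (0:ℝ), ∃ N : ℕ, ∀ n ≥ N, ∀ x ∈ T, VZ x (H n) ≤ ε)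
    (x : ℝ) (hx : x ∈ T) :
    TendstoInMeasure P
      (fun (n : ℕ) (ω : Ω) =>
        ((n:ℝ)⁻¹ * ∑ i ∈ Finset.range n, K x (H n) (X i ω)) / (∑' y : T, (n:ℝ)⁻¹ * ∑ i ∈ Finset.range n, K (y:ℝ) (H n) (X i ω)))
      atTop (fun _ => f x) := by
  have hTsep : T.Pairwise fun a b => α ≤ |a - b| := fun a ha b hb hab =>
    hsep b hb a ⟨Or.inl ha, hab⟩
  rw [tendstoInMeasure_iff_dist]
  intro ε hε
  set δ := min (ε / 8) (1 / 2)
  have hδ : 0 < δ := by positivity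
  obtain ⟨θ, hθ, hcθ⟩ :=
    exists_pos_mul_lt (half_pos hδ) (4 / α ^ 2 * (1 + 4 * ∑' m : ℤ, 1 / (m : ℝ) ^ 2))
  obtain ⟨N₁, hN₁⟩ := hA1E (α / 2) (half_pos hα)
  obtain ⟨N₂, hN₂⟩ := hA1V θ hθ
  have hconc : ∀ n ≥ max N₁ N₂, IsConcentratedKernel T α θ (fun y => K y (H n))
      (fun y => EZ y (H n)) (fun y => VZ y (H n)) := fun n hn =>
    { nonneg := fun y hy => hK0 y hy _ (hH n)
      hasSum_one := fun y hy => hK1 y hy _ (hH n)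
      hasSum_variance := fun y hy => hVZ y hy _ (hH n)
      support_sep := fun y hy z hzy hKz =>
        hsep y hy z ⟨Or.inr (not_not.1 (mt (hKS y hy _ (hH n) z) hKz)), hzy⟩
      mean_near := fun y hy => by linarith [hN₁ n (le_of_max_le_left hn) y hy]
      variance_le := fun y hy => hN₂ n (le_of_max_le_right hn) y hy }
  have hbound : Tendsto (fun n : ℕ => ENNReal.ofReal (1 / (n * δ ^ 2))) atTop (𝓝 0) := by
    simpa only [ENNReal.ofReal_zero] using ENNReal.tendsto_ofReal (tendsto_const_nhds.div_atTop
      (tendsto_natCast_atTop_atTop.atTop_mul_const (by positivity)))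
  refine tendsto_of_tendsto_of_tendsto_of_le_of_le' tendsto_const_nhds hbound
    (.of_forall fun _ => zero_le) ?_
  filter_upwards [eventually_ge_atTop (max (max N₁ N₂) 1)] with n hn
  exact measure_dist_estimator_ge_le hTc hf0 hfT hf1 hXm hXind hXd (hconc n (le_of_max_le_left hn))
    hα hTsep hx (hKm x _) hδ (min_le_right _ _) (by linarith [min_le_left (ε / 8) (1 / 2)])
    ((le_of_eq (by ring)).trans hcθ.le) (by omega)

theorem normalized_estimator_consistency
    {Ω : Type*} [MeasurableSpace Ω] (P : Measure Ω) [IsProbabilityMeasure P]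
    (T : Set ℝ) (hTc : T.Countable)
    (f : ℝ → ℝ) (hf0 : ∀ x, 0 ≤ f x) (hfT : ∀ x ∉ T, f x = 0) (hf1 : HasSum f 1)
    (S : ℝ → Set ℝ) (hSc : ∀ x ∈ T, (S x).Countable)
    (K : ℝ → ℝ → ℝ → ℝ)
    (hK0 : ∀ x ∈ T, ∀ h > (0:ℝ), ∀ z, 0 ≤ K x h z)
    (hKS : ∀ x ∈ T, ∀ h > (0:ℝ), ∀ z ∉ S x, K x h z = 0)
    (hK1 : ∀ x ∈ T, ∀ h > (0:ℝ), HasSum (K x h) 1)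
    (hKm : ∀ x h, Measurable (K x h))
    (hxS : ∀ x ∈ T, x ∈ S x)
    (α : ℝ) (hα : 0 < α)
    (hsep : ∀ x ∈ T, ∀ z ∈ (T ∪ S x) \ {x}, α ≤ |z - x|)
    (H : ℕ → ℝ) (hH : ∀ n, 0 < H n) (hH0 : Tendsto H atTop (𝓝 0))
    (X : ℕ → Ω → ℝ) (hXm : ∀ i, Measurable (X i))
    (hXind : iIndepFun X P)
    (hXd : ∀ i, ∀ x : ℝ, P (X i ⁻¹' {x}) = ENNReal.ofReal (f x))
    (EZ VZ : ℝ → ℝ → ℝ)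
    (hEZ : ∀ x ∈ T, ∀ h > (0:ℝ), HasSum (fun z : ℝ => K x h z * z) (EZ x h))
    (hVZ : ∀ x ∈ T, ∀ h > (0:ℝ), HasSum (fun z : ℝ => K x h z * (z - EZ x h) ^ 2) (VZ x h))
    (hA1E : ∀ ε > (0:ℝ), ∃ N : ℕ, ∀ n ≥ N, ∀ x ∈ T, |EZ x (H n) - x| ≤ ε)
    (hA1V : ∀ ε > (0:ℝ), ∃ N : ℕ, ∀ n ≥ N, ∀ x ∈ T, VZ x (H n) ≤ ε)
    (x : ℝ) (hx : x ∈ T) :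
    TendstoInMeasure P
      (fun (n : ℕ) (ω : Ω) =>
        ((n:ℝ)⁻¹ * ∑ i ∈ Finset.range n, K x (H n) (X i ω)) / (∑' y : T, (n:ℝ)⁻¹ * ∑ i ∈ Finset.range n, K (y:ℝ) (H n) (X i ω)))
      atTop (fun _ => f x) :=
  normalized_estimator_consistency_general P T hTc f hf0 hfT hf1 S K hK0 hKS hK1 hKm α hα hsep H hH
    X hXm hXind hXd EZ VZ hVZ hA1E hA1V x hx
end

section
/- Suppose T is finite and that for every x ∈ T one has E(Z_{x,h}) → x and Var(Z_{x,h}) → 0 as h → 0. Then sup_{x∈T} |f̂_n(x) − f(x)| converges in probability to 0 as n → ∞. -/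
open MeasureTheory ProbabilityTheory Filter Topology

/-!
Fix x ∈ T. Chebyshev's inequality for the discrete law K_{x,h}, centred at E Z_{x,h} (which is
eventually within α/2 of x, so every other atom is at distance ≥ α/2 from it), gives
1 - K_{x,h}(x) ≤ 4 Var Z_{x,h} / α², hence K_{x,h}(x) → 1. Consequently
E f̃_n(x) = ∑_t f(t) K_{x,h_n}(t) → f(x). Chebyshev's inequality for the average of the
independent [0,1]-valued variables K_{x,h_n}(X_i) bounds P(|f̃_n(x) - E f̃_n(x)| ≥ ε) by
1/(4nε²) whatever the kernel, so f̃_n(x) → f(x) in probability although the summands change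
with n. Hence the finite vector (f̃_n(x))_{x∈T} tends to f in probability, and the claim follows
by composing with v ↦ sup_x |v(x) / ∑ v - f(x)|, which is continuous at v = f since ∑_T f = 1.
-/

lemma one_sub_mul_sq_le_of_hasSum {k : ℝ → ℝ} {x e r v : ℝ} (hk0 : ∀ z, 0 ≤ k z)
    (hk1 : HasSum k 1) (hv : HasSum (fun z => k z * (z - e) ^ 2) v) (hr0 : 0 ≤ r)
    (hr : ∀ z ≠ x, k z ≠ 0 → r ≤ |z - e|) :
    (1 - k x) * r ^ 2 ≤ v := by
  classical
  have hrest : HasSum (fun z => Function.update k x 0 z * r ^ 2) ((1 - k x) * r ^ 2) := by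
    simpa [sub_eq_neg_add] using (hk1.update x 0).mul_right (r ^ 2)
  refine hasSum_le (fun z => ?_) hrest hv
  rcases eq_or_ne z x with rfl | hzx
  · simpa using mul_nonneg (hk0 z) (sq_nonneg (z - e))
  rw [Function.update_of_ne hzx]
  rcases eq_or_ne (k z) 0 with hkz | hkz
  · simp [hkz]
  rw [← sq_abs (z - e)]
  exact mul_le_mul_of_nonneg_left (pow_le_pow_left₀ hr0 (hr z hzx hkz) 2) (hk0 z)

lemma tendsto_apply_self_of_variance_tendsto_zero {β : Type*} {l : Filter β} {k : β → ℝ → ℝ}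
    {x α : ℝ} {e v : β → ℝ} (hα : 0 < α) (hk0 : ∀ h z, 0 ≤ k h z) (hk1 : ∀ h, HasSum (k h) 1)
    (hsep : ∀ h, ∀ z ≠ x, k h z ≠ 0 → α ≤ |z - x|)
    (hv : ∀ h, HasSum (fun z => k h z * (z - e h) ^ 2) (v h))
    (he : Tendsto e l (𝓝 x)) (hv0 : Tendsto v l (𝓝 0)) :
    Tendsto (fun h => k h x) l (𝓝 1) := by
  have hlower : ∀ᶠ h in l, 1 - v h / (α / 2) ^ 2 ≤ k h x := by
    filter_upwards [he.eventually (Metric.ball_mem_nhds x (half_pos hα))] with h hh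
    rw [Real.dist_eq] at hh
    have hr : ∀ z ≠ x, k h z ≠ 0 → α / 2 ≤ |z - e h| := fun z hzx hkz => by
      have := abs_sub_abs_le_abs_sub (z - x) (e h - x)
      rw [sub_sub_sub_cancel_right] at this
      linarith [hsep h z hzx hkz]
    have := one_sub_mul_sq_le_of_hasSum (hk0 h) (hk1 h) (hv h) (half_pos hα).le hr
    rw [sub_le_comm, le_div_iff₀ (by positivity)]
    exact this
  have hupper : ∀ h, k h x ≤ 1 := fun h => le_hasSum (hk1 h) x fun z _ => hk0 h z
  refine tendsto_of_tendsto_of_tendsto_of_le_of_le' ?_ tendsto_const_nhds hlower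
    (Eventually.of_forall hupper)
  simpa using (hv0.div_const ((α / 2) ^ 2)).const_sub 1

lemma tendsto_sum_mul_of_tendsto_apply_self {α β : Type*} {l : Filter β} {k : β → α → ℝ}
    {p : α → ℝ} {s : Finset α} {x : α} (hx : x ∈ s) (hp0 : ∀ t ∈ s, 0 ≤ p t)
    (hp1 : ∀ t ∈ s, p t ≤ 1) (hk0 : ∀ h t, 0 ≤ k h t) (hk1 : ∀ h, HasSum (k h) 1)
    (hkx : Tendsto (fun h => k h x) l (𝓝 1)) :
    Tendsto (fun h => ∑ t ∈ s, p t * k h t) l (𝓝 (p x)) := by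
  classical
  have hsplit : ∀ h, ∑ t ∈ s, p t * k h t = p x * k h x + ∑ t ∈ s.erase x, p t * k h t :=
    fun h => (Finset.add_sum_erase s _ hx).symm
  have hrest : ∀ h, ∑ t ∈ s.erase x, p t * k h t ≤ 1 - k h x := fun h => by
    have hks : k h x + ∑ t ∈ s.erase x, k h t ≤ 1 := by
      rw [Finset.add_sum_erase s _ hx]
      exact sum_le_hasSum s (fun t _ => hk0 h t) (hk1 h)
    have : ∑ t ∈ s.erase x, p t * k h t ≤ ∑ t ∈ s.erase x, k h t :=
      Finset.sum_le_sum fun t ht =>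
        mul_le_of_le_one_left (hk0 h t) (hp1 t (Finset.mem_of_mem_erase ht))
    linarith
  have hlow : Tendsto (fun h => p x * k h x) l (𝓝 (p x)) := by
    simpa using hkx.const_mul (p x)
  have hupp : Tendsto (fun h => p x * k h x + (1 - k h x)) l (𝓝 (p x)) := by
    simpa using hlow.add (hkx.const_sub 1)
  refine tendsto_of_tendsto_of_tendsto_of_le_of_le hlow hupp (fun h => ?_) (fun h => ?_)
  · rw [hsplit]
    exact le_add_of_nonneg_right
      (Finset.sum_nonneg fun t ht => mul_nonneg (hp0 t (Finset.mem_of_mem_erase ht)) (hk0 h t))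
  · linarith [hsplit h, hrest h]

section WeakLaw

variable {Ω : Type*} [MeasurableSpace Ω] {P : Measure Ω} [IsProbabilityMeasure P]

lemma integral_comp_eq_sum_measureReal_preimage {α : Type*} [MeasurableSpace α]
    [MeasurableSingletonClass α] {Y : Ω → α} (hY : Measurable Y) {s : Finset α}
    (hs : ∑ t ∈ s, P.real (Y ⁻¹' {t}) = 1) {φ : α → ℝ} (hφ : Measurable φ) :
    ∫ ω, φ (Y ω) ∂P = ∑ t ∈ s, P.real (Y ⁻¹' {t}) * φ t := by
  have := Measure.isProbabilityMeasure_map (μ := P) hY.aemeasurable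
  have hsing : ∀ t, (P.map Y).real {t} = P.real (Y ⁻¹' {t}) := fun t =>
    map_measureReal_apply hY (measurableSet_singleton t)
  have hae : ∀ᵐ y ∂P.map Y, y ∈ (s : Set α) := by
    rw [ae_iff, ← Set.compl_def, prob_compl_eq_zero_iff s.measurableSet, ← ofReal_measureReal,
      ← sum_measureReal_singleton]
    simp [hsing, hs]
  have hint : IntegrableOn φ s (P.map Y) := by
    rw [← Set.biUnion_of_singleton (s : Set α), Finset.set_biUnion_coe, integrableOn_finset_iUnion]
    exact fun t _ => integrableOn_singleton
  rw [← integral_map hY.aemeasurable hφ.aestronglyMeasurable,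
    ← Measure.restrict_eq_self_of_ae_mem hae, setIntegral_finset s hint]
  simp [hsing]

lemma measure_le_abs_average_sub_le {W : ℕ → Ω → ℝ} {a b m : ℝ}
    (hWm : ∀ i, AEMeasurable (W i) P) (hind : Pairwise fun i j => IndepFun (W i) (W j) P)
    (hW : ∀ i, ∀ᵐ ω ∂P, W i ω ∈ Set.Icc a b) (hmean : ∀ i, P[W i] = m)
    {n : ℕ} (hn : 0 < n) {ε : ℝ} (hε : 0 < ε) :
    P {ω | ε ≤ |(n : ℝ)⁻¹ * ∑ i ∈ Finset.range n, W i ω - m|}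
      ≤ ENNReal.ofReal (((b - a) / 2) ^ 2 / (n * ε ^ 2)) := by
  have hL2 : ∀ i, MemLp (W i) 2 P := fun i =>
    memLp_of_bounded (hW i) (hWm i).aestronglyMeasurable 2
  set A : Ω → ℝ := (n : ℝ)⁻¹ • ∑ i ∈ Finset.range n, W i with hA
  have hAL2 : MemLp A 2 P := (memLp_finsetSum' _ fun i _ => hL2 i).const_smul _
  have hAmean : P[A] = m := by
    simp only [hA, Pi.smul_apply, Finset.sum_apply, smul_eq_mul, integral_const_mul]
    rw [integral_finsetSum _ fun i _ => (hL2 i).integrable one_le_two]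
    simp only [hmean, Finset.sum_const, Finset.card_range, nsmul_eq_mul]
    field_simp
  have hAvar : variance A P ≤ ((b - a) / 2) ^ 2 / n := by
    rw [hA, variance_smul, IndepFun.variance_sum (fun i _ => hL2 i) fun i _ j _ hij => hind hij]
    calc ((n : ℝ)⁻¹) ^ 2 * ∑ i ∈ Finset.range n, variance (W i) P
        ≤ ((n : ℝ)⁻¹) ^ 2 * ∑ _i ∈ Finset.range n, ((b - a) / 2) ^ 2 := by
          gcongr with i
          exact variance_le_sq_of_bounded (hW i) (hWm i)
      _ = ((b - a) / 2) ^ 2 / n := by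
          simp only [inv_pow, Finset.sum_const, Finset.card_range, nsmul_eq_mul]
          field_simp
  calc P {ω | ε ≤ |(n : ℝ)⁻¹ * ∑ i ∈ Finset.range n, W i ω - m|}
      = P {ω | ε ≤ |A ω - P[A]|} := by rw [hAmean]; simp [hA]
    _ ≤ ENNReal.ofReal (variance A P / ε ^ 2) := meas_ge_le_variance_div_sq hAL2 hε
    _ ≤ ENNReal.ofReal (((b - a) / 2) ^ 2 / (n * ε ^ 2)) := by
      rw [← div_div]
      gcongr

lemma tendstoInMeasure_average_comp_sub_sum {α : Type*} [MeasurableSpace α]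
    [MeasurableSingletonClass α] {X : ℕ → Ω → α} (hXm : ∀ i, Measurable (X i))
    (hind : iIndepFun X P) {s : Finset α} {p : α → ℝ}
    (hlaw : ∀ i, ∀ t ∈ s, P.real (X i ⁻¹' {t}) = p t) (hp : ∑ t ∈ s, p t = 1)
    {φ : ℕ → α → ℝ} {a b : ℝ} (hφm : ∀ n, Measurable (φ n)) (hφ : ∀ n z, φ n z ∈ Set.Icc a b) :
    TendstoInMeasure P
      (fun (n : ℕ) ω => (n : ℝ)⁻¹ * ∑ i ∈ Finset.range n, φ n (X i ω) - ∑ t ∈ s, p t * φ n t)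
      atTop (fun _ => 0) := by
  rw [tendstoInMeasure_iff_dist]
  intro ε hε
  have hmean : ∀ n i, P[fun ω => φ n (X i ω)] = ∑ t ∈ s, p t * φ n t := fun n i => by
    rw [integral_comp_eq_sum_measureReal_preimage (hXm i) _ (hφm n)]
    · exact Finset.sum_congr rfl fun t ht => by rw [hlaw i t ht]
    · rw [Finset.sum_congr rfl (hlaw i), hp]
  have hbound : ∀ᶠ n : ℕ in atTop, P {ω | ε ≤ dist ((n : ℝ)⁻¹ * ∑ i ∈ Finset.range n, φ n (X i ω)
      - ∑ t ∈ s, p t * φ n t) 0} ≤ ENNReal.ofReal (((b - a) / 2) ^ 2 / (n * ε ^ 2)) := by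
    filter_upwards [eventually_gt_atTop 0] with n hn
    simp only [Real.dist_eq, sub_zero]
    exact measure_le_abs_average_sub_le (fun i => ((hφm n).comp (hXm i)).aemeasurable)
      (fun i j hij => (hind.comp _ fun _ => hφm n).indepFun hij)
      (fun i => ae_of_all _ fun ω => hφ n (X i ω)) (hmean n) hn hε
  have hlim :
      Tendsto (fun n : ℕ => ENNReal.ofReal (((b - a) / 2) ^ 2 / (n * ε ^ 2))) atTop (𝓝 0) := by
    rw [← ENNReal.ofReal_zero]
    refine ENNReal.tendsto_ofReal ?_
    convert tendsto_const_div_atTop_nhds_zero_nat (((b - a) / 2) ^ 2 / ε ^ 2) using 2 with n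
    ring
  exact tendsto_of_tendsto_of_tendsto_of_le_of_le' tendsto_const_nhds hlim
    (Eventually.of_forall fun _ => zero_le) hbound

end WeakLaw

section ConvergenceInMeasure

variable {Ω ι : Type*} [MeasurableSpace Ω] {μ : Measure Ω} {l : Filter ι}

lemma tendstoInMeasure_const_of_sub {Y : ι → Ω → ℝ} {m : ι → ℝ} {c : ℝ}
    (hY : TendstoInMeasure μ (fun i ω => Y i ω - m i) l (fun _ => 0)) (hm : Tendsto m l (𝓝 c)) :
    TendstoInMeasure μ Y l (fun _ => c) := by
  rw [tendstoInMeasure_iff_dist] at hY ⊢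
  intro ε hε
  have hsub : ∀ᶠ i in l, {ω | ε ≤ dist (Y i ω) c} ⊆ {ω | ε / 2 ≤ dist (Y i ω - m i) 0} := by
    filter_upwards [hm.eventually (Metric.ball_mem_nhds c (half_pos hε))] with i hi ω hω
    simp only [Set.mem_ofPred_eq, Real.dist_eq, sub_zero] at hi hω ⊢
    linarith [abs_sub_le (Y i ω) (m i) c]
  exact tendsto_of_tendsto_of_tendsto_of_le_of_le' tendsto_const_nhds (hY _ (half_pos hε))
    (Eventually.of_forall fun _ => zero_le) (hsub.mono fun _ h => measure_mono h)

lemma tendstoInMeasure_pi {κ : Type*} [Fintype κ] {E : κ → Type*}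
    [∀ k, PseudoMetricSpace (E k)] {Y : ι → Ω → ∀ k, E k} {g : Ω → ∀ k, E k}
    (hY : ∀ k, TendstoInMeasure μ (fun i ω => Y i ω k) l (fun ω => g ω k)) :
    TendstoInMeasure μ Y l g := by
  simp only [tendstoInMeasure_iff_dist] at hY ⊢
  intro ε hε
  have hsub : ∀ i, {ω | ε ≤ dist (Y i ω) (g ω)} ⊆ ⋃ k, {ω | ε ≤ dist (Y i ω k) (g ω k)} := by
    intro i ω hω
    by_contra hnot
    simp only [Set.mem_iUnion, Set.mem_ofPred_eq, not_exists, not_le] at hω hnot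
    exact hω.not_gt ((dist_pi_lt_iff hε).mpr hnot)
  have hlim := tendsto_finsetSum Finset.univ fun k _ => hY k ε hε
  rw [Finset.sum_const_zero] at hlim
  exact tendsto_of_tendsto_of_tendsto_of_le_of_le tendsto_const_nhds hlim
    (fun _ => zero_le) fun i => (measure_mono (hsub i)).trans (measure_iUnion_fintype_le _ _)

lemma TendstoInMeasure.comp_of_tendsto {X Z : Type*} [PseudoMetricSpace X] [PseudoMetricSpace Z]
    {Y : ι → Ω → X} {c : X} {F : X → Z} {d : Z}
    (hY : TendstoInMeasure μ Y l (fun _ => c)) (hF : Tendsto F (𝓝 c) (𝓝 d)) :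
    TendstoInMeasure μ (fun i ω => F (Y i ω)) l (fun _ => d) := by
  rw [tendstoInMeasure_iff_dist] at hY ⊢
  intro ε hε
  obtain ⟨δ, hδ, hFδ⟩ := Metric.tendsto_nhds_nhds.mp hF ε hε
  have hsub : ∀ i, {ω | ε ≤ dist (F (Y i ω)) d} ⊆ {ω | δ ≤ dist (Y i ω) c} := by
    intro i ω hω
    by_contra hnot
    exact (not_le.mpr (hFδ (not_le.mp hnot))) hω
  exact tendsto_of_tendsto_of_tendsto_of_le_of_le tendsto_const_nhds (hY δ hδ)
    (fun _ => zero_le) fun i => measure_mono (hsub i)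

end ConvergenceInMeasure

lemma tendsto_iSup_abs_div_tsum_sub {κ : Type*} [Fintype κ] {c : κ → ℝ} (hc : ∑' k, c k = 1) :
    Tendsto (fun w : κ → ℝ => ⨆ k, |w k / ∑' j, w j - c k|) (𝓝 c) (𝓝 0) := by
  simp only [tsum_fintype] at hc ⊢
  have : Nonempty κ := not_isEmpty_iff.mp fun _ => by simp at hc
  have hterm : ∀ k, ContinuousAt (fun w : κ → ℝ => |w k / ∑ j, w j - c k|) c := fun k => by
    refine ((continuous_apply k).continuousAt.div ?_ (by simp [hc])).sub continuousAt_const |>.abs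
    fun_prop
  have hsup := ContinuousAt.finset_sup'_apply Finset.univ_nonempty fun k _ => hterm k
  simp only [Finset.sup'_univ_eq_ciSup] at hsup
  simpa [hc] using hsup.tendsto

theorem normalized_estimator_uniform_consistency_general
    {Ω : Type*} [MeasurableSpace Ω] (P : Measure Ω) [IsProbabilityMeasure P]
    (T : Set ℝ)
    (f : ℝ → ℝ) (hf0 : ∀ x, 0 ≤ f x) (hfT : ∀ x ∉ T, f x = 0) (hf1 : HasSum f 1)
    (S : ℝ → Set ℝ)
    (K : ℝ → ℝ → ℝ → ℝ)
    (hK0 : ∀ x ∈ T, ∀ h > (0:ℝ), ∀ z, 0 ≤ K x h z)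
    (hKS : ∀ x ∈ T, ∀ h > (0:ℝ), ∀ z ∉ S x, K x h z = 0)
    (hK1 : ∀ x ∈ T, ∀ h > (0:ℝ), HasSum (K x h) 1)
    (hKm : ∀ x h, Measurable (K x h))
    (α : ℝ) (hα : 0 < α)
    (hsep : ∀ x ∈ T, ∀ z ∈ (T ∪ S x) \ {x}, α ≤ |z - x|)
    (H : ℕ → ℝ) (hH : ∀ n, 0 < H n) (hH0 : Tendsto H atTop (𝓝 0))
    (X : ℕ → Ω → ℝ) (hXm : ∀ i, Measurable (X i))
    (hXind : iIndepFun X P)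
    (hXd : ∀ i, ∀ x : ℝ, P (X i ⁻¹' {x}) = ENNReal.ofReal (f x))
    (hTfin : T.Finite)
    (EZ VZ : ℝ → ℝ → ℝ)
    (hVZ : ∀ x ∈ T, ∀ h > (0:ℝ), HasSum (fun z : ℝ => K x h z * (z - EZ x h) ^ 2) (VZ x h))
    (hEx : ∀ x ∈ T, Tendsto (fun h => EZ x h) (𝓝[>] (0:ℝ)) (𝓝 x))
    (hVx : ∀ x ∈ T, Tendsto (fun h => VZ x h) (𝓝[>] (0:ℝ)) (𝓝 0)) :
    TendstoInMeasure P
      (fun (n : ℕ) (ω : Ω) =>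
        ⨆ x : T, |((n:ℝ)⁻¹ * ∑ i ∈ Finset.range n, K (x:ℝ) (H n) (X i ω)) / (∑' y : T, (n:ℝ)⁻¹ * ∑ i ∈ Finset.range n, K (y:ℝ) (H n) (X i ω)) - f x|)
      atTop (fun _ => (0:ℝ)) := by
  have hfs : ∑ t ∈ hTfin.toFinset, f t = 1 :=
    (hasSum_sum_of_ne_finset_zero fun t ht => hfT t (by simpa using ht)).unique hf1
  have hfT1 : ∑' x : T, f x = 1 :=
    (tsum_subtype_eq_of_support_subset fun x hx => not_imp_comm.mp (hfT x) hx).trans hf1.tsum_eq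
  have hlaw : ∀ i, ∀ t ∈ hTfin.toFinset, P.real (X i ⁻¹' {t}) = f t := fun i t _ => by
    rw [measureReal_def, hXd, ENNReal.toReal_ofReal (hf0 t)]
  have hH' : Tendsto H atTop (𝓝[>] 0) := tendsto_nhdsWithin_iff.mpr ⟨hH0, .of_forall hH⟩
  have hcoord : ∀ x ∈ T, TendstoInMeasure P
      (fun (n : ℕ) ω => (n : ℝ)⁻¹ * ∑ i ∈ Finset.range n, K x (H n) (X i ω)) atTop
      (fun _ => f x) := fun x hx => by
    have hk0 n := hK0 x hx (H n) (hH n)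
    have hk1 n := hK1 x hx (H n) (hH n)
    have hkx : Tendsto (fun n => K x (H n) x) atTop (𝓝 1) :=
      tendsto_apply_self_of_variance_tendsto_zero hα hk0 hk1
        (fun n z hzx hkz => hsep x hx z ⟨.inr (not_imp_comm.mp (hKS x hx _ (hH n) z) hkz), hzx⟩)
        (fun n => hVZ x hx _ (hH n)) ((hEx x hx).comp hH') ((hVx x hx).comp hH')
    refine tendstoInMeasure_const_of_sub
      (tendstoInMeasure_average_comp_sub_sum hXm hXind hlaw hfs (fun n => hKm x (H n))
        fun n z => ⟨hk0 n z, le_hasSum (hk1 n) z fun w _ => hk0 n w⟩) ?_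
    exact tendsto_sum_mul_of_tendsto_apply_self (hTfin.mem_toFinset.mpr hx) (fun t _ => hf0 t)
      (fun t _ => le_hasSum hf1 t fun w _ => hf0 w) hk0 hk1 hkx
  have := hTfin.fintype
  have hv : TendstoInMeasure P
      (fun (n : ℕ) ω (x : T) => (n : ℝ)⁻¹ * ∑ i ∈ Finset.range n, K x (H n) (X i ω)) atTop
      (fun _ x => f x) := tendstoInMeasure_pi fun x => hcoord x x.2
  simpa only using TendstoInMeasure.comp_of_tendsto hv (tendsto_iSup_abs_div_tsum_sub hfT1)

theorem normalized_estimator_uniform_consistency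
    {Ω : Type*} [MeasurableSpace Ω] (P : Measure Ω) [IsProbabilityMeasure P]
    (T : Set ℝ) (hTc : T.Countable)
    (f : ℝ → ℝ) (hf0 : ∀ x, 0 ≤ f x) (hfT : ∀ x ∉ T, f x = 0) (hf1 : HasSum f 1)
    (S : ℝ → Set ℝ) (hSc : ∀ x ∈ T, (S x).Countable)
    (K : ℝ → ℝ → ℝ → ℝ)
    (hK0 : ∀ x ∈ T, ∀ h > (0:ℝ), ∀ z, 0 ≤ K x h z)
    (hKS : ∀ x ∈ T, ∀ h > (0:ℝ), ∀ z ∉ S x, K x h z = 0)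
    (hK1 : ∀ x ∈ T, ∀ h > (0:ℝ), HasSum (K x h) 1)
    (hKm : ∀ x h, Measurable (K x h))
    (hxS : ∀ x ∈ T, x ∈ S x)
    (α : ℝ) (hα : 0 < α)
    (hsep : ∀ x ∈ T, ∀ z ∈ (T ∪ S x) \ {x}, α ≤ |z - x|)
    (H : ℕ → ℝ) (hH : ∀ n, 0 < H n) (hH0 : Tendsto H atTop (𝓝 0))
    (X : ℕ → Ω → ℝ) (hXm : ∀ i, Measurable (X i))
    (hXind : iIndepFun X P)
    (hXd : ∀ i, ∀ x : ℝ, P (X i ⁻¹' {x}) = ENNReal.ofReal (f x))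
    (hTfin : T.Finite)
    (EZ VZ : ℝ → ℝ → ℝ)
    (hEZ : ∀ x ∈ T, ∀ h > (0:ℝ), HasSum (fun z : ℝ => K x h z * z) (EZ x h))
    (hVZ : ∀ x ∈ T, ∀ h > (0:ℝ), HasSum (fun z : ℝ => K x h z * (z - EZ x h) ^ 2) (VZ x h))
    (hEx : ∀ x ∈ T, Tendsto (fun h => EZ x h) (𝓝[>] (0:ℝ)) (𝓝 x))
    (hVx : ∀ x ∈ T, Tendsto (fun h => VZ x h) (𝓝[>] (0:ℝ)) (𝓝 0)) :
    TendstoInMeasure P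
      (fun (n : ℕ) (ω : Ω) =>
        ⨆ x : T, |((n:ℝ)⁻¹ * ∑ i ∈ Finset.range n, K (x:ℝ) (H n) (X i ω)) / (∑' y : T, (n:ℝ)⁻¹ * ∑ i ∈ Finset.range n, K (y:ℝ) (H n) (X i ω)) - f x|)
      atTop (fun _ => (0:ℝ)) :=
  normalized_estimator_uniform_consistency_general P T f hf0 hfT hf1 S K hK0 hKS hK1 hKm α hα hsep H
    hH hH0 X hXm hXind hXd hTfin EZ VZ hVZ hEx hVx
end

section
/- Fix x ∈ T and suppose that E(Z_{x,h}) → x and Var(Z_{x,h}) → 0 as h → 0. Then the non-normalized estimator f̃_n(x) converges in mean square to f(x) as n → ∞, i.e. E[|f̃_n(x) − f(x)|²] → 0. -/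
open MeasureTheory ProbabilityTheory Filter Topology

/-! Let `c h = Var Z + (E Z - x)²` be the second moment of `K x h` about `x`. Off `x` the
support of `K x h` stays at distance `≥ α` from `x`, so Chebyshev's argument gives
`|K x h z - 𝟙{z = x}| ≤ c h / α²` for every `z`; hence each `K x h (X i)` has mean within
`c h / α²` of `P (X i = x) = f x`. The summands are independent with values in `[0, 1]`, so the
mean squared error of their average is at most `1 / (4 n) + (c h / α²)²`, which tends to `0`
along `h = h_n`. -/

section DiscreteKernel

variable {k : ℝ → ℝ}

lemma hasSum_mul_sub_sq_of_mean_variance {m v : ℝ} (hk : HasSum k 1)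
    (hm : HasSum (fun z => k z * z) m) (hv : HasSum (fun z => k z * (z - m) ^ 2) v) (x : ℝ) :
    HasSum (fun z => k z * (z - x) ^ 2) (v + (m - x) ^ 2) := by
  convert hv.add (((hm.sub (hk.mul_left m)).mul_left (2 * (m - x))).add
    (hk.mul_left ((m - x) ^ 2))) using 1
  · funext z; ring
  · ring

lemma abs_sub_indicator_le_of_hasSum_mul_sub_sq {x α c : ℝ} (hk0 : ∀ z, 0 ≤ k z)
    (hk1 : HasSum k 1) (hα : 0 < α) (hsep : ∀ z ≠ x, k z ≠ 0 → α ≤ |z - x|)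
    (hc : HasSum (fun z => k z * (z - x) ^ 2) c) (z : ℝ) :
    |k z - Set.indicator {x} 1 z| ≤ c / α ^ 2 := by
  have hsep_sq : ∀ z ≠ x, k z * α ^ 2 ≤ k z * (z - x) ^ 2 := fun z hz => by
    obtain hkz | hkz := eq_or_ne (k z) 0
    · simp [hkz]
    · have hα_sq := pow_le_pow_left₀ hα.le (hsep z hz hkz) 2
      rw [sq_abs] at hα_sq
      exact mul_le_mul_of_nonneg_left hα_sq (hk0 z)
  rw [le_div_iff₀ (by positivity)]
  by_cases hz : z = x
  · subst hz
    have hkz1 : k z ≤ 1 := le_hasSum hk1 z fun j _ => hk0 j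
    have hrest : HasSum (fun y => (k y - if y = z then k z else 0) * α ^ 2)
        ((1 - k z) * α ^ 2) :=
      (hk1.sub (hasSum_ite_eq z (k z))).mul_right _
    rw [Set.indicator_of_mem (Set.mem_singleton z), Pi.one_apply,
      abs_of_nonpos (sub_nonpos.2 hkz1), neg_sub]
    refine hasSum_le (fun y => ?_) hrest hc
    by_cases hy : y = z
    · subst hy; simp
    · simpa [hy] using hsep_sq y hy
  · rw [Set.indicator_of_notMem (Set.mem_singleton_iff.not.2 hz), sub_zero,
      abs_of_nonneg (hk0 z)]
    exact (hsep_sq z hz).trans (le_hasSum hc z fun j _ => mul_nonneg (hk0 j) (sq_nonneg _))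

end DiscreteKernel

section MeanSquare

variable {Ω : Type*} [MeasurableSpace Ω] {μ : Measure Ω} [IsProbabilityMeasure μ]

lemma integral_sub_const_sq_eq_variance_add {X : Ω → ℝ} (hX : MemLp X 2 μ) (c : ℝ) :
    ∫ ω, (X ω - c) ^ 2 ∂μ = Var[X; μ] + (μ[X] - c) ^ 2 := by
  have hXc : MemLp (fun ω => X ω - c) 2 μ := hX.sub (memLp_const c)
  have h := variance_eq_sub hXc
  rw [variance_sub_const hX.aestronglyMeasurable,
    integral_sub (hX.integrable one_le_two) (integrable_const c), integral_const] at h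
  simp only [probReal_univ, one_smul, Pi.pow_apply] at h
  linarith

lemma abs_integral_comp_sub_measureReal_le {Y : Ω → ℝ} (hY : Measurable Y) {g : ℝ → ℝ}
    (hg : Measurable g) {x ε : ℝ} (hgε : ∀ z, |g z - Set.indicator {x} 1 z| ≤ ε) :
    |∫ ω, g (Y ω) ∂μ - μ.real (Y ⁻¹' {x})| ≤ ε := by
  have hind : ∀ ω, Set.indicator {x} (1 : ℝ → ℝ) (Y ω) = (Y ⁻¹' {x}).indicator 1 ω :=
    fun ω => (Set.indicator_comp_right Y).symm
  have hYx : MeasurableSet (Y ⁻¹' {x}) := hY (measurableSet_singleton x)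
  have hind_int : Integrable ((Y ⁻¹' {x}).indicator (1 : Ω → ℝ)) μ :=
    (integrable_const 1).indicator hYx
  have hdiff_le : ∀ ω, ‖g (Y ω) - (Y ⁻¹' {x}).indicator 1 ω‖ ≤ ε := fun ω => by
    rw [← hind]; exact hgε (Y ω)
  have hdiff_int : Integrable (fun ω => g (Y ω) - (Y ⁻¹' {x}).indicator 1 ω) μ :=
    .of_bound ((hg.comp hY).sub (measurable_const.indicator hYx)).aestronglyMeasurable ε
      (ae_of_all _ hdiff_le)
  have hg_int : Integrable (fun ω => g (Y ω)) μ :=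
    (hdiff_int.add hind_int).congr (ae_of_all _ fun ω => by simp)
  rw [← integral_indicator_one hYx, ← integral_sub hg_int hind_int]
  simpa using norm_integral_le_of_norm_le_const (ae_of_all μ hdiff_le)

variable {ι : Type*} {Y : ι → Ω → ℝ} {s : Finset ι} {a b : ℝ}

lemma variance_average_le_of_pairwise_indepFun (hYm : ∀ i ∈ s, AEMeasurable (Y i) μ)
    (hYab : ∀ i ∈ s, ∀ᵐ ω ∂μ, Y i ω ∈ Set.Icc a b)
    (hind : Set.Pairwise ↑s fun i j => Y i ⟂ᵢ[μ] Y j) :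
    Var[fun ω => (s.card : ℝ)⁻¹ * ∑ i ∈ s, Y i ω; μ] ≤ ((b - a) / 2) ^ 2 / s.card := by
  have hYL2 : ∀ i ∈ s, MemLp (Y i) 2 μ := fun i hi =>
    memLp_of_bounded (hYab i hi) (hYm i hi).aestronglyMeasurable 2
  have hsum : Var[∑ i ∈ s, Y i; μ] ≤ s.card * ((b - a) / 2) ^ 2 := by
    rw [IndepFun.variance_sum hYL2 hind]
    exact (Finset.sum_le_sum fun i hi => variance_le_sq_of_bounded (hYab i hi) (hYm i hi)).trans
      (by simp)
  simp_rw [← Finset.sum_apply]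
  rw [variance_const_mul]
  rcases s.eq_empty_or_nonempty with rfl | hs
  · simp
  have : (0 : ℝ) < s.card := by exact_mod_cast hs.card_pos
  calc ((s.card : ℝ)⁻¹) ^ 2 * Var[∑ i ∈ s, Y i; μ]
      ≤ ((s.card : ℝ)⁻¹) ^ 2 * (s.card * ((b - a) / 2) ^ 2) := by gcongr
    _ = ((b - a) / 2) ^ 2 / s.card := by field_simp

lemma integral_average_sub_sq_le (hYm : ∀ i ∈ s, AEMeasurable (Y i) μ)
    (hYab : ∀ i ∈ s, ∀ᵐ ω ∂μ, Y i ω ∈ Set.Icc a b)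
    (hind : Set.Pairwise ↑s fun i j => Y i ⟂ᵢ[μ] Y j) (hs : s.Nonempty) {c ε : ℝ}
    (hmean : ∀ i ∈ s, |μ[Y i] - c| ≤ ε) :
    ∫ ω, ((s.card : ℝ)⁻¹ * ∑ i ∈ s, Y i ω - c) ^ 2 ∂μ ≤ ((b - a) / 2) ^ 2 / s.card + ε ^ 2 := by
  have hYL2 : ∀ i ∈ s, MemLp (Y i) 2 μ := fun i hi =>
    memLp_of_bounded (hYab i hi) (hYm i hi).aestronglyMeasurable 2
  have havg_L2 : MemLp (fun ω => (s.card : ℝ)⁻¹ * ∑ i ∈ s, Y i ω) 2 μ := by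
    simpa only [Finset.sum_apply] using (memLp_finsetSum' s hYL2).const_mul _
  have hcard : (0 : ℝ) < s.card := by exact_mod_cast hs.card_pos
  have havg_mean : |μ[fun ω => (s.card : ℝ)⁻¹ * ∑ i ∈ s, Y i ω] - c| ≤ ε := by
    rw [integral_const_mul, integral_finsetSum s fun i hi => (hYL2 i hi).integrable one_le_two]
    calc |(s.card : ℝ)⁻¹ * ∑ i ∈ s, μ[Y i] - c|
        = |(s.card : ℝ)⁻¹ * ∑ i ∈ s, (μ[Y i] - c)| := by
          rw [Finset.sum_sub_distrib, Finset.sum_const, nsmul_eq_mul, mul_sub,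
            inv_mul_cancel_left₀ hcard.ne']
      _ = (s.card : ℝ)⁻¹ * |∑ i ∈ s, (μ[Y i] - c)| := by
          rw [abs_mul, abs_of_pos (inv_pos.2 hcard)]
      _ ≤ (s.card : ℝ)⁻¹ * (s.card * ε) := by
          gcongr
          exact (Finset.abs_sum_le_sum_abs _ _).trans
            ((Finset.sum_le_sum hmean).trans_eq (by simp))
      _ = ε := inv_mul_cancel_left₀ hcard.ne' ε
  rw [integral_sub_const_sq_eq_variance_add havg_L2]
  exact add_le_add (variance_average_le_of_pairwise_indepFun hYm hYab hind)
    (sq_le_sq' (abs_le.1 havg_mean).1 (abs_le.1 havg_mean).2)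

end MeanSquare

theorem nonnormalized_estimator_L2_consistency_general
    {Ω : Type*} [MeasurableSpace Ω] (P : Measure Ω) [IsProbabilityMeasure P]
    (T : Set ℝ)
    (f : ℝ → ℝ) (hf0 : ∀ x, 0 ≤ f x)
    (S : ℝ → Set ℝ)
    (K : ℝ → ℝ → ℝ → ℝ)
    (hK0 : ∀ x ∈ T, ∀ h > (0:ℝ), ∀ z, 0 ≤ K x h z)
    (hKS : ∀ x ∈ T, ∀ h > (0:ℝ), ∀ z ∉ S x, K x h z = 0)
    (hK1 : ∀ x ∈ T, ∀ h > (0:ℝ), HasSum (K x h) 1)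
    (hKm : ∀ x h, Measurable (K x h))
    (α : ℝ) (hα : 0 < α)
    (hsep : ∀ x ∈ T, ∀ z ∈ (T ∪ S x) \ {x}, α ≤ |z - x|)
    (H : ℕ → ℝ) (hH : ∀ n, 0 < H n) (hH0 : Tendsto H atTop (𝓝 0))
    (X : ℕ → Ω → ℝ) (hXm : ∀ i, Measurable (X i))
    (hXind : iIndepFun X P)
    (hXd : ∀ i, ∀ x : ℝ, P (X i ⁻¹' {x}) = ENNReal.ofReal (f x))
    (x : ℝ) (hx : x ∈ T)
    (EZ VZ : ℝ → ℝ)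
    (hEZ : ∀ h > (0:ℝ), HasSum (fun z : ℝ => K x h z * z) (EZ h))
    (hVZ : ∀ h > (0:ℝ), HasSum (fun z : ℝ => K x h z * (z - EZ h) ^ 2) (VZ h))
    (hEx : Tendsto EZ (𝓝[>] (0:ℝ)) (𝓝 x))
    (hVx : Tendsto VZ (𝓝[>] (0:ℝ)) (𝓝 0))
    :
    Tendsto
      (fun n : ℕ => ∫ ω, (((n:ℝ)⁻¹ * ∑ i ∈ Finset.range n, K x (H n) (X i ω)) - f x) ^ 2 ∂P)
      atTop (𝓝 0) := by
  set c : ℝ → ℝ := fun h => VZ h + (EZ h - x) ^ 2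
  have hK_near : ∀ h > 0, ∀ z, |K x h z - Set.indicator {x} 1 z| ≤ c h / α ^ 2 := fun h hh =>
    abs_sub_indicator_le_of_hasSum_mul_sub_sq (hK0 x hx h hh) (hK1 x hx h hh) hα
      (fun z hz hKz => hsep x hx z ⟨.inr (by_contra (hKz <| hKS x hx h hh z ·)), hz⟩)
      (hasSum_mul_sub_sq_of_mean_variance (hK1 x hx h hh) (hEZ h hh) (hVZ h hh) x)
  have hK_mem : ∀ h > 0, ∀ z, K x h z ∈ Set.Icc 0 1 := fun h hh z =>
    ⟨hK0 x hx h hh z, le_hasSum (hK1 x hx h hh) z fun y _ => hK0 x hx h hh y⟩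
  have hX_atom : ∀ i, P.real (X i ⁻¹' {x}) = f x := fun i => by
    rw [measureReal_def, hXd i x, ENNReal.toReal_ofReal (hf0 x)]
  have hmse_le : ∀ n : ℕ, 1 ≤ n →
      ∫ ω, (((n:ℝ)⁻¹ * ∑ i ∈ Finset.range n, K x (H n) (X i ω)) - f x) ^ 2 ∂P
        ≤ ((1 - 0) / 2) ^ 2 / n + (c (H n) / α ^ 2) ^ 2 := fun n hn => by
    simpa only [Finset.card_range, Function.comp_apply] using
      integral_average_sub_sq_le (s := Finset.range n)
      (fun i _ => ((hKm x (H n)).comp (hXm i)).aemeasurable)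
      (fun i _ => ae_of_all _ fun ω => hK_mem (H n) (hH n) (X i ω))
      (fun i _ j _ hij => (hXind.comp _ fun _ => hKm x (H n)).indepFun hij)
      (Finset.nonempty_range_iff.2 (by omega))
      (fun i _ => hX_atom i ▸ abs_integral_comp_sub_measureReal_le (hXm i) (hKm x (H n))
        (hK_near (H n) (hH n)))
  have hH_pos : Tendsto H atTop (𝓝[>] 0) := tendsto_nhdsWithin_iff.2 ⟨hH0, .of_forall hH⟩
  have hc_lim : Tendsto (fun n => c (H n)) atTop (𝓝 0) := by
    simpa using (hVx.comp hH_pos).add (((hEx.comp hH_pos).sub_const x).pow 2)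
  have hmse_bound_lim : Tendsto (fun n : ℕ => ((1 - 0) / 2) ^ 2 / (n : ℝ) + (c (H n) / α ^ 2) ^ 2)
      atTop (𝓝 0) := by
    simpa using (tendsto_const_div_atTop_nhds_zero_nat _).add ((hc_lim.div_const _).pow 2)
  exact squeeze_zero' (.of_forall fun n => integral_nonneg fun ω => sq_nonneg _)
    (eventually_ge_atTop 1 |>.mono hmse_le) hmse_bound_lim

theorem nonnormalized_estimator_L2_consistency
    {Ω : Type*} [MeasurableSpace Ω] (P : Measure Ω) [IsProbabilityMeasure P]
    (T : Set ℝ) (hTc : T.Countable)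
    (f : ℝ → ℝ) (hf0 : ∀ x, 0 ≤ f x) (hfT : ∀ x ∉ T, f x = 0) (hf1 : HasSum f 1)
    (S : ℝ → Set ℝ) (hSc : ∀ x ∈ T, (S x).Countable)
    (K : ℝ → ℝ → ℝ → ℝ)
    (hK0 : ∀ x ∈ T, ∀ h > (0:ℝ), ∀ z, 0 ≤ K x h z)
    (hKS : ∀ x ∈ T, ∀ h > (0:ℝ), ∀ z ∉ S x, K x h z = 0)
    (hK1 : ∀ x ∈ T, ∀ h > (0:ℝ), HasSum (K x h) 1)
    (hKm : ∀ x h, Measurable (K x h))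
    (hxS : ∀ x ∈ T, x ∈ S x)
    (α : ℝ) (hα : 0 < α)
    (hsep : ∀ x ∈ T, ∀ z ∈ (T ∪ S x) \ {x}, α ≤ |z - x|)
    (H : ℕ → ℝ) (hH : ∀ n, 0 < H n) (hH0 : Tendsto H atTop (𝓝 0))
    (X : ℕ → Ω → ℝ) (hXm : ∀ i, Measurable (X i))
    (hXind : iIndepFun X P)
    (hXd : ∀ i, ∀ x : ℝ, P (X i ⁻¹' {x}) = ENNReal.ofReal (f x))
    (x : ℝ) (hx : x ∈ T)
    (EZ VZ : ℝ → ℝ)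
    (hEZ : ∀ h > (0:ℝ), HasSum (fun z : ℝ => K x h z * z) (EZ h))
    (hVZ : ∀ h > (0:ℝ), HasSum (fun z : ℝ => K x h z * (z - EZ h) ^ 2) (VZ h))
    (hEx : Tendsto EZ (𝓝[>] (0:ℝ)) (𝓝 x))
    (hVx : Tendsto VZ (𝓝[>] (0:ℝ)) (𝓝 0))
    :
    Tendsto
      (fun n : ℕ => ∫ ω, (((n:ℝ)⁻¹ * ∑ i ∈ Finset.range n, K x (H n) (X i ω)) - f x) ^ 2 ∂P)
      atTop (𝓝 0) :=
  nonnormalized_estimator_L2_consistency_general P T f hf0 S K hK0 hKS hK1 hKm α hα hsep H hH hH0 X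
    hXm hXind hXd x hx EZ VZ hEZ hVZ hEx hVx
end

section
/- Fix x ∈ T and suppose that E(Z_{x,h}) → x and Var(Z_{x,h}) → 0 as h → 0. Then the non-normalized estimator f̃_n(x) converges almost surely to f(x) as n → ∞. -/
/-!
Chebyshev's inequality for the kernel `K x h` about `EZ h`, together with the separation of
`T ∪ S x` from `x` by `α`, shows that `K x h` converges to the point mass at `x` uniformly on `T`
as `h → 0`. Since every `X i` lies in `T` almost surely, `f̃ₙ(x)` is then asymptotically the
empirical frequency of `x` among `X 0, …, X (n - 1)`, which tends to `f x` by the strong law of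
large numbers.
-/

open MeasureTheory ProbabilityTheory Filter Topology

-- Chebyshev's inequality for a weight function `p` with second moment `V` about `m`.
theorem mul_le_of_hasSum_indicator_of_hasSum_mul_sq {p : ℝ → ℝ} {A : Set ℝ} {m c s V : ℝ}
    (hp0 : ∀ z, 0 ≤ p z) (hs : HasSum (A.indicator p) s)
    (hV : HasSum (fun z => p z * (z - m) ^ 2) V) (hA : ∀ z ∈ A, p z ≠ 0 → c ≤ (z - m) ^ 2) :
    c * s ≤ V := by
  refine hasSum_le (fun z => ?_) (hs.mul_left c) hV
  by_cases hz : z ∈ A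
  · rw [Set.indicator_of_mem hz]
    rcases eq_or_ne (p z) 0 with h0 | h0
    · simp [h0]
    · rw [mul_comm]
      exact mul_le_mul_of_nonneg_left (hA z hz h0) (hp0 z)
  · rw [Set.indicator_of_notMem hz, mul_zero]
    exact mul_nonneg (hp0 z) (sq_nonneg _)

theorem sq_le_sq_sub_of_le_abs_sub {x m z α : ℝ} (hz : α ≤ |z - x|) (hm : |m - x| ≤ α / 2) :
    (α / 2) ^ 2 ≤ (z - m) ^ 2 := by
  have : α / 2 ≤ |z - m| := by
    have := abs_sub_abs_le_abs_sub (z - x) (z - m)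
    rw [show z - x - (z - m) = m - x by ring] at this
    linarith
  rw [← sq_abs (z - m)]
  exact pow_le_pow_left₀ (by linarith [abs_nonneg (m - x)]) this 2

theorem abs_sub_indicator_le_of_hasSum_mul_sq {p : ℝ → ℝ} {S : Set ℝ} {x m V α z : ℝ}
    (hp0 : ∀ z, 0 ≤ p z) (hpS : ∀ z ∉ S, p z = 0) (hp1 : HasSum p 1)
    (hV : HasSum (fun z => p z * (z - m) ^ 2) V)
    (hS : ∀ w ∈ S, w ≠ x → α ≤ |w - x|) (hz : z ≠ x → α ≤ |z - x|) (hm : |m - x| ≤ α / 2) :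
    (α / 2) ^ 2 * |p z - ({x} : Set ℝ).indicator 1 z| ≤ V := by
  have hfar : ∀ w, w ≠ x → p w ≠ 0 → (α / 2) ^ 2 ≤ (w - m) ^ 2 := fun w hw h0 =>
    sq_le_sq_sub_of_le_abs_sub (hS w (by_contra fun h => h0 (hpS w h)) hw) hm
  have hsingle : ∀ z, HasSum (({z} : Set ℝ).indicator p) (p z) := fun z => by
    rw [Set.indicator_singleton]; exact hasSum_pi_single z (p z)
  by_cases hzx : z = x
  · subst hzx
    have hsum : HasSum (({z}ᶜ : Set ℝ).indicator p) (1 - p z) := by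
      rw [Set.indicator_compl]; exact hp1.sub (hsingle z)
    have hle : p z ≤ 1 := le_hasSum hp1 z fun w _ => hp0 w
    rw [Set.indicator_of_mem (Set.mem_singleton z), abs_sub_comm, Pi.one_apply,
      abs_of_nonneg (sub_nonneg.2 hle)]
    exact mul_le_of_hasSum_indicator_of_hasSum_mul_sq hp0 hsum hV fun w hw => hfar w hw
  · rw [Set.indicator_of_notMem (s := {x}) hzx, sub_zero, abs_of_nonneg (hp0 z)]
    exact mul_le_of_hasSum_indicator_of_hasSum_mul_sq hp0 (hsingle z) hV fun w hw _ =>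
      sq_le_sq_sub_of_le_abs_sub (hw ▸ hz hzx) hm

theorem tendstoUniformlyOn_indicator_of_tendsto_variance {ι : Type*} {l : Filter ι}
    {p : ι → ℝ → ℝ} {m V : ι → ℝ} {S T : Set ℝ} {x α : ℝ}
    (hp0 : ∀ i z, 0 ≤ p i z) (hpS : ∀ i, ∀ z ∉ S, p i z = 0) (hp1 : ∀ i, HasSum (p i) 1)
    (hV : ∀ i, HasSum (fun z => p i z * (z - m i) ^ 2) (V i))
    (hα : 0 < α) (hsep : ∀ z ∈ (T ∪ S) \ {x}, α ≤ |z - x|)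
    (hm : Tendsto m l (𝓝 x)) (hV0 : Tendsto V l (𝓝 0)) :
    TendstoUniformlyOn p (({x} : Set ℝ).indicator 1) l T := by
  rw [Metric.tendstoUniformlyOn_iff]
  intro ε hε
  have hc : 0 < (α / 2) ^ 2 := by positivity
  filter_upwards [hm.eventually (Metric.closedBall_mem_nhds x (half_pos hα)),
    hV0.eventually (gt_mem_nhds (mul_pos hc hε))] with i hmi hVi z hz
  rw [dist_comm, Real.dist_eq]
  have hbound := abs_sub_indicator_le_of_hasSum_mul_sq (hp0 i) (hpS i) (hp1 i) (hV i)
    (fun w hw hwx => hsep w ⟨Or.inr hw, hwx⟩) (fun hzx => hsep z ⟨Or.inl hz, hzx⟩) hmi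
  exact lt_of_mul_lt_mul_left (hbound.trans_lt hVi) hc.le

theorem tendsto_avg_of_tendstoUniformlyOn {β : Type*} {T : Set β} {G : ℕ → β → ℝ} {g : β → ℝ}
    (hG : TendstoUniformlyOn G g atTop T) {y : ℕ → β} (hy : ∀ i, y i ∈ T) {L : ℝ}
    (hg : Tendsto (fun n : ℕ => (n : ℝ)⁻¹ * ∑ i ∈ Finset.range n, g (y i)) atTop (𝓝 L)) :
    Tendsto (fun n : ℕ => (n : ℝ)⁻¹ * ∑ i ∈ Finset.range n, G n (y i)) atTop (𝓝 L) := by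
  refine tendsto_of_tendsto_of_dist hg (Metric.tendsto_nhds.2 fun ε hε => ?_)
  filter_upwards [Metric.tendstoUniformlyOn_iff.1 hG (ε / 2) (half_pos hε),
    eventually_gt_atTop 0] with n hn hn0
  have hsum : |∑ i ∈ Finset.range n, (g (y i) - G n (y i))| ≤ n * (ε / 2) := by
    refine (Finset.abs_sum_le_sum_abs _ _).trans ?_
    refine (Finset.sum_le_sum fun i (_ : i ∈ Finset.range n) =>
      (Real.dist_eq _ _ ▸ hn (y i) (hy i)).le).trans_eq ?_
    simp
  rw [dist_zero_right, Real.norm_eq_abs, abs_dist, Real.dist_eq, ← mul_sub,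
    ← Finset.sum_sub_distrib, abs_mul, abs_inv, Nat.abs_cast, inv_mul_lt_iff₀ (by positivity)]
  nlinarith [(Nat.cast_pos (α := ℝ)).2 hn0]

theorem ae_mem_of_measure_preimage_singleton_eq_ofReal {Ω β : Type*} [MeasurableSpace Ω]
    [MeasurableSpace β] [MeasurableSingletonClass β] {P : Measure Ω} [IsProbabilityMeasure P]
    {Y : Ω → β} (hY : Measurable Y) {T : Set β} (hT : T.Countable) {f : β → ℝ}
    (hf0 : ∀ z, 0 ≤ f z) (hfT : ∀ z ∉ T, f z = 0) (hf1 : HasSum f 1)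
    (hYf : ∀ z, P (Y ⁻¹' {z}) = ENNReal.ofReal (f z)) :
    ∀ᵐ ω ∂P, Y ω ∈ T := by
  have hfT1 : HasSum (fun z : T => f z) 1 :=
    (hasSum_subtype_iff_of_support_subset fun z hz => not_imp_comm.1 (hfT z) hz).2 hf1
  rw [ae_iff_measure_eq (hY hT.measurableSet).nullMeasurableSet, measure_univ]
  change P (Y ⁻¹' T) = 1
  rw [← tsum_measure_preimage_singleton hT fun z _ => hY (measurableSet_singleton z)]
  simp_rw [hYf]
  rw [← ENNReal.ofReal_tsum_of_nonneg (f := fun z : T => f z) (fun z => hf0 z) hfT1.summable,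
    hfT1.tsum_eq, ENNReal.ofReal_one]

theorem identDistrib_indicator_one {Ω Ω' : Type*} [MeasurableSpace Ω] [MeasurableSpace Ω']
    {μ : Measure Ω} {ν : Measure Ω'} [IsProbabilityMeasure μ] [IsProbabilityMeasure ν]
    {A : Set Ω} {B : Set Ω'} (hA : MeasurableSet A) (hB : MeasurableSet B) (hAB : μ A = ν B) :
    IdentDistrib (A.indicator (1 : Ω → ℝ)) (B.indicator 1) μ ν := by
  classical
  refine ⟨(measurable_one.indicator hA).aemeasurable, (measurable_one.indicator hB).aemeasurable,
    Measure.ext fun s hs => ?_⟩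
  rw [Measure.map_apply (measurable_one.indicator hA) hs,
    Measure.map_apply (measurable_one.indicator hB) hs]
  simp only [Pi.one_def, Set.indicator_const_preimage_eq_union]
  split_ifs <;>
    simp [hAB, measure_compl hA (measure_ne_top μ A), measure_compl hB (measure_ne_top ν B)]

theorem ae_tendsto_avg_indicator {Ω β : Type*} [MeasurableSpace Ω] [MeasurableSpace β]
    {P : Measure Ω} [IsProbabilityMeasure P] {X : ℕ → Ω → β} (hX : ∀ i, Measurable (X i))
    (hind : Pairwise fun i j => IndepFun (X i) (X j) P) {s : Set β} (hs : MeasurableSet s)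
    (hps : ∀ i, P (X i ⁻¹' s) = P (X 0 ⁻¹' s)) :
    ∀ᵐ ω ∂P, Tendsto (fun n : ℕ => (n : ℝ)⁻¹ * ∑ i ∈ Finset.range n, s.indicator 1 (X i ω))
      atTop (𝓝 (P.real (X 0 ⁻¹' s))) := by
  have hY : ∀ i, (X i ⁻¹' s).indicator 1 = s.indicator (1 : β → ℝ) ∘ X i := fun i => rfl
  have hslln := strong_law_ae_real (fun i => (X i ⁻¹' s).indicator (1 : Ω → ℝ))
    ((integrable_const 1).indicator (hX 0 hs))
    (fun i j hij => by
      simp only [Function.onFun, hY]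
      exact (hind hij).comp (measurable_one.indicator hs) (measurable_one.indicator hs))
    (fun i => identDistrib_indicator_one (hX i hs) (hX 0 hs) (hps i))
  rw [integral_indicator_one (hX 0 hs)] at hslln
  filter_upwards [hslln] with ω hω
  simpa only [div_eq_inv_mul, hY, Function.comp_apply] using hω

theorem nonnormalized_estimator_as_consistency_general
    {Ω : Type*} [MeasurableSpace Ω] (P : Measure Ω) [IsProbabilityMeasure P]
    (T : Set ℝ) (hTc : T.Countable)
    (f : ℝ → ℝ) (hf0 : ∀ x, 0 ≤ f x) (hfT : ∀ x ∉ T, f x = 0) (hf1 : HasSum f 1)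
    (S : ℝ → Set ℝ)
    (K : ℝ → ℝ → ℝ → ℝ)
    (hK0 : ∀ x ∈ T, ∀ h > (0:ℝ), ∀ z, 0 ≤ K x h z)
    (hKS : ∀ x ∈ T, ∀ h > (0:ℝ), ∀ z ∉ S x, K x h z = 0)
    (hK1 : ∀ x ∈ T, ∀ h > (0:ℝ), HasSum (K x h) 1)
    (α : ℝ) (hα : 0 < α)
    (hsep : ∀ x ∈ T, ∀ z ∈ (T ∪ S x) \ {x}, α ≤ |z - x|)
    (H : ℕ → ℝ) (hH : ∀ n, 0 < H n) (hH0 : Tendsto H atTop (𝓝 0))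
    (X : ℕ → Ω → ℝ) (hXm : ∀ i, Measurable (X i))
    (hXind : iIndepFun X P)
    (hXd : ∀ i, ∀ x : ℝ, P (X i ⁻¹' {x}) = ENNReal.ofReal (f x))
    (x : ℝ) (hx : x ∈ T)
    (EZ VZ : ℝ → ℝ)
    (hVZ : ∀ h > (0:ℝ), HasSum (fun z : ℝ => K x h z * (z - EZ h) ^ 2) (VZ h))
    (hEx : Tendsto EZ (𝓝[>] (0:ℝ)) (𝓝 x))
    (hVx : Tendsto VZ (𝓝[>] (0:ℝ)) (𝓝 0))
    :
    ∀ᵐ ω ∂P, Tendsto (fun n : ℕ => (n:ℝ)⁻¹ * ∑ i ∈ Finset.range n, K x (H n) (X i ω)) atTop (𝓝 (f x)) := by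
  have hHpos : Tendsto H atTop (𝓝[>] 0) := tendsto_nhdsWithin_iff.2 ⟨hH0, .of_forall hH⟩
  have hK : TendstoUniformlyOn (fun n => K x (H n)) (({x} : Set ℝ).indicator 1) atTop T :=
    tendstoUniformlyOn_indicator_of_tendsto_variance (fun n => hK0 x hx (H n) (hH n))
      (fun n => hKS x hx (H n) (hH n)) (fun n => hK1 x hx (H n) (hH n))
      (fun n => hVZ (H n) (hH n)) hα (hsep x hx) (hEx.comp hHpos) (hVx.comp hHpos)
  have hT : ∀ᵐ ω ∂P, ∀ i, X i ω ∈ T := ae_all_iff.2 fun i =>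
    ae_mem_of_measure_preimage_singleton_eq_ofReal (hXm i) hTc hf0 hfT hf1 (hXd i)
  have hfreq := ae_tendsto_avg_indicator hXm (fun i j hij => hXind.indepFun hij)
    (measurableSet_singleton x) fun i => by rw [hXd i, hXd 0]
  have hfx : P.real (X 0 ⁻¹' {x}) = f x := by
    rw [measureReal_def, hXd 0, ENNReal.toReal_ofReal (hf0 x)]
  filter_upwards [hT, hfreq] with ω hωT hω
  exact tendsto_avg_of_tendstoUniformlyOn hK hωT (hfx ▸ hω)

theorem nonnormalized_estimator_as_consistency
    {Ω : Type*} [MeasurableSpace Ω] (P : Measure Ω) [IsProbabilityMeasure P]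
    (T : Set ℝ) (hTc : T.Countable)
    (f : ℝ → ℝ) (hf0 : ∀ x, 0 ≤ f x) (hfT : ∀ x ∉ T, f x = 0) (hf1 : HasSum f 1)
    (S : ℝ → Set ℝ) (hSc : ∀ x ∈ T, (S x).Countable)
    (K : ℝ → ℝ → ℝ → ℝ)
    (hK0 : ∀ x ∈ T, ∀ h > (0:ℝ), ∀ z, 0 ≤ K x h z)
    (hKS : ∀ x ∈ T, ∀ h > (0:ℝ), ∀ z ∉ S x, K x h z = 0)
    (hK1 : ∀ x ∈ T, ∀ h > (0:ℝ), HasSum (K x h) 1)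
    (hKm : ∀ x h, Measurable (K x h))
    (hxS : ∀ x ∈ T, x ∈ S x)
    (α : ℝ) (hα : 0 < α)
    (hsep : ∀ x ∈ T, ∀ z ∈ (T ∪ S x) \ {x}, α ≤ |z - x|)
    (H : ℕ → ℝ) (hH : ∀ n, 0 < H n) (hH0 : Tendsto H atTop (𝓝 0))
    (X : ℕ → Ω → ℝ) (hXm : ∀ i, Measurable (X i))
    (hXind : iIndepFun X P)
    (hXd : ∀ i, ∀ x : ℝ, P (X i ⁻¹' {x}) = ENNReal.ofReal (f x))
    (x : ℝ) (hx : x ∈ T)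
    (EZ VZ : ℝ → ℝ)
    (hEZ : ∀ h > (0:ℝ), HasSum (fun z : ℝ => K x h z * z) (EZ h))
    (hVZ : ∀ h > (0:ℝ), HasSum (fun z : ℝ => K x h z * (z - EZ h) ^ 2) (VZ h))
    (hEx : Tendsto EZ (𝓝[>] (0:ℝ)) (𝓝 x))
    (hVx : Tendsto VZ (𝓝[>] (0:ℝ)) (𝓝 0))
    :
    ∀ᵐ ω ∂P, Tendsto (fun n : ℕ => (n:ℝ)⁻¹ * ∑ i ∈ Finset.range n, K x (H n) (X i ω)) atTop (𝓝 (f x)) :=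
  nonnormalized_estimator_as_consistency_general P T hTc f hf0 hfT hf1 S K hK0 hKS hK1 α hα hsep H
    hH hH0 X hXm hXind hXd x hx EZ VZ hVZ hEx hVx
end

section
/- Under Assumptions (A1), sup_{x∈T} | Var[K_{x,h_n}(X_1)] − f(x)(1 − f(x)) | → 0 as n → ∞; that is, the variance of the kernel evaluated at one observation converges, uniformly in the target x ∈ T, to f(x)(1 − f(x)). -/
/-!
Write `k = K x h`. Every atom `z ≠ x` of `k` lies at distance `≥ α` from `x`, hence at distance
`≥ α / 2` from the mean `E Z` once `|E Z - x| ≤ α / 2`; Chebyshev's inequality then bounds the mass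
of `k` off `x` by `Var Z / (α / 2) ^ 2`, so `k` is uniformly close to the point mass at `x`.
Consequently `K x h (X₁)` is uniformly close to the Bernoulli variable `1{X₁ = x}`, whose variance
is `f x (1 - f x)`, and the variance of `[0, 1]`-valued variables is Lipschitz in the sup norm.
-/

open MeasureTheory ProbabilityTheory Filter Topology

lemma abs_sq_sub_sq_le_two_mul_abs_sub {a b : ℝ} (ha : a ∈ Set.Icc (0 : ℝ) 1)
    (hb : b ∈ Set.Icc (0 : ℝ) 1) : |a ^ 2 - b ^ 2| ≤ 2 * |a - b| := by
  rw [sq_sub_sq, abs_mul]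
  gcongr
  rw [abs_le]
  constructor <;> linarith [ha.1, ha.2, hb.1, hb.2]

section ProbabilityMass

variable {α : Type*} {k : α → ℝ}

lemma apply_le_one_sub_apply_of_hasSum_one (hk0 : ∀ z, 0 ≤ k z) (hk1 : HasSum k 1) {x y : α}
    (hyx : y ≠ x) : k y ≤ 1 - k x := by
  classical
  have := sum_le_hasSum {x, y} (fun i _ => hk0 i) hk1
  rw [Finset.sum_pair hyx.symm] at this
  linarith

lemma abs_sub_indicator_singleton_le (hk0 : ∀ z, 0 ≤ k z) (hk1 : HasSum k 1) (x y : α) :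
    |k y - ({x} : Set α).indicator 1 y| ≤ 1 - k x := by
  by_cases hyx : y = x
  · subst hyx
    have hk_le : k y ≤ 1 := le_hasSum hk1 y fun j _ => hk0 j
    rw [Set.indicator_of_mem (Set.mem_singleton y), Pi.one_apply, abs_of_nonpos (by linarith)]
    linarith
  · rw [Set.indicator_of_notMem (Set.mem_singleton_iff.not.mpr hyx), sub_zero,
      abs_of_nonneg (hk0 y)]
    exact apply_le_one_sub_apply_of_hasSum_one hk0 hk1 hyx

end ProbabilityMass

lemma one_sub_apply_mul_sq_le_of_hasSum_sq_sub {k : ℝ → ℝ} (hk0 : ∀ z, 0 ≤ k z)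
    (hk1 : HasSum k 1) {x m v α : ℝ} (hsep : ∀ z ∈ Function.support k, z ≠ x → α ≤ |z - x|)
    (hm : |m - x| ≤ α / 2) (hv : HasSum (fun z => k z * (z - m) ^ 2) v) :
    (1 - k x) * (α / 2) ^ 2 ≤ v := by
  classical
  have hmass := (hk1.update x 0).mul_right ((α / 2) ^ 2)
  rw [zero_sub, neg_add_eq_sub] at hmass
  refine hasSum_le (fun z => ?_) hmass hv
  by_cases hzx : z = x
  · subst hzx
    simp only [Function.update_self, zero_mul]
    exact mul_nonneg (hk0 z) (sq_nonneg _)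
  rw [Function.update_of_ne hzx]
  by_cases hkz : k z = 0
  · simp [hkz]
  have hfar : α / 2 ≤ |z - m| := by
    have hzx_far := hsep z hkz hzx
    have htri := abs_sub_le z m x
    linarith
  have hα : 0 ≤ α / 2 := (abs_nonneg _).trans hm
  rw [← sq_abs (z - m)]
  exact mul_le_mul_of_nonneg_left (pow_le_pow_left₀ hα hfar 2) (hk0 z)

section Variance

variable {Ω : Type*} [MeasurableSpace Ω] {P : Measure Ω} [IsProbabilityMeasure P]

lemma variance_indicator_one {A : Set Ω} (hA : MeasurableSet A) :
    Var[A.indicator 1; P] = P.real A * (1 - P.real A) := by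
  have hsq : A.indicator (1 : Ω → ℝ) ^ 2 = A.indicator 1 := by
    ext ω
    by_cases hω : ω ∈ A <;> simp [hω]
  have hA2 : MemLp (A.indicator (1 : Ω → ℝ)) 2 P := (memLp_const 1).indicator hA
  rw [variance_eq_sub hA2, hsq, integral_indicator_one hA]
  ring

lemma abs_integral_sub_integral_le {X Y : Ω → ℝ} {δ : ℝ} (hX : Integrable X P)
    (hY : Integrable Y P) (hXY : ∀ᵐ ω ∂P, |X ω - Y ω| ≤ δ) : |P[X] - P[Y]| ≤ δ := by
  rw [← integral_sub hX hY]
  simpa using norm_integral_le_of_norm_le_const (μ := P) (f := fun ω => X ω - Y ω)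
    (hXY.mono fun ω h => by rwa [Real.norm_eq_abs])

lemma abs_variance_sub_variance_le {X Y : Ω → ℝ} {δ : ℝ} (hXm : AEStronglyMeasurable X P)
    (hYm : AEStronglyMeasurable Y P) (hX : ∀ᵐ ω ∂P, X ω ∈ Set.Icc 0 1)
    (hY : ∀ᵐ ω ∂P, Y ω ∈ Set.Icc 0 1) (hXY : ∀ᵐ ω ∂P, |X ω - Y ω| ≤ δ) :
    |Var[X; P] - Var[Y; P]| ≤ 4 * δ := by
  have memLp_of_Icc {Z : Ω → ℝ} (hZm : AEStronglyMeasurable Z P)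
      (hZ : ∀ᵐ ω ∂P, Z ω ∈ Set.Icc 0 1) : MemLp Z 2 P :=
    .of_bound hZm 1 <| hZ.mono fun ω h => by
      rw [Real.norm_eq_abs, abs_le]; constructor <;> linarith [h.1, h.2]
  have mean_mem {Z : Ω → ℝ} (hZm : AEStronglyMeasurable Z P)
      (hZ : ∀ᵐ ω ∂P, Z ω ∈ Set.Icc 0 1) : P[Z] ∈ Set.Icc (0 : ℝ) 1 :=
    (convex_Icc 0 1).integral_mem isClosed_Icc hZ ((memLp_of_Icc hZm hZ).integrable one_le_two)
  have hmean : |P[X] - P[Y]| ≤ δ :=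
    abs_integral_sub_integral_le ((memLp_of_Icc hXm hX).integrable one_le_two)
      ((memLp_of_Icc hYm hY).integrable one_le_two) hXY
  have hsq_mean : |P[X ^ 2] - P[Y ^ 2]| ≤ 2 * δ := by
    refine abs_integral_sub_integral_le ((memLp_of_Icc hXm hX).integrable_sq)
      ((memLp_of_Icc hYm hY).integrable_sq) ?_
    filter_upwards [hX, hY, hXY] with ω hXω hYω hXYω
    exact (abs_sq_sub_sq_le_two_mul_abs_sub hXω hYω).trans (by linarith)
  have hmean_sq : |P[X] ^ 2 - P[Y] ^ 2| ≤ 2 * δ :=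
    (abs_sq_sub_sq_le_two_mul_abs_sub (mean_mem hXm hX) (mean_mem hYm hY)).trans (by linarith)
  rw [variance_eq_sub (memLp_of_Icc hXm hX), variance_eq_sub (memLp_of_Icc hYm hY)]
  calc |P[X ^ 2] - P[X] ^ 2 - (P[Y ^ 2] - P[Y] ^ 2)|
      = |(P[X ^ 2] - P[Y ^ 2]) - (P[X] ^ 2 - P[Y] ^ 2)| := by congr 1; ring
    _ ≤ |P[X ^ 2] - P[Y ^ 2]| + |P[X] ^ 2 - P[Y] ^ 2| := abs_sub _ _
    _ ≤ 4 * δ := by linarith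

end Variance

theorem kernel_variance_uniform_limit_general
    {Ω : Type*} [MeasurableSpace Ω] (P : Measure Ω) [IsProbabilityMeasure P]
    (T : Set ℝ)
    (f : ℝ → ℝ) (hf0 : ∀ x, 0 ≤ f x)
    (S : ℝ → Set ℝ)
    (K : ℝ → ℝ → ℝ → ℝ)
    (hK0 : ∀ x ∈ T, ∀ h > (0:ℝ), ∀ z, 0 ≤ K x h z)
    (hKS : ∀ x ∈ T, ∀ h > (0:ℝ), ∀ z ∉ S x, K x h z = 0)
    (hK1 : ∀ x ∈ T, ∀ h > (0:ℝ), HasSum (K x h) 1)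
    (hKm : ∀ x h, Measurable (K x h))
    (α : ℝ) (hα : 0 < α)
    (hsep : ∀ x ∈ T, ∀ z ∈ (T ∪ S x) \ {x}, α ≤ |z - x|)
    (H : ℕ → ℝ) (hH : ∀ n, 0 < H n)
    (X1 : Ω → ℝ) (hX1m : Measurable X1)
    (hX1d : ∀ x : ℝ, P (X1 ⁻¹' {x}) = ENNReal.ofReal (f x))
    (EZ VZ : ℝ → ℝ → ℝ)
    (hVZ : ∀ x ∈ T, ∀ h > (0:ℝ), HasSum (fun z : ℝ => K x h z * (z - EZ x h) ^ 2) (VZ x h))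
    (hA1E : ∀ ε > (0:ℝ), ∃ N : ℕ, ∀ n ≥ N, ∀ x ∈ T, |EZ x (H n) - x| ≤ ε)
    (hA1V : ∀ ε > (0:ℝ), ∃ N : ℕ, ∀ n ≥ N, ∀ x ∈ T, VZ x (H n) ≤ ε)
    :
    ∀ ε > (0:ℝ), ∃ N : ℕ, ∀ n ≥ N, ∀ x ∈ T,
      |(∫ ω, (K x (H n) (X1 ω) - ∫ ω', K x (H n) (X1 ω') ∂P) ^ 2 ∂P) - f x * (1 - f x)| ≤ ε := by
  intro ε hε
  obtain ⟨N₁, hN₁⟩ := hA1E (α / 2) (by positivity)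
  obtain ⟨N₂, hN₂⟩ := hA1V ((α / 2) ^ 2 * (ε / 4)) (by positivity)
  refine ⟨max N₁ N₂, fun n hn x hx => ?_⟩
  have hk0 := hK0 x hx (H n) (hH n)
  have hk1 := hK1 x hx (H n) (hH n)
  have hmass : 1 - K x (H n) x ≤ ε / 4 := by
    refine le_of_mul_le_mul_right ?_ (by positivity : (0 : ℝ) < (α / 2) ^ 2)
    refine (one_sub_apply_mul_sq_le_of_hasSum_sq_sub hk0 hk1 (fun z hz hzx => ?_)
      (hN₁ n (le_of_max_le_left hn) x hx) (hVZ x hx (H n) (hH n))).trans ?_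
    · exact hsep x hx z ⟨.inr (by_contra fun hzS => hz (hKS x hx (H n) (hH n) z hzS)), hzx⟩
    · linarith [hN₂ n (le_of_max_le_right hn) x hx]
  have hk_Icc (y : ℝ) : K x (H n) y ∈ Set.Icc 0 1 := ⟨hk0 y, le_hasSum hk1 y fun j _ => hk0 j⟩
  have hind_Icc (y : ℝ) : ({x} : Set ℝ).indicator 1 y ∈ Set.Icc (0 : ℝ) 1 := by
    by_cases hy : y = x <;> simp [hy]
  have hvar_ind : Var[fun ω => ({x} : Set ℝ).indicator 1 (X1 ω); P] = f x * (1 - f x) := by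
    simp_rw [← Set.indicator_comp_right, Pi.one_comp]
    rw [variance_indicator_one (hX1m (measurableSet_singleton x)), measureReal_def, hX1d,
      ENNReal.toReal_ofReal (hf0 x)]
  rw [← variance_eq_integral (X := fun ω => K x (H n) (X1 ω))
    ((hKm x (H n)).comp hX1m).aemeasurable, ← hvar_ind]
  calc _ ≤ 4 * (ε / 4) :=
        abs_variance_sub_variance_le ((hKm x (H n)).comp hX1m).aestronglyMeasurable
          ((measurable_one.indicator (measurableSet_singleton x)).comp hX1m).aestronglyMeasurable
          (ae_of_all _ fun ω => hk_Icc (X1 ω)) (ae_of_all _ fun ω => hind_Icc (X1 ω))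
          (ae_of_all _ fun ω => (abs_sub_indicator_singleton_le hk0 hk1 x (X1 ω)).trans hmass)
    _ = ε := by ring

theorem kernel_variance_uniform_limit
    {Ω : Type*} [MeasurableSpace Ω] (P : Measure Ω) [IsProbabilityMeasure P]
    (T : Set ℝ) (hTc : T.Countable)
    (f : ℝ → ℝ) (hf0 : ∀ x, 0 ≤ f x) (hfT : ∀ x ∉ T, f x = 0) (hf1 : HasSum f 1)
    (S : ℝ → Set ℝ) (hSc : ∀ x ∈ T, (S x).Countable)
    (K : ℝ → ℝ → ℝ → ℝ)
    (hK0 : ∀ x ∈ T, ∀ h > (0:ℝ), ∀ z, 0 ≤ K x h z)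
    (hKS : ∀ x ∈ T, ∀ h > (0:ℝ), ∀ z ∉ S x, K x h z = 0)
    (hK1 : ∀ x ∈ T, ∀ h > (0:ℝ), HasSum (K x h) 1)
    (hKm : ∀ x h, Measurable (K x h))
    (hxS : ∀ x ∈ T, x ∈ S x)
    (α : ℝ) (hα : 0 < α)
    (hsep : ∀ x ∈ T, ∀ z ∈ (T ∪ S x) \ {x}, α ≤ |z - x|)
    (H : ℕ → ℝ) (hH : ∀ n, 0 < H n) (hH0 : Tendsto H atTop (𝓝 0))
    (X1 : Ω → ℝ) (hX1m : Measurable X1)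
    (hX1d : ∀ x : ℝ, P (X1 ⁻¹' {x}) = ENNReal.ofReal (f x))
    (EZ VZ : ℝ → ℝ → ℝ)
    (hEZ : ∀ x ∈ T, ∀ h > (0:ℝ), HasSum (fun z : ℝ => K x h z * z) (EZ x h))
    (hVZ : ∀ x ∈ T, ∀ h > (0:ℝ), HasSum (fun z : ℝ => K x h z * (z - EZ x h) ^ 2) (VZ x h))
    (hA1E : ∀ ε > (0:ℝ), ∃ N : ℕ, ∀ n ≥ N, ∀ x ∈ T, |EZ x (H n) - x| ≤ ε)
    (hA1V : ∀ ε > (0:ℝ), ∃ N : ℕ, ∀ n ≥ N, ∀ x ∈ T, VZ x (H n) ≤ ε)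
    :
    ∀ ε > (0:ℝ), ∃ N : ℕ, ∀ n ≥ N, ∀ x ∈ T,
      |(∫ ω, (K x (H n) (X1 ω) - ∫ ω', K x (H n) (X1 ω') ∂P) ^ 2 ∂P) - f x * (1 - f x)| ≤ ε :=
  kernel_variance_uniform_limit_general P T f hf0 S K hK0 hKS hK1 hKm α hα hsep H hH X1 hX1m hX1d EZ
    VZ hVZ hA1E hA1V
end

section
/- Under Assumptions (A1), sup over pairs (x, y) ∈ T² with x ≠ y of | Cov(K_{x,h_n}(X_1), K_{y,h_n}(X_1)) + f(x) f(y) | → 0 as n → ∞; that is, the covariance of the kernels at two distinct targets converges, uniformly on {(x,y) ∈ T² : x ≠ y}, to −f(x) f(y). -/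
/-!
For small `h` the kernel `K_{x,h}` is uniformly close to the point mass at `x`: its mean is
within `α / 2` of `x` while all its mass off `x` sits at distance `≥ α` from `x`, so by Chebyshev
that mass is at most `4 Var(Z_{x,h}) / α²`. Hence `K_{x,h}(X₁)` is uniformly close to
`1{X₁ = x}`, and covariance is stable under uniformly small perturbations of bounded variables.
For `x ≠ y` the events `{X₁ = x}` and `{X₁ = y}` are disjoint, so their indicators have
covariance `-f(x) f(y)`.
-/

open MeasureTheory ProbabilityTheory Filter Topology

section DiscreteMass

variable {G : ℝ → ℝ} {m V x α : ℝ}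

/-- Chebyshev: the mass off `x` sits at distance `≥ α / 2` from `m`. -/
lemma sq_half_mul_one_sub_le_of_hasSum_mul_sq_sub (hG0 : ∀ z, 0 ≤ G z) (hG1 : HasSum G 1)
    (hV : HasSum (fun z => G z * (z - m) ^ 2) V) (hm : |m - x| ≤ α / 2)
    (hsupp : ∀ z ≠ x, G z ≠ 0 → α ≤ |z - x|) :
    (α / 2) ^ 2 * (1 - G x) ≤ V := by
  classical
  have hoff : HasSum (Function.update G x 0) (1 - G x) := by
    simpa [sub_eq_neg_add] using hG1.update x 0
  refine hasSum_le (fun z => ?_) (hoff.mul_left _) hV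
  rcases eq_or_ne z x with rfl | hz
  · simpa using mul_nonneg (hG0 z) (sq_nonneg _)
  rw [Function.update_of_ne hz, mul_comm]
  rcases eq_or_ne (G z) 0 with hGz | hGz
  · simp [hGz]
  have hfar : α / 2 ≤ |z - m| := by
    have := abs_sub_le z m x
    linarith [hsupp z hz hGz, abs_sub_comm m x]
  have hα : 0 ≤ α / 2 := (abs_nonneg _).trans hm
  exact mul_le_mul_of_nonneg_left (by simpa using pow_le_pow_left₀ hα hfar 2) (hG0 z)

lemma abs_sub_indicator_singleton_le_one_sub {ι : Type*} {G : ι → ℝ} (hG0 : ∀ z, 0 ≤ G z)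
    (hG1 : HasSum G 1) (x z : ι) : |G z - ({x} : Set ι).indicator 1 z| ≤ 1 - G x := by
  classical
  rcases eq_or_ne z x with rfl | hz
  · rw [Set.indicator_of_mem (Set.mem_singleton z), Pi.one_apply, abs_sub_comm,
      abs_of_nonneg (sub_nonneg.mpr (le_hasSum hG1 z fun j _ => hG0 j))]
  · have hpair := sum_le_hasSum {z, x} (fun j _ => hG0 j) hG1
    rw [Finset.sum_pair hz] at hpair
    rw [Set.indicator_of_notMem (Set.notMem_singleton_iff.mpr hz), sub_zero, abs_of_nonneg (hG0 z)]
    linarith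

end DiscreteMass

namespace ProbabilityTheory

variable {Ω : Type*} [MeasurableSpace Ω] {μ : Measure Ω} [IsProbabilityMeasure μ] {X Y : Ω → ℝ}

lemma memLp_of_mem_Icc {a b : ℝ} (hX : AEStronglyMeasurable X μ) (hXab : ∀ ω, X ω ∈ Set.Icc a b)
    (p : ENNReal) : MemLp X p μ :=
  .of_bound hX (max |a| |b|) (.of_forall fun ω => abs_le_max_abs_abs (hXab ω).1 (hXab ω).2)

lemma integral_mem_Icc {a b : ℝ} (hX : AEStronglyMeasurable X μ) (hXab : ∀ ω, X ω ∈ Set.Icc a b) :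
    μ[X] ∈ Set.Icc a b := by
  have hXi : Integrable X μ := (memLp_of_mem_Icc hX hXab 1).integrable le_rfl
  constructor
  · simpa using integral_mono (integrable_const a) hXi fun ω => (hXab ω).1
  · simpa using integral_mono hXi (integrable_const b) fun ω => (hXab ω).2

lemma abs_sub_integral_le_of_mem_Icc {a b : ℝ} (hX : AEStronglyMeasurable X μ)
    (hXab : ∀ ω, X ω ∈ Set.Icc a b) (ω : Ω) : |X ω - μ[X]| ≤ b - a :=
  abs_sub_le_of_le_of_le (hXab ω).1 (hXab ω).2 (integral_mem_Icc hX hXab).1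
    (integral_mem_Icc hX hXab).2

lemma abs_covariance_le_of_mem_Icc {a b c d : ℝ} (hX : AEStronglyMeasurable X μ)
    (hY : AEStronglyMeasurable Y μ) (hXab : ∀ ω, X ω ∈ Set.Icc a b)
    (hYcd : ∀ ω, Y ω ∈ Set.Icc c d) : |cov[X, Y; μ]| ≤ (b - a) * (d - c) := by
  have hbound : ∀ ω, ‖(X ω - μ[X]) * (Y ω - μ[Y])‖ ≤ (b - a) * (d - c) := fun ω => by
    have hXω := abs_sub_integral_le_of_mem_Icc hX hXab ω
    rw [Real.norm_eq_abs, abs_mul]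
    exact mul_le_mul hXω (abs_sub_integral_le_of_mem_Icc hY hYcd ω) (abs_nonneg _)
      ((abs_nonneg _).trans hXω)
  simpa [covariance] using norm_integral_le_of_norm_le_const (μ := μ) (.of_forall hbound)

lemma abs_covariance_sub_covariance_le {X₀ Y₀ : Ω → ℝ} {δ δ' : ℝ}
    (hX : AEStronglyMeasurable X μ) (hX₀ : AEStronglyMeasurable X₀ μ)
    (hY : AEStronglyMeasurable Y μ) (hY₀ : AEStronglyMeasurable Y₀ μ)
    (hX₀01 : ∀ ω, X₀ ω ∈ Set.Icc 0 1) (hY01 : ∀ ω, Y ω ∈ Set.Icc 0 1)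
    (hXX₀ : ∀ ω, |X ω - X₀ ω| ≤ δ) (hYY₀ : ∀ ω, |Y ω - Y₀ ω| ≤ δ') :
    |cov[X, Y; μ] - cov[X₀, Y₀; μ]| ≤ 2 * δ + 2 * δ' := by
  have hXX₀' : ∀ ω, (X - X₀) ω ∈ Set.Icc (-δ) δ := fun ω => abs_le.mp (hXX₀ ω)
  have hYY₀' : ∀ ω, (Y - Y₀) ω ∈ Set.Icc (-δ') δ' := fun ω => abs_le.mp (hYY₀ ω)
  have hXI : ∀ ω, X ω ∈ Set.Icc (-δ) (1 + δ) := fun ω => by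
    obtain ⟨h₁, h₂⟩ := abs_le.mp (hXX₀ ω)
    exact ⟨by linarith [(hX₀01 ω).1], by linarith [(hX₀01 ω).2]⟩
  have hY₀I : ∀ ω, Y₀ ω ∈ Set.Icc (-δ') (1 + δ') := fun ω => by
    obtain ⟨h₁, h₂⟩ := abs_le.mp (hYY₀ ω)
    exact ⟨by linarith [(hY01 ω).1], by linarith [(hY01 ω).2]⟩
  have hsplit : cov[X, Y; μ] - cov[X₀, Y₀; μ] = cov[X - X₀, Y; μ] + cov[X₀, Y - Y₀; μ] := by
    rw [covariance_sub_left (memLp_of_mem_Icc hX hXI 2) (memLp_of_mem_Icc hX₀ hX₀01 2)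
        (memLp_of_mem_Icc hY hY01 2),
      covariance_sub_right (memLp_of_mem_Icc hX₀ hX₀01 2) (memLp_of_mem_Icc hY hY01 2)
        (memLp_of_mem_Icc hY₀ hY₀I 2)]
    ring
  have h₁ := abs_covariance_le_of_mem_Icc (hX.sub hX₀) hY hXX₀' hY01
  have h₂ := abs_covariance_le_of_mem_Icc hX₀ (hY.sub hY₀) hX₀01 hYY₀'
  rw [hsplit]
  linarith [abs_add_le (cov[X - X₀, Y; μ]) (cov[X₀, Y - Y₀; μ])]

lemma covariance_indicator_one_of_disjoint {A B : Set Ω} (hA : MeasurableSet A)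
    (hB : MeasurableSet B) (hAB : Disjoint A B) :
    cov[A.indicator 1, B.indicator 1; μ] = -(μ.real A * μ.real B) := by
  have memLp_indicator {C : Set Ω} (hC : MeasurableSet C) : MemLp (C.indicator (1 : Ω → ℝ)) 2 μ :=
    memLp_indicator_const 2 hC (1 : ℝ) (.inr (measure_ne_top μ C))
  rw [covariance_eq_sub (memLp_indicator hA) (memLp_indicator hB), ← Set.inter_indicator_one,
    hAB.inter_eq]
  simp [integral_indicator_one hA, integral_indicator_one hB]

lemma abs_covariance_comp_add_measureReal_mul_le {Z : Ω → ℝ} (hZ : Measurable Z)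
    {g₁ g₂ : ℝ → ℝ} (hg₁ : Measurable g₁) (hg₂ : Measurable g₂) {x y δ₁ δ₂ : ℝ} (hxy : x ≠ y)
    (hg₂01 : ∀ z, g₂ z ∈ Set.Icc 0 1)
    (hg₁x : ∀ z, |g₁ z - ({x} : Set ℝ).indicator 1 z| ≤ δ₁)
    (hg₂y : ∀ z, |g₂ z - ({y} : Set ℝ).indicator 1 z| ≤ δ₂) :
    |cov[g₁ ∘ Z, g₂ ∘ Z; μ] + μ.real (Z ⁻¹' {x}) * μ.real (Z ⁻¹' {y})| ≤ 2 * δ₁ + 2 * δ₂ := by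
  have hmeas (t : ℝ) : MeasurableSet (Z ⁻¹' {t}) := hZ (measurableSet_singleton t)
  have hcov := abs_covariance_sub_covariance_le (μ := μ) (hg₁.comp hZ).aestronglyMeasurable
    (measurable_one.indicator (hmeas x)).aestronglyMeasurable (hg₂.comp hZ).aestronglyMeasurable
    (measurable_one.indicator (hmeas y)).aestronglyMeasurable
    (fun ω => by by_cases h : ω ∈ Z ⁻¹' {x} <;> simp [h]) (fun ω => hg₂01 (Z ω))
    (fun ω => hg₁x (Z ω)) (fun ω => hg₂y (Z ω))
  rwa [covariance_indicator_one_of_disjoint (hmeas x) (hmeas y)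
    ((Set.disjoint_singleton.mpr hxy).preimage Z), sub_neg_eq_add] at hcov

end ProbabilityTheory

theorem kernel_covariance_uniform_limit_general
    {Ω : Type*} [MeasurableSpace Ω] (P : Measure Ω) [IsProbabilityMeasure P]
    (T : Set ℝ)
    (f : ℝ → ℝ) (hf0 : ∀ x, 0 ≤ f x)
    (S : ℝ → Set ℝ)
    (K : ℝ → ℝ → ℝ → ℝ)
    (hK0 : ∀ x ∈ T, ∀ h > (0:ℝ), ∀ z, 0 ≤ K x h z)
    (hKS : ∀ x ∈ T, ∀ h > (0:ℝ), ∀ z ∉ S x, K x h z = 0)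
    (hK1 : ∀ x ∈ T, ∀ h > (0:ℝ), HasSum (K x h) 1)
    (hKm : ∀ x h, Measurable (K x h))
    (α : ℝ) (hα : 0 < α)
    (hsep : ∀ x ∈ T, ∀ z ∈ (T ∪ S x) \ {x}, α ≤ |z - x|)
    (H : ℕ → ℝ) (hH : ∀ n, 0 < H n)
    (X1 : Ω → ℝ) (hX1m : Measurable X1)
    (hX1d : ∀ x : ℝ, P (X1 ⁻¹' {x}) = ENNReal.ofReal (f x))
    (EZ VZ : ℝ → ℝ → ℝ)
    (hVZ : ∀ x ∈ T, ∀ h > (0:ℝ), HasSum (fun z : ℝ => K x h z * (z - EZ x h) ^ 2) (VZ x h))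
    (hA1E : ∀ ε > (0:ℝ), ∃ N : ℕ, ∀ n ≥ N, ∀ x ∈ T, |EZ x (H n) - x| ≤ ε)
    (hA1V : ∀ ε > (0:ℝ), ∃ N : ℕ, ∀ n ≥ N, ∀ x ∈ T, VZ x (H n) ≤ ε)
    :
    ∀ ε > (0:ℝ), ∃ N : ℕ, ∀ n ≥ N, ∀ x ∈ T, ∀ y ∈ T, x ≠ y →
      |(∫ ω, (K x (H n) (X1 ω) - ∫ ω', K x (H n) (X1 ω') ∂P) *
             (K y (H n) (X1 ω) - ∫ ω', K y (H n) (X1 ω') ∂P) ∂P) + f x * f y| ≤ ε := by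
  intro ε hε
  obtain ⟨N₁, hN₁⟩ := hA1E (α / 2) (by positivity)
  obtain ⟨N₂, hN₂⟩ := hA1V (ε * α ^ 2 / 16) (by positivity)
  refine ⟨max N₁ N₂, fun n hn x hx y hy hxy => ?_⟩
  have hK0n (t : ℝ) (ht : t ∈ T) : ∀ z, 0 ≤ K t (H n) z := hK0 t ht _ (hH n)
  have hK1n (t : ℝ) (ht : t ∈ T) : HasSum (K t (H n)) 1 := hK1 t ht _ (hH n)
  have hmass : ∀ t ∈ T, 1 - K t (H n) t ≤ ε / 4 := fun t ht => by
    have hcheb := sq_half_mul_one_sub_le_of_hasSum_mul_sq_sub (hK0n t ht) (hK1n t ht)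
      (hVZ t ht _ (hH n)) (hN₁ n (le_of_max_le_left hn) t ht)
      fun z hz hKz => hsep t ht z ⟨.inr (not_imp_comm.mp (hKS t ht _ (hH n) z) hKz), hz⟩
    have hVZ_le := hN₂ n (le_of_max_le_right hn) t ht
    refine le_of_mul_le_mul_left ?_ (by positivity : 0 < (α / 2) ^ 2)
    linarith
  have hclose : ∀ t ∈ T, ∀ z, |K t (H n) z - ({t} : Set ℝ).indicator 1 z| ≤ ε / 4 :=
    fun t ht z => (abs_sub_indicator_singleton_le_one_sub (hK0n t ht) (hK1n t ht) t z).trans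
      (hmass t ht)
  have hprob (t : ℝ) : P.real (X1 ⁻¹' {t}) = f t := by
    rw [measureReal_def, hX1d, ENNReal.toReal_ofReal (hf0 t)]
  have hcov := abs_covariance_comp_add_measureReal_mul_le (μ := P) hX1m (hKm x _) (hKm y _) hxy
    (fun z => ⟨hK0n y hy z, le_hasSum (hK1n y hy) z fun j _ => hK0n y hy j⟩)
    (hclose x hx) (hclose y hy)
  rw [hprob, hprob] at hcov
  change |cov[K x (H n) ∘ X1, K y (H n) ∘ X1; P] + f x * f y| ≤ ε
  linarith

theorem kernel_covariance_uniform_limit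
    {Ω : Type*} [MeasurableSpace Ω] (P : Measure Ω) [IsProbabilityMeasure P]
    (T : Set ℝ) (hTc : T.Countable)
    (f : ℝ → ℝ) (hf0 : ∀ x, 0 ≤ f x) (hfT : ∀ x ∉ T, f x = 0) (hf1 : HasSum f 1)
    (S : ℝ → Set ℝ) (hSc : ∀ x ∈ T, (S x).Countable)
    (K : ℝ → ℝ → ℝ → ℝ)
    (hK0 : ∀ x ∈ T, ∀ h > (0:ℝ), ∀ z, 0 ≤ K x h z)
    (hKS : ∀ x ∈ T, ∀ h > (0:ℝ), ∀ z ∉ S x, K x h z = 0)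
    (hK1 : ∀ x ∈ T, ∀ h > (0:ℝ), HasSum (K x h) 1)
    (hKm : ∀ x h, Measurable (K x h))
    (hxS : ∀ x ∈ T, x ∈ S x)
    (α : ℝ) (hα : 0 < α)
    (hsep : ∀ x ∈ T, ∀ z ∈ (T ∪ S x) \ {x}, α ≤ |z - x|)
    (H : ℕ → ℝ) (hH : ∀ n, 0 < H n) (hH0 : Tendsto H atTop (𝓝 0))
    (X1 : Ω → ℝ) (hX1m : Measurable X1)
    (hX1d : ∀ x : ℝ, P (X1 ⁻¹' {x}) = ENNReal.ofReal (f x))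
    (EZ VZ : ℝ → ℝ → ℝ)
    (hEZ : ∀ x ∈ T, ∀ h > (0:ℝ), HasSum (fun z : ℝ => K x h z * z) (EZ x h))
    (hVZ : ∀ x ∈ T, ∀ h > (0:ℝ), HasSum (fun z : ℝ => K x h z * (z - EZ x h) ^ 2) (VZ x h))
    (hA1E : ∀ ε > (0:ℝ), ∃ N : ℕ, ∀ n ≥ N, ∀ x ∈ T, |EZ x (H n) - x| ≤ ε)
    (hA1V : ∀ ε > (0:ℝ), ∃ N : ℕ, ∀ n ≥ N, ∀ x ∈ T, VZ x (H n) ≤ ε)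
    :
    ∀ ε > (0:ℝ), ∃ N : ℕ, ∀ n ≥ N, ∀ x ∈ T, ∀ y ∈ T, x ≠ y →
      |(∫ ω, (K x (H n) (X1 ω) - ∫ ω', K x (H n) (X1 ω') ∂P) *
             (K y (H n) (X1 ω) - ∫ ω', K y (H n) (X1 ω') ∂P) ∂P) + f x * f y| ≤ ε :=
  kernel_covariance_uniform_limit_general P T f hf0 S K hK0 hKS hK1 hKm α hα hsep H hH X1 hX1m hX1d
    EZ VZ hVZ hA1E hA1V
end

section
/- Under Assumptions (A1), the variance of the normalizing variable C_n converges to 0; moreover there exists N ∈ ℕ such that Var(C_n) ≤ 3/n for all n ≥ N. -/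
open MeasureTheory ProbabilityTheory Filter Topology

/-!
Write `g z = ∑_{y ∈ T} K_{y,h}(z)`, so that `C_n = n⁻¹ ∑ᵢ g(Xᵢ)` is an average of independent
variables with values in `[0, sup g]`, whence `Var C_n ≤ (sup g)² / (4n)` by Popoviciu's
inequality. It remains to bound `g` uniformly. If `y ≠ z` and `K_{y,h}(z) ≠ 0` then `|z - y| ≥ α`,
and once `|E Z_{y,h} - y| ≤ α / 2`, Chebyshev's inequality gives
`K_{y,h}(z) ≤ 4 Var Z_{y,h} / (z - y)²`. As the centres `y ∈ T` are `α`-separated,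
`y ↦ ⌊(y - z) / α⌋` is injective on `T`, which compares `∑_{y ≠ z} (z - y)⁻²` with
`(4 / α²) ∑_{j ∈ ℤ} j⁻²`. So `g ≤ 1 + O(sup_y Var Z_{y,h})`, which is at most `2` for large `n`
by (A1), and then `Var C_n ≤ 1 / n`.
-/

section SeparatedSets

variable {T : Set ℝ} {α : ℝ}

lemma injOn_floor_div_of_separated (hα : 0 < α) (hT : T.Pairwise fun a b => α ≤ |a - b|)
    (s : ℝ) : T.InjOn fun y => ⌊(y - s) / α⌋ := by
  intro a ha b hb hab
  by_contra hne
  have hclose := Int.abs_sub_lt_one_of_floor_eq_floor hab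
  rw [← sub_div, sub_sub_sub_cancel_right, abs_div, abs_of_pos hα, div_lt_one hα] at hclose
  exact (hT ha hb hne).not_gt hclose

lemma inv_sq_le_of_le_abs (hα : 0 < α) {t : ℝ} (ht : α ≤ |t|) :
    (t ^ 2)⁻¹ ≤ 4 / α ^ 2 * (1 / (⌊t / α⌋ : ℝ) ^ 2) := by
  set u := t / α
  have htu : t = α * u := by simp only [u]; field_simp
  have hu : 1 ≤ |u| := by rwa [abs_div, abs_of_pos hα, le_div_iff₀ hα, one_mul]
  have hk := Int.floor_le u
  have hk' := Int.lt_floor_add_one u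
  have hfloor0 : (⌊u⌋ : ℝ) ≠ 0 := by
    intro h0
    rw [h0] at hk hk'
    cases abs_cases u <;> linarith
  have hku : (⌊u⌋ : ℝ) ^ 2 ≤ 4 * u ^ 2 := by
    cases abs_cases u <;> nlinarith
  have hu0 : u ≠ 0 := by rintro h0; norm_num [h0] at hu
  rw [htu, mul_pow, div_mul_div_comm, mul_one, inv_eq_one_div,
    div_le_div_iff₀ (by positivity) (by positivity)]
  nlinarith [sq_nonneg α]

lemma summable_and_tsum_le_of_le_floor (hα : 0 < α)
    (hT : T.Pairwise fun a b => α ≤ |a - b|) (s : ℝ) {u : ℝ → ℝ} (hu0 : ∀ y ∈ T, 0 ≤ u y)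
    {c : ℤ → ℝ} {M : ℝ} (hc0 : ∀ j, 0 ≤ c j) (hc : HasSum c M)
    (hle : ∀ y ∈ T, u y ≤ c ⌊(y - s) / α⌋) :
    Summable (fun y : T => u y) ∧ ∑' y : T, u y ≤ M := by
  have he : Function.Injective fun y : T => ⌊((y : ℝ) - s) / α⌋ :=
    (injOn_floor_div_of_separated hα hT s).injective
  have hsum : Summable fun y : T => u y :=
    .of_nonneg_of_le (fun y => hu0 y y.2) (fun y => hle y y.2) (hc.summable.comp_injective he)
  refine ⟨hsum, hc.tsum_eq ▸ ?_⟩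
  exact hsum.tsum_le_tsum_of_inj _ he (fun j _ => hc0 j) (fun y => hle y y.2) hc.summable

end SeparatedSets

lemma le_four_mul_div_sq_of_hasSum {p : ℝ → ℝ} {m V y s : ℝ} (hp : ∀ z, 0 ≤ p z)
    (hV : HasSum (fun z => p z * (z - m) ^ 2) V) (hm : 2 * |m - y| ≤ |s - y|) (hsy : s ≠ y) :
    p s ≤ 4 * V / (s - y) ^ 2 := by
  have hps : p s * (s - m) ^ 2 ≤ V := le_hasSum hV s fun z _ => mul_nonneg (hp z) (sq_nonneg _)
  have hsq : (s - y) ^ 2 ≤ 4 * (s - m) ^ 2 := by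
    have := abs_sub_le s m y
    rw [← sq_abs (s - y), ← sq_abs (s - m)]
    nlinarith [abs_nonneg (s - y), abs_nonneg (m - y)]
  rw [le_div_iff₀ (by positivity [sub_ne_zero.2 hsy])]
  nlinarith [hp s]

section KernelMass

variable {T : Set ℝ} {S : ℝ → Set ℝ} {α ε : ℝ} {k : ℝ → ℝ → ℝ} {m V : ℝ → ℝ}

-- At `j = 0` Lean's `1 / j ^ 2` is `0`, so the indicator has to carry the diagonal term `y = s`.
lemma kernel_le_of_separated (hα : 0 < α)
    (hsep : ∀ x ∈ T, ∀ z ∈ (T ∪ S x) \ {x}, α ≤ |z - x|) (hk0 : ∀ y ∈ T, ∀ z, 0 ≤ k y z)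
    (hkS : ∀ y ∈ T, ∀ z ∉ S y, k y z = 0) (hk1 : ∀ y ∈ T, HasSum (k y) 1)
    (hV : ∀ y ∈ T, HasSum (fun z => k y z * (z - m y) ^ 2) (V y))
    (hm : ∀ y ∈ T, |m y - y| ≤ α / 2) (hVε : ∀ y ∈ T, V y ≤ ε) (hε : 0 ≤ ε) {y : ℝ} (hy : y ∈ T)
    (s : ℝ) :
    k y s ≤ (if ⌊(y - s) / α⌋ = 0 then 1 else 0) +
      16 * ε / α ^ 2 * (1 / (⌊(y - s) / α⌋ : ℝ) ^ 2) := by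
  have htail : 0 ≤ 16 * ε / α ^ 2 * (1 / (⌊(y - s) / α⌋ : ℝ) ^ 2) := by positivity
  by_cases hys : y = s
  · subst hys
    simpa using le_hasSum (hk1 y hy) y fun z _ => hk0 y hy z
  by_cases hsS : s ∈ S y
  · have hsy : α ≤ |s - y| := hsep y hy s ⟨Or.inr hsS, Ne.symm hys⟩
    have hcheb := le_four_mul_div_sq_of_hasSum (hk0 y hy) (hV y hy) (by linarith [hm y hy])
      (Ne.symm hys)
    have hinv := inv_sq_le_of_le_abs hα (t := y - s) (by rwa [abs_sub_comm])
    have hite : (0 : ℝ) ≤ if ⌊(y - s) / α⌋ = 0 then 1 else 0 := by split_ifs <;> norm_num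
    calc k y s ≤ 4 * V y / (s - y) ^ 2 := hcheb
      _ ≤ 4 * ε * ((y - s) ^ 2)⁻¹ := by
        rw [div_eq_mul_inv, ← neg_sub, neg_sq]
        gcongr
        exact hVε y hy
      _ ≤ 4 * ε * (4 / α ^ 2 * (1 / (⌊(y - s) / α⌋ : ℝ) ^ 2)) := by gcongr
      _ = 16 * ε / α ^ 2 * (1 / (⌊(y - s) / α⌋ : ℝ) ^ 2) := by ring
      _ ≤ _ := le_add_of_nonneg_left hite
  · rw [hkS y hy s hsS]
    split_ifs <;> linarith

lemma summable_kernel_and_tsum_le (hα : 0 < α)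
    (hsep : ∀ x ∈ T, ∀ z ∈ (T ∪ S x) \ {x}, α ≤ |z - x|) (hk0 : ∀ y ∈ T, ∀ z, 0 ≤ k y z)
    (hkS : ∀ y ∈ T, ∀ z ∉ S y, k y z = 0) (hk1 : ∀ y ∈ T, HasSum (k y) 1)
    (hV : ∀ y ∈ T, HasSum (fun z => k y z * (z - m y) ^ 2) (V y))
    (hm : ∀ y ∈ T, |m y - y| ≤ α / 2) (hVε : ∀ y ∈ T, V y ≤ ε) (hε : 0 ≤ ε) (s : ℝ) :
    Summable (fun y : T => k y s) ∧
      ∑' y : T, k y s ≤ 1 + 16 * ε / α ^ 2 * ∑' j : ℤ, 1 / (j : ℝ) ^ 2 := by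
  have hT : T.Pairwise fun a b => α ≤ |a - b| := fun a ha b hb hab =>
    hsep b hb a ⟨Or.inl ha, hab⟩
  have hc : HasSum (fun j : ℤ => (if j = 0 then 1 else 0) + 16 * ε / α ^ 2 * (1 / (j : ℝ) ^ 2))
      (1 + 16 * ε / α ^ 2 * ∑' j : ℤ, 1 / (j : ℝ) ^ 2) :=
    (hasSum_ite_eq 0 1).add ((Real.summable_one_div_int_pow.2 one_lt_two).hasSum.mul_left _)
  refine summable_and_tsum_le_of_le_floor hα hT s (fun y hy => hk0 y hy s) (fun j => ?_) hc
    (fun y hy => kernel_le_of_separated hα hsep hk0 hkS hk1 hV hm hVε hε hy s)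
  positivity

end KernelMass

lemma variance_average_le_of_mem_Icc {Ω ι : Type*} [MeasurableSpace Ω] {P : Measure Ω}
    [IsProbabilityMeasure P] {Y : ι → Ω → ℝ} {s : Finset ι} {a b : ℝ}
    (hYm : ∀ i ∈ s, AEMeasurable (Y i) P) (hY : ∀ i ∈ s, ∀ᵐ ω ∂P, Y i ω ∈ Set.Icc a b)
    (hind : Set.Pairwise ↑s fun i j => Y i ⟂ᵢ[P] Y j) :
    variance ((s.card : ℝ)⁻¹ • ∑ i ∈ s, Y i) P ≤ ((b - a) / 2) ^ 2 / s.card := by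
  have hsum : ∑ i ∈ s, variance (Y i) P ≤ s.card * ((b - a) / 2) ^ 2 := by
    simpa using Finset.sum_le_card_nsmul s _ _ fun i hi =>
      variance_le_sq_of_bounded (hY i hi) (hYm i hi)
  rw [variance_smul, IndepFun.variance_sum
    (fun i hi => memLp_of_bounded (hY i hi) (hYm i hi).aestronglyMeasurable 2) hind]
  rcases eq_or_ne s.card 0 with hs | hs
  · simp [hs]
  · calc ((s.card : ℝ)⁻¹) ^ 2 * ∑ i ∈ s, variance (Y i) P
        ≤ ((s.card : ℝ)⁻¹) ^ 2 * (s.card * ((b - a) / 2) ^ 2) := by gcongr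
      _ = ((b - a) / 2) ^ 2 / s.card := by field_simp

lemma integral_sq_sub_integral_tsum_average_le {Ω ι : Type*} [MeasurableSpace Ω]
    {P : Measure Ω} [IsProbabilityMeasure P] [Countable ι] {X : ℕ → Ω → ℝ}
    (hXm : ∀ i, Measurable (X i)) (hXind : iIndepFun X P) {k : ι → ℝ → ℝ}
    (hkm : ∀ y, Measurable (k y)) (hk0 : ∀ y z, 0 ≤ k y z) (hks : ∀ z, Summable fun y => k y z)
    {b : ℝ} (hb : ∀ z, ∑' y, k y z ≤ b) (n : ℕ) :
    ∫ ω, ((∑' y, (n : ℝ)⁻¹ * ∑ i ∈ Finset.range n, k y (X i ω)) -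
        ∫ ω', (∑' y, (n : ℝ)⁻¹ * ∑ i ∈ Finset.range n, k y (X i ω')) ∂P) ^ 2 ∂P ≤
      (b / 2) ^ 2 / n := by
  set g : ℝ → ℝ := fun z => ∑' y, k y z
  have hgm : Measurable g := Measurable.tsum hkm
  have hC : ∀ ω, ∑' y, (n : ℝ)⁻¹ * ∑ i ∈ Finset.range n, k y (X i ω) =
      ((n : ℝ)⁻¹ • ∑ i ∈ Finset.range n, g ∘ X i) ω := by
    intro ω
    simp only [tsum_mul_left, Pi.smul_apply, Finset.sum_apply, Function.comp_apply, smul_eq_mul,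
      g, Summable.tsum_finsetSum fun i _ => hks (X i ω)]
  simp only [hC]
  rw [← variance_eq_integral (by fun_prop)]
  have := variance_average_le_of_mem_Icc (s := Finset.range n) (a := 0) (b := b)
    (fun i _ => (hgm.comp (hXm i)).aemeasurable)
    (fun i _ => .of_forall fun ω => ⟨tsum_nonneg fun y => hk0 y _, hb _⟩)
    (fun i _ j _ hij => (hXind.indepFun hij).comp hgm hgm)
  simpa using this

theorem variance_of_normalizing_constant_general
    {Ω : Type*} [MeasurableSpace Ω] (P : Measure Ω) [IsProbabilityMeasure P]
    (T : Set ℝ) (hTc : T.Countable)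
    (S : ℝ → Set ℝ)
    (K : ℝ → ℝ → ℝ → ℝ)
    (hK0 : ∀ x ∈ T, ∀ h > (0:ℝ), ∀ z, 0 ≤ K x h z)
    (hKS : ∀ x ∈ T, ∀ h > (0:ℝ), ∀ z ∉ S x, K x h z = 0)
    (hK1 : ∀ x ∈ T, ∀ h > (0:ℝ), HasSum (K x h) 1)
    (hKm : ∀ x h, Measurable (K x h))
    (α : ℝ) (hα : 0 < α)
    (hsep : ∀ x ∈ T, ∀ z ∈ (T ∪ S x) \ {x}, α ≤ |z - x|)
    (H : ℕ → ℝ) (hH : ∀ n, 0 < H n)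
    (X : ℕ → Ω → ℝ) (hXm : ∀ i, Measurable (X i))
    (hXind : iIndepFun X P)
    (EZ VZ : ℝ → ℝ → ℝ)
    (hVZ : ∀ x ∈ T, ∀ h > (0:ℝ), HasSum (fun z : ℝ => K x h z * (z - EZ x h) ^ 2) (VZ x h))
    (hA1E : ∀ ε > (0:ℝ), ∃ N : ℕ, ∀ n ≥ N, ∀ x ∈ T, |EZ x (H n) - x| ≤ ε)
    (hA1V : ∀ ε > (0:ℝ), ∃ N : ℕ, ∀ n ≥ N, ∀ x ∈ T, VZ x (H n) ≤ ε)
    :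
    Tendsto
      (fun n : ℕ =>
        ∫ ω, ((∑' y : T, (n:ℝ)⁻¹ * ∑ i ∈ Finset.range n, K (y:ℝ) (H n) (X i ω)) - ∫ ω', (∑' y : T, (n:ℝ)⁻¹ * ∑ i ∈ Finset.range n, K (y:ℝ) (H n) (X i ω')) ∂P) ^ 2 ∂P)
      atTop (𝓝 0) ∧
    ∃ N : ℕ, ∀ n ≥ N,
      (∫ ω, ((∑' y : T, (n:ℝ)⁻¹ * ∑ i ∈ Finset.range n, K (y:ℝ) (H n) (X i ω)) - ∫ ω', (∑' y : T, (n:ℝ)⁻¹ * ∑ i ∈ Finset.range n, K (y:ℝ) (H n) (X i ω')) ∂P) ^ 2 ∂P) ≤ 3 / n := by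
  have : Countable T := hTc.to_subtype
  set Z := ∑' j : ℤ, 1 / (j : ℝ) ^ 2
  have hZ : 0 ≤ Z := tsum_nonneg fun j => by positivity
  set ε := α ^ 2 / (16 * (Z + 1))
  have hε : 0 < ε := by positivity
  have hmass : 1 + 16 * ε / α ^ 2 * Z ≤ 2 := by
    have : 16 * ε / α ^ 2 * Z = Z / (Z + 1) := by simp only [ε]; field_simp
    rw [this]
    linarith [(div_le_one (by positivity : 0 < Z + 1)).2 (by linarith : Z ≤ Z + 1)]
  obtain ⟨N₁, hN₁⟩ := hA1E (α / 2) (by positivity)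
  obtain ⟨N₂, hN₂⟩ := hA1V ε hε
  refine (fun hbound => ⟨squeeze_zero' (.of_forall fun n => integral_nonneg fun ω => sq_nonneg _)
    (eventually_atTop.2 hbound) (tendsto_const_div_atTop_nhds_zero_nat 3), hbound⟩)
    ⟨max N₁ N₂, fun n hn => ?_⟩
  have hh := hH n
  have hkernel := summable_kernel_and_tsum_le hα hsep (fun y hy => hK0 y hy _ hh)
    (fun y hy => hKS y hy _ hh) (fun y hy => hK1 y hy _ hh) (fun y hy => hVZ y hy _ hh)
    (hN₁ n (le_of_max_le_left hn)) (hN₂ n (le_of_max_le_right hn)) hε.le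
  calc _ ≤ (2 / 2) ^ 2 / (n : ℝ) :=
        integral_sq_sub_integral_tsum_average_le (k := fun y : T => K y (H n)) hXm hXind
          (fun y => hKm y _)
          (fun y => hK0 y y.2 _ hh) (fun s => (hkernel s).1) (fun s => (hkernel s).2.trans hmass) n
    _ ≤ 3 / n := by gcongr; norm_num

theorem variance_of_normalizing_constant
    {Ω : Type*} [MeasurableSpace Ω] (P : Measure Ω) [IsProbabilityMeasure P]
    (T : Set ℝ) (hTc : T.Countable)
    (f : ℝ → ℝ) (hf0 : ∀ x, 0 ≤ f x) (hfT : ∀ x ∉ T, f x = 0) (hf1 : HasSum f 1)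
    (S : ℝ → Set ℝ) (hSc : ∀ x ∈ T, (S x).Countable)
    (K : ℝ → ℝ → ℝ → ℝ)
    (hK0 : ∀ x ∈ T, ∀ h > (0:ℝ), ∀ z, 0 ≤ K x h z)
    (hKS : ∀ x ∈ T, ∀ h > (0:ℝ), ∀ z ∉ S x, K x h z = 0)
    (hK1 : ∀ x ∈ T, ∀ h > (0:ℝ), HasSum (K x h) 1)
    (hKm : ∀ x h, Measurable (K x h))
    (hxS : ∀ x ∈ T, x ∈ S x)
    (α : ℝ) (hα : 0 < α)
    (hsep : ∀ x ∈ T, ∀ z ∈ (T ∪ S x) \ {x}, α ≤ |z - x|)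
    (H : ℕ → ℝ) (hH : ∀ n, 0 < H n) (hH0 : Tendsto H atTop (𝓝 0))
    (X : ℕ → Ω → ℝ) (hXm : ∀ i, Measurable (X i))
    (hXind : iIndepFun X P)
    (hXd : ∀ i, ∀ x : ℝ, P (X i ⁻¹' {x}) = ENNReal.ofReal (f x))
    (EZ VZ : ℝ → ℝ → ℝ)
    (hEZ : ∀ x ∈ T, ∀ h > (0:ℝ), HasSum (fun z : ℝ => K x h z * z) (EZ x h))
    (hVZ : ∀ x ∈ T, ∀ h > (0:ℝ), HasSum (fun z : ℝ => K x h z * (z - EZ x h) ^ 2) (VZ x h))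
    (hA1E : ∀ ε > (0:ℝ), ∃ N : ℕ, ∀ n ≥ N, ∀ x ∈ T, |EZ x (H n) - x| ≤ ε)
    (hA1V : ∀ ε > (0:ℝ), ∃ N : ℕ, ∀ n ≥ N, ∀ x ∈ T, VZ x (H n) ≤ ε)
    :
    Tendsto
      (fun n : ℕ =>
        ∫ ω, ((∑' y : T, (n:ℝ)⁻¹ * ∑ i ∈ Finset.range n, K (y:ℝ) (H n) (X i ω)) - ∫ ω', (∑' y : T, (n:ℝ)⁻¹ * ∑ i ∈ Finset.range n, K (y:ℝ) (H n) (X i ω')) ∂P) ^ 2 ∂P)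
      atTop (𝓝 0) ∧
    ∃ N : ℕ, ∀ n ≥ N,
      (∫ ω, ((∑' y : T, (n:ℝ)⁻¹ * ∑ i ∈ Finset.range n, K (y:ℝ) (H n) (X i ω)) - ∫ ω', (∑' y : T, (n:ℝ)⁻¹ * ∑ i ∈ Finset.range n, K (y:ℝ) (H n) (X i ω')) ∂P) ^ 2 ∂P) ≤ 3 / n :=
  variance_of_normalizing_constant_general P T hTc S K hK0 hKS hK1 hKm α hα hsep H hH X hXm hXind EZ
    VZ hVZ hA1E hA1V
end

section
/- Under Assumptions (A1), and assuming f(x) > 0 for all x ∈ T with Σ_{x∈T} f(x) = 1, the expectation of the normalizing variable converges to 1: E[C_n] → 1 as n → ∞. -/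
open MeasureTheory ProbabilityTheory Filter Topology Function

/-- Chebyshev-type bound: the kernel mass at points far from `y` is small. -/
lemma cheb_diag {K : ℝ → ℝ} {E V y α v : ℝ} (hα : 0 < α)
    (hK0 : ∀ z, 0 ≤ K z) (hK1 : HasSum K 1)
    (hV : HasSum (fun z => K z * (z - E) ^ 2) V) (hVv : V ≤ v)
    (hEy : |E - y| ≤ α / 2)
    (hfar : ∀ z, K z ≠ 0 → z ≠ y → α ≤ |z - y|) :
    1 - 4 * v / α ^ 2 ≤ K y := by
  classical
  have hs := hK1.summable
  have hkey : (∑' z, (if z = y then 0 else K z)) ≤ v * (4 / α ^ 2) := by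
    have hpt : ∀ z, (if z = y then 0 else K z) ≤ K z * (z - E) ^ 2 * (4 / α ^ 2) := by
      intro z
      by_cases hzy : z = y
      · simp only [hzy, if_pos rfl]
        exact mul_nonneg (mul_nonneg (hK0 _) (sq_nonneg _)) (by positivity)
      · rw [if_neg hzy]
        by_cases hKz : K z = 0
        · rw [hKz]; positivity
        · have h1 : α ≤ |z - y| := hfar z hKz hzy
          have h2 : α / 2 ≤ |z - E| := by
            have : |z - y| - |E - y| ≤ |z - E| := by
              have := abs_sub_abs_le_abs_sub (z - y) (E - y)
              have h3 : (z - y) - (E - y) = z - E := by ring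
              rwa [h3] at this
            linarith
          have h4 : (α / 2) ^ 2 ≤ (z - E) ^ 2 := by
            rw [← sq_abs (z - E)]
            exact pow_le_pow_left₀ (by positivity) h2 2
          have h5 : (1 : ℝ) ≤ (z - E) ^ 2 * (4 / α ^ 2) := by
            have h6 : (α / 2) ^ 2 * (4 / α ^ 2) = 1 := by
              field_simp
              ring
            calc (1:ℝ) = (α / 2) ^ 2 * (4 / α ^ 2) := h6.symm
              _ ≤ (z - E) ^ 2 * (4 / α ^ 2) := by
                  apply mul_le_mul_of_nonneg_right h4
                  positivity
          calc K z = K z * 1 := (mul_one _).symm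
            _ ≤ K z * ((z - E) ^ 2 * (4 / α ^ 2)) :=
                mul_le_mul_of_nonneg_left h5 (hK0 z)
            _ = K z * (z - E) ^ 2 * (4 / α ^ 2) := by ring
    have hsl : Summable fun z => (if z = y then 0 else K z) := by
      apply Summable.of_nonneg_of_le _ _ hs
      · intro z; by_cases hzy : z = y <;> simp [hzy, hK0 z]
      · intro z
        by_cases hzy : z = y
        · simp only [hzy, if_pos rfl]; exact hK0 _
        · simp [hzy]
    have hsr : Summable fun z => K z * (z - E) ^ 2 * (4 / α ^ 2) :=
      hV.summable.mul_right _
    calc (∑' z, (if z = y then 0 else K z))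
        ≤ ∑' z, K z * (z - E) ^ 2 * (4 / α ^ 2) := Summable.tsum_le_tsum hpt hsl hsr
      _ = V * (4 / α ^ 2) := by rw [tsum_mul_right, hV.tsum_eq]
      _ ≤ v * (4 / α ^ 2) := by
          apply mul_le_mul_of_nonneg_right hVv; positivity
  have hsplit := Summable.tsum_eq_add_tsum_ite hs y
  rw [hs.hasSum.tsum_eq] at hsplit
  rw [hK1.tsum_eq] at hsplit
  have : v * (4 / α ^ 2) = 4 * v / α ^ 2 := by ring
  linarith [hkey, this ▸ hkey]

lemma cheb_off {K : ℝ → ℝ} {E V y α v x : ℝ} (hα : 0 < α)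
    (hK0 : ∀ z, 0 ≤ K z)
    (hV : HasSum (fun z => K z * (z - E) ^ 2) V) (hVv : V ≤ v)
    (hEy : |E - y| ≤ α / 2) (hxy : α ≤ |x - y|) :
    K x ≤ 4 * v / (x - y) ^ 2 := by
  have h1 : K x * (x - E) ^ 2 ≤ V :=
    le_hasSum hV x (fun z _ => mul_nonneg (hK0 z) (sq_nonneg _))
  have h2 : |x - y| / 2 ≤ |x - E| := by
    have : |x - y| - |E - y| ≤ |x - E| := by
      have := abs_sub_abs_le_abs_sub (x - y) (E - y)
      have h3 : (x - y) - (E - y) = x - E := by ring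
      rwa [h3] at this
    linarith
  have h3 : (x - y) ^ 2 / 4 ≤ (x - E) ^ 2 := by
    have := pow_le_pow_left₀ (by positivity : (0:ℝ) ≤ |x - y| / 2) h2 2
    rw [sq_abs] at this
    calc (x - y) ^ 2 / 4 = (|x - y| / 2) ^ 2 := by rw [div_pow, sq_abs]; norm_num
      _ ≤ (x - E) ^ 2 := this
  have hpos : (0:ℝ) < (x - y) ^ 2 := by
    have : (0:ℝ) < |x - y| := lt_of_lt_of_le hα hxy
    rw [← sq_abs]; positivity
  rw [le_div_iff₀ hpos]
  have h4 : K x * ((x - y) ^ 2 / 4) ≤ K x * (x - E) ^ 2 :=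
    mul_le_mul_of_nonneg_left h3 (hK0 x)
  nlinarith [h1, h4, hVv]

/-- Sum over an `α`-separated set of terms decaying like `v/(y-x)²` is bounded. -/
lemma sep_tsum_bound {T : Set ℝ} {α v x : ℝ} (hα : 0 < α) (hv : 0 ≤ v)
    (hsep2 : ∀ y₁ ∈ T, ∀ y₂ ∈ T, y₁ ≠ y₂ → α ≤ |y₁ - y₂|)
    (hsx : ∀ y ∈ T, y ≠ x → α ≤ |y - x|)
    {F : ℝ → ENNReal}
    (hF : ∀ y ∈ T, y ≠ x → F y ≤ ENNReal.ofReal (v / (y - x) ^ 2)) :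
    (∑' y : T, (if (y : ℝ) = x then 0 else F (y : ℝ))) ≤
      ENNReal.ofReal (v * ∑' m : ℤ, ((α * (m : ℝ))⁻¹) ^ 2) := by
  classical
  set t : ℤ → ℝ := fun m => ((α * (m : ℝ))⁻¹) ^ 2 with ht
  have ht0 : ∀ m, 0 ≤ t m := fun m => sq_nonneg _
  have htsum : Summable t := by
    have h2 : Summable (fun m : ℤ => 1 / (m : ℝ) ^ 2) :=
      Real.summable_one_div_int_pow.mpr one_lt_two
    refine (h2.mul_left (α⁻¹ ^ 2)).congr fun m => ?_
    simp only [ht, mul_inv, mul_pow, one_div, inv_pow]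
  set j : T → ℤ := fun y =>
    if x < (y : ℝ) then ⌊((y : ℝ) - x) / α⌋ else -⌊(x - (y : ℝ)) / α⌋ with hj
  have hjb : ∀ y : T, (y : ℝ) ≠ x → α * |(j y : ℝ)| ≤ |(y : ℝ) - x| ∧ j y ≠ 0 := by
    intro y hne
    by_cases hlt : x < (y : ℝ)
    · have hαy : α ≤ (y : ℝ) - x := by
        have := hsx y y.2 hne
        rwa [abs_of_pos (by linarith)] at this
      have hfl : (1 : ℤ) ≤ ⌊((y : ℝ) - x) / α⌋ := by
        apply Int.le_floor.mpr
        rw [le_div_iff₀ hα]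
        push_cast
        linarith
      have hjy : j y = ⌊((y : ℝ) - x) / α⌋ := by simp [hj, hlt]
      constructor
      · rw [hjy, abs_of_pos (by exact_mod_cast lt_of_lt_of_le zero_lt_one hfl),
          abs_of_pos (by linarith : (0:ℝ) < (y : ℝ) - x)]
        have := Int.floor_le (((y : ℝ) - x) / α)
        calc α * (⌊((y : ℝ) - x) / α⌋ : ℝ) ≤ α * (((y : ℝ) - x) / α) := by
              apply mul_le_mul_of_nonneg_left this hα.le
          _ = (y : ℝ) - x := by field_simp
      · rw [hjy]; omega
    · have hlt' : (y : ℝ) < x := lt_of_le_of_ne (not_lt.mp hlt) hne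
      have hαy : α ≤ x - (y : ℝ) := by
        have := hsx y y.2 hne
        rwa [abs_of_neg (by linarith : (y:ℝ) - x < 0), neg_sub] at this
      have hfl : (1 : ℤ) ≤ ⌊(x - (y : ℝ)) / α⌋ := by
        apply Int.le_floor.mpr
        rw [le_div_iff₀ hα]
        push_cast
        linarith
      have hjy : j y = -⌊(x - (y : ℝ)) / α⌋ := by simp [hj, hlt]
      constructor
      · rw [hjy]
        push_cast
        rw [abs_neg, abs_of_pos (by exact_mod_cast lt_of_lt_of_le zero_lt_one hfl),
          abs_of_neg (by linarith : (y:ℝ) - x < 0), neg_sub]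
        have := Int.floor_le ((x - (y : ℝ)) / α)
        calc α * (⌊(x - (y : ℝ)) / α⌋ : ℝ) ≤ α * ((x - (y : ℝ)) / α) := by
              apply mul_le_mul_of_nonneg_left this hα.le
          _ = x - (y : ℝ) := by field_simp
      · rw [hjy]; omega
  have hjinj : Function.Injective j := by
    intro y₁ y₂ hEq
    by_contra hne
    have hcne : (y₁ : ℝ) ≠ (y₂ : ℝ) := fun h => hne (Subtype.ext h)
    have hsep' : α ≤ |(y₁ : ℝ) - (y₂ : ℝ)| := hsep2 y₁ y₁.2 y₂ y₂.2 hcne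
    have habs : ∀ a b : ℝ, ⌊a / α⌋ = ⌊b / α⌋ → |a - b| < α := by
      intro a b hab
      have h1 := Int.floor_le (a / α)
      have h2 := Int.lt_floor_add_one (a / α)
      have h3 := Int.floor_le (b / α)
      have h4 := Int.lt_floor_add_one (b / α)
      rw [hab] at h1 h2
      have h5 : |a / α - b / α| < 1 := abs_sub_lt_iff.mpr ⟨by linarith, by linarith⟩
      have h6 : a / α - b / α = (a - b) / α := by ring
      rw [h6, abs_div, abs_of_pos hα, div_lt_one hα] at h5
      exact h5
    by_cases h1 : x < (y₁ : ℝ) <;> by_cases h2 : x < (y₂ : ℝ)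
    · have hE : ⌊((y₁ : ℝ) - x) / α⌋ = ⌊((y₂ : ℝ) - x) / α⌋ := by
        simpa [hj, h1, h2] using hEq
      have := habs _ _ hE
      have h7 : ((y₁ : ℝ) - x) - ((y₂ : ℝ) - x) = (y₁ : ℝ) - (y₂ : ℝ) := by ring
      rw [h7] at this
      linarith
    · -- y₁ > x, y₂ ≤ x
      have hαy : α ≤ (y₁ : ℝ) - x := by
        have := hsx y₁ y₁.2 h1.ne'
        rwa [abs_of_pos (by linarith)] at this
      have hfl : (1 : ℤ) ≤ ⌊((y₁ : ℝ) - x) / α⌋ :=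
        Int.le_floor.mpr (by rw [le_div_iff₀ hα]; push_cast; linarith)
      have hge : (0 : ℤ) ≤ ⌊(x - (y₂ : ℝ)) / α⌋ :=
        Int.floor_nonneg.mpr (by
          apply div_nonneg _ hα.le
          linarith [not_lt.mp h2])
      have hE : ⌊((y₁ : ℝ) - x) / α⌋ = -⌊(x - (y₂ : ℝ)) / α⌋ := by
        simpa [hj, h1, h2] using hEq
      omega
    · -- y₁ ≤ x, y₂ > x
      have hαy : α ≤ (y₂ : ℝ) - x := by
        have := hsx y₂ y₂.2 h2.ne'
        rwa [abs_of_pos (by linarith)] at this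
      have hfl : (1 : ℤ) ≤ ⌊((y₂ : ℝ) - x) / α⌋ :=
        Int.le_floor.mpr (by rw [le_div_iff₀ hα]; push_cast; linarith)
      have hge : (0 : ℤ) ≤ ⌊(x - (y₁ : ℝ)) / α⌋ :=
        Int.floor_nonneg.mpr (by
          apply div_nonneg _ hα.le
          linarith [not_lt.mp h1])
      have hE : -⌊(x - (y₁ : ℝ)) / α⌋ = ⌊((y₂ : ℝ) - x) / α⌋ := by
        simpa [hj, h1, h2] using hEq
      omega
    · have hE : ⌊(x - (y₁ : ℝ)) / α⌋ = ⌊(x - (y₂ : ℝ)) / α⌋ := by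
        have : -⌊(x - (y₁ : ℝ)) / α⌋ = -⌊(x - (y₂ : ℝ)) / α⌋ := by
          simpa [hj, h1, h2] using hEq
        omega
      have := habs _ _ hE
      have h7 : (x - (y₁ : ℝ)) - (x - (y₂ : ℝ)) = -((y₁ : ℝ) - (y₂ : ℝ)) := by ring
      rw [h7, abs_neg] at this
      linarith
  -- main comparison
  have hpt : ∀ y : T, (if (y : ℝ) = x then 0 else F (y : ℝ)) ≤
      ENNReal.ofReal (v * t (j y)) := by
    intro y
    by_cases hy : (y : ℝ) = x
    · simp [hy]
    · rw [if_neg hy]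
      obtain ⟨hb1, hb2⟩ := hjb y hy
      have hjpos : (0 : ℝ) < |(j y : ℝ)| := by
        simp only [abs_pos, ne_eq, Int.cast_eq_zero]
        exact hb2
      have hpos : (0 : ℝ) < α * |(j y : ℝ)| := mul_pos hα hjpos
      have h3 : (α * |(j y : ℝ)|) ^ 2 ≤ ((y : ℝ) - x) ^ 2 := by
        rw [← sq_abs ((y : ℝ) - x)]
        exact pow_le_pow_left₀ hpos.le hb1 2
      have h4 : v / ((y : ℝ) - x) ^ 2 ≤ v * t (j y) := by
        have habs2 : (α * |(j y : ℝ)|) ^ 2 = (α * (j y : ℝ)) ^ 2 := by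
          rw [mul_pow, mul_pow, sq_abs]
        have h5 : t (j y) = ((α * |(j y : ℝ)|) ^ 2)⁻¹ := by
          show ((α * (j y : ℝ))⁻¹) ^ 2 = _
          rw [inv_pow, habs2]
        rw [h5, ← div_eq_mul_inv]
        exact div_le_div_of_nonneg_left hv (by positivity) h3
      exact le_trans (hF y y.2 hy) (ENNReal.ofReal_le_ofReal h4)
  calc (∑' y : T, (if (y : ℝ) = x then 0 else F (y : ℝ)))
      ≤ ∑' y : T, ENNReal.ofReal (v * t (j y)) := ENNReal.tsum_le_tsum hpt
    _ ≤ ∑' m : ℤ, ENNReal.ofReal (v * t m) :=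
        ENNReal.tsum_comp_le_tsum_of_injective hjinj _
    _ = ENNReal.ofReal (∑' m : ℤ, v * t m) :=
        (ENNReal.ofReal_tsum_of_nonneg (fun m => mul_nonneg hv (ht0 m))
          (htsum.mul_left v)).symm
    _ = ENNReal.ofReal (v * ∑' m : ℤ, t m) := by rw [tsum_mul_left]

theorem expectation_of_normalizing_constant
    {Ω : Type*} [MeasurableSpace Ω] (P : Measure Ω) [IsProbabilityMeasure P]
    (T : Set ℝ) (hTc : T.Countable)
    (f : ℝ → ℝ) (hf0 : ∀ x, 0 ≤ f x) (hfT : ∀ x ∉ T, f x = 0) (hf1 : HasSum f 1)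
    (S : ℝ → Set ℝ) (hSc : ∀ x ∈ T, (S x).Countable)
    (K : ℝ → ℝ → ℝ → ℝ)
    (hK0 : ∀ x ∈ T, ∀ h > (0:ℝ), ∀ z, 0 ≤ K x h z)
    (hKS : ∀ x ∈ T, ∀ h > (0:ℝ), ∀ z ∉ S x, K x h z = 0)
    (hK1 : ∀ x ∈ T, ∀ h > (0:ℝ), HasSum (K x h) 1)
    (hKm : ∀ x h, Measurable (K x h))
    (hxS : ∀ x ∈ T, x ∈ S x)
    (α : ℝ) (hα : 0 < α)
    (hsep : ∀ x ∈ T, ∀ z ∈ (T ∪ S x) \ {x}, α ≤ |z - x|)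
    (H : ℕ → ℝ) (hH : ∀ n, 0 < H n) (hH0 : Tendsto H atTop (𝓝 0))
    (X : ℕ → Ω → ℝ) (hXm : ∀ i, Measurable (X i))
    (hXind : iIndepFun X P)
    (hXd : ∀ i, ∀ x : ℝ, P (X i ⁻¹' {x}) = ENNReal.ofReal (f x))
    (hfpos : ∀ x ∈ T, 0 < f x)
    (EZ VZ : ℝ → ℝ → ℝ)
    (hEZ : ∀ x ∈ T, ∀ h > (0:ℝ), HasSum (fun z : ℝ => K x h z * z) (EZ x h))
    (hVZ : ∀ x ∈ T, ∀ h > (0:ℝ), HasSum (fun z : ℝ => K x h z * (z - EZ x h) ^ 2) (VZ x h))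
    (hA1E : ∀ ε > (0:ℝ), ∃ N : ℕ, ∀ n ≥ N, ∀ x ∈ T, |EZ x (H n) - x| ≤ ε)
    (hA1V : ∀ ε > (0:ℝ), ∃ N : ℕ, ∀ n ≥ N, ∀ x ∈ T, VZ x (H n) ≤ ε)
    :
    Tendsto (fun n : ℕ => ∫ ω, (∑' y : T, (n:ℝ)⁻¹ * ∑ i ∈ Finset.range n, K (y:ℝ) (H n) (X i ω)) ∂P) atTop (𝓝 1) := by
  classical
  haveI : Countable T := hTc.to_subtype
  -- total mass of f on T, in ℝ≥0∞
  have hsum1 : (∑' x : T, ENNReal.ofReal (f (x : ℝ))) = 1 := by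
    have h1 : (∑' x : ℝ, ENNReal.ofReal (f x)) = 1 := by
      rw [← ENNReal.ofReal_tsum_of_nonneg hf0 hf1.summable, hf1.tsum_eq,
        ENNReal.ofReal_one]
    rw [← h1]
    refine tsum_subtype_eq_of_support_subset (f := fun x => ENNReal.ofReal (f x)) ?_
    intro x hx
    by_contra hxT
    exact hx (by simp [hfT x hxT])
  -- each X i lands in T with probability one
  have hXT : ∀ i, P (X i ⁻¹' T) = 1 := by
    intro i
    have hU : X i ⁻¹' T = ⋃ x ∈ T, X i ⁻¹' {x} := by
      ext ω; simp
    rw [hU, measure_biUnion hTc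
      (fun a _ b _ hab => Disjoint.preimage _ (Set.disjoint_singleton.mpr hab))
      (fun x _ => hXm i (measurableSet_singleton x))]
    simp_rw [hXd i]
    exact hsum1
  have hXTc : ∀ i, P (X i ⁻¹' T)ᶜ = 0 := by
    intro i
    rw [measure_compl (hXm i hTc.measurableSet) (measure_ne_top _ _), hXT i,
      measure_univ, tsub_self]
  have hXTae : ∀ᵐ ω ∂P, ∀ i, X i ω ∈ T := by
    rw [ae_all_iff]
    intro i
    exact mem_ae_iff.mpr (hXTc i)
  -- lintegral of a function of X i
  have hlint : ∀ (i : ℕ) (g : ℝ → ENNReal), Measurable g →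
      ∫⁻ ω, g (X i ω) ∂P = ∑' x : T, g (x : ℝ) * ENNReal.ofReal (f (x : ℝ)) := by
    intro i g hg
    rw [← lintegral_map hg (hXm i)]
    have hmapT : (P.map (X i)) Tᶜ = 0 := by
      rw [Measure.map_apply (hXm i) hTc.measurableSet.compl, Set.preimage_compl]
      exact hXTc i
    have hres : (P.map (X i)).restrict T = P.map (X i) :=
      Measure.restrict_eq_self_of_ae_mem (mem_ae_iff.mpr hmapT)
    rw [← hres, lintegral_countable g hTc]
    refine tsum_congr fun x => ?_
    rw [Measure.map_apply (hXm i) (measurableSet_singleton _), hXd i]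
  -- separation facts
  have hsep2 : ∀ y₁ ∈ T, ∀ y₂ ∈ T, y₁ ≠ y₂ → α ≤ |y₁ - y₂| := by
    intro y₁ h₁ y₂ h₂ hne
    exact hsep y₂ h₂ y₁ ⟨Or.inl h₁, by simpa using hne⟩
  rw [Metric.tendsto_atTop]
  intro ε hε
  set Jr := ∑' m : ℤ, ((α * (m : ℝ))⁻¹) ^ 2 with hJrdef
  have hJr0 : 0 ≤ Jr := tsum_nonneg fun m => sq_nonneg _
  set v := min (α ^ 2 / 8) (min (ε * α ^ 2 / 16) (ε / (16 * (Jr + 1)))) with hvdef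
  have hv0 : 0 < v := by
    refine lt_min (by positivity) (lt_min (by positivity) (by positivity))
  have hv1 : v ≤ α ^ 2 / 8 := min_le_left _ _
  have hv2 : v ≤ ε * α ^ 2 / 16 := le_trans (min_le_right _ _) (min_le_left _ _)
  have hv3 : v ≤ ε / (16 * (Jr + 1)) := le_trans (min_le_right _ _) (min_le_right _ _)
  obtain ⟨N₁, hN₁⟩ := hA1E (α / 2) (by positivity)
  obtain ⟨N₂, hN₂⟩ := hA1V v hv0
  refine ⟨max (max N₁ N₂) 1, fun n hn => ?_⟩
  have hn1 : 1 ≤ n := le_trans (le_max_right _ _) hn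
  have hE : ∀ y ∈ T, |EZ y (H n) - y| ≤ α / 2 :=
    hN₁ n (le_trans (le_trans (le_max_left _ _) (le_max_left _ _)) hn)
  have hVb : ∀ y ∈ T, VZ y (H n) ≤ v :=
    hN₂ n (le_trans (le_trans (le_max_right _ _) (le_max_left _ _)) hn)
  set h := H n with hhdef
  have hhp : 0 < h := hH n
  -- pointwise kernel bounds
  have hKle1 : ∀ y ∈ T, ∀ z, K y h z ≤ 1 := fun y hy z =>
    le_hasSum (hK1 y hy h hhp) z fun j _ => hK0 y hy h hhp j
  have hdiag : ∀ y ∈ T, 1 - 4 * v / α ^ 2 ≤ K y h y := by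
    intro y hy
    refine cheb_diag hα (hK0 y hy h hhp) (hK1 y hy h hhp) (hVZ y hy h hhp)
      (hVb y hy) (hE y hy) ?_
    intro z hKz hzy
    have hzS : z ∈ S y := by
      by_contra hzS
      exact hKz (hKS y hy h hhp z hzS)
    exact hsep y hy z ⟨Or.inr hzS, by simpa using hzy⟩
  have hoff : ∀ y ∈ T, ∀ x ∈ T, x ≠ y → K y h x ≤ 4 * v / (x - y) ^ 2 := by
    intro y hy x hx hne
    exact cheb_off hα (hK0 y hy h hhp) (hVZ y hy h hhp) (hVb y hy) (hE y hy)
      (hsep y hy x ⟨Or.inl hx, by simpa using hne⟩)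
  -- the "column" bound (sum over kernel centers y, at a fixed point x ∈ T)
  have hcol : ∀ x ∈ T, (∑' y : T, (if (y : ℝ) = x then (0:ENNReal)
        else ENNReal.ofReal (K (y:ℝ) h x))) ≤ ENNReal.ofReal (4 * v * Jr) := by
    intro x hx
    have hsx : ∀ y ∈ T, y ≠ x → α ≤ |y - x| := fun y hy hne =>
      hsep x hx y ⟨Or.inl hy, by simpa using hne⟩
    have hb : ∀ y ∈ T, y ≠ x →
        ENNReal.ofReal (K y h x) ≤ ENNReal.ofReal (4 * v / (y - x) ^ 2) := by
      intro y hy hne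
      apply ENNReal.ofReal_le_ofReal
      have hsq : (x - y) ^ 2 = (y - x) ^ 2 := by ring
      have hxyne : x ≠ y := fun hh => hne (hh.symm)
      have := hoff y hy x hx hxyne
      rwa [hsq] at this
    have hres := sep_tsum_bound (T := T) (v := 4 * v) (x := x) hα (by positivity)
      hsep2 hsx (F := fun y => ENNReal.ofReal (K y h x)) hb
    rw [hJrdef]
    exact hres
  -- row bound: total kernel mass over centers, at a point x ∈ T
  have hCb : ∀ x ∈ T, (∑' y : T, ENNReal.ofReal (K (y:ℝ) h x)) ≤
      1 + ENNReal.ofReal (4 * v * Jr) := by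
    intro x hx
    rw [ENNReal.tsum_eq_add_tsum_ite (⟨x, hx⟩ : T)]
    refine add_le_add (ENNReal.ofReal_le_one.mpr (hKle1 x hx x))
      (le_trans (le_of_eq (tsum_congr fun y => ?_)) (hcol x hx))
    by_cases hc : y = (⟨x, hx⟩ : T)
    · simp [hc]
    · rw [if_neg hc, if_neg (fun hc' => hc (Subtype.ext hc'))]
  -- ENNReal-valued normalized sum
  set G : Ω → ENNReal := fun ω => ∑' y : T,
    ENNReal.ofReal ((n:ℝ)⁻¹ * ∑ i ∈ Finset.range n, K (y:ℝ) h (X i ω)) with hGdef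
  have hsummeas : ∀ y : T, Measurable
      (fun ω => (n:ℝ)⁻¹ * ∑ i ∈ Finset.range n, K (y:ℝ) h (X i ω)) :=
    fun y => (Finset.measurable_sum _ fun i _ => (hKm y h).comp (hXm i)).const_mul _
  have hGmeas : Measurable G :=
    Measurable.ennreal_tsum fun y => (hsummeas y).ennreal_ofReal
  have hnonneg : ∀ (y : T) (ω : Ω),
      0 ≤ (n:ℝ)⁻¹ * ∑ i ∈ Finset.range n, K (y:ℝ) h (X i ω) :=
    fun y ω => mul_nonneg (by positivity)
      (Finset.sum_nonneg fun i _ => hK0 y y.2 h hhp _)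
  have hsplit : ∀ (y : T) (ω : Ω),
      ENNReal.ofReal ((n:ℝ)⁻¹ * ∑ i ∈ Finset.range n, K (y:ℝ) h (X i ω))
      = ENNReal.ofReal (n:ℝ)⁻¹ *
        ∑ i ∈ Finset.range n, ENNReal.ofReal (K (y:ℝ) h (X i ω)) := by
    intro y ω
    rw [ENNReal.ofReal_mul (by positivity),
      ENNReal.ofReal_sum_of_nonneg (fun i _ => hK0 y y.2 h hhp _)]
  have hpt : (fun ω => (∑' y : T, (n:ℝ)⁻¹ * ∑ i ∈ Finset.range n, K (y:ℝ) h (X i ω)))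
      = fun ω => (G ω).toReal := by
    funext ω
    simp only [hGdef]
    rw [ENNReal.tsum_toReal_eq (fun _ => ENNReal.ofReal_ne_top)]
    exact tsum_congr fun y => (ENNReal.toReal_ofReal (hnonneg y ω)).symm
  have hfin : ∀ᵐ ω ∂P, G ω < ⊤ := by
    filter_upwards [hXTae] with ω hω
    have hb : G ω ≤ ENNReal.ofReal (n:ℝ)⁻¹ *
        ((n : ENNReal) * (1 + ENNReal.ofReal (4 * v * Jr))) := by
      simp only [hGdef]
      calc (∑' y : T, ENNReal.ofReal ((n:ℝ)⁻¹ * ∑ i ∈ Finset.range n, K (y:ℝ) h (X i ω)))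
          = ENNReal.ofReal (n:ℝ)⁻¹ *
            ∑' y : T, ∑ i ∈ Finset.range n, ENNReal.ofReal (K (y:ℝ) h (X i ω)) := by
            simp_rw [hsplit]; rw [ENNReal.tsum_mul_left]
        _ = ENNReal.ofReal (n:ℝ)⁻¹ *
            ∑ i ∈ Finset.range n, ∑' y : T, ENNReal.ofReal (K (y:ℝ) h (X i ω)) := by
            rw [Summable.tsum_finsetSum (fun i _ => ENNReal.summable)]
        _ ≤ _ := by
            apply mul_le_mul_right
            calc (∑ i ∈ Finset.range n, ∑' y : T, ENNReal.ofReal (K (y:ℝ) h (X i ω)))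
                ≤ ∑ i ∈ Finset.range n, (1 + ENNReal.ofReal (4 * v * Jr)) :=
                  Finset.sum_le_sum fun i _ => hCb (X i ω) (hω i)
              _ = (n : ENNReal) * (1 + ENNReal.ofReal (4 * v * Jr)) := by
                  rw [Finset.sum_const, Finset.card_range, nsmul_eq_mul]
    refine lt_of_le_of_lt hb (lt_top_iff_ne_top.mpr ?_)
    apply ENNReal.mul_ne_top ENNReal.ofReal_ne_top
    apply ENNReal.mul_ne_top (ENNReal.natCast_ne_top n)
    exact ENNReal.add_ne_top.mpr ⟨ENNReal.one_ne_top, ENNReal.ofReal_ne_top⟩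
  set W : T → ENNReal := fun y =>
    ∑' x : T, ENNReal.ofReal (K (y:ℝ) h (x:ℝ)) * ENNReal.ofReal (f (x:ℝ)) with hWdef
  have hnne : ((n : ENNReal)) ≠ 0 := Nat.cast_ne_zero.mpr (by omega)
  have hKXm : ∀ (y : T) (i : ℕ),
      Measurable (fun ω => ENNReal.ofReal (K (y:ℝ) h (X i ω))) :=
    fun y i => Measurable.ennreal_ofReal ((hKm _ h).comp (hXm i))
  have hL : ∫⁻ ω, G ω ∂P = ∑' y : T, W y := by
    simp only [hGdef]
    rw [lintegral_tsum (fun y => ((hsummeas y).ennreal_ofReal).aemeasurable)]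
    refine tsum_congr fun y => ?_
    calc ∫⁻ ω, ENNReal.ofReal ((n:ℝ)⁻¹ * ∑ i ∈ Finset.range n, K (y:ℝ) h (X i ω)) ∂P
        = ∫⁻ ω, ENNReal.ofReal (n:ℝ)⁻¹ *
            ∑ i ∈ Finset.range n, ENNReal.ofReal (K (y:ℝ) h (X i ω)) ∂P := by
          simp_rw [hsplit]
      _ = ENNReal.ofReal (n:ℝ)⁻¹ * ∑ i ∈ Finset.range n,
            ∫⁻ ω, ENNReal.ofReal (K (y:ℝ) h (X i ω)) ∂P := by
          rw [lintegral_const_mul _ (Finset.measurable_sum _ fun i _ => hKXm y i),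
            lintegral_finset_sum _ (fun i _ => hKXm y i)]
      _ = ENNReal.ofReal (n:ℝ)⁻¹ * ((n : ENNReal) * W y) := by
          congr 1
          rw [Finset.sum_congr rfl (fun i _ => hlint i _ ((hKm (y:ℝ) h).ennreal_ofReal)),
            Finset.sum_const, Finset.card_range, nsmul_eq_mul]
      _ = W y := by
          rw [ENNReal.ofReal_inv_of_pos (by exact_mod_cast Nat.pos_of_ne_zero (by omega) : (0:ℝ) < (n:ℝ)),
            ENNReal.ofReal_natCast, ← mul_assoc,
            ENNReal.inv_mul_cancel hnne (ENNReal.natCast_ne_top n), one_mul]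
  have hupper : (∑' y : T, W y) ≤ 1 + ENNReal.ofReal (4 * v * Jr) := by
    have hWle : ∀ y : T, W y ≤ ENNReal.ofReal (f (y:ℝ)) +
        (∑' x : T, if (x:ℝ) = (y:ℝ) then (0:ENNReal)
          else ENNReal.ofReal (K (y:ℝ) h (x:ℝ)) * ENNReal.ofReal (f (x:ℝ))) := by
      intro y
      simp only [hWdef]
      rw [ENNReal.tsum_eq_add_tsum_ite y]
      refine add_le_add ?_ (le_of_eq (tsum_congr fun x => ?_))
      · calc ENNReal.ofReal (K (y:ℝ) h (y:ℝ)) * ENNReal.ofReal (f (y:ℝ))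
            ≤ 1 * ENNReal.ofReal (f (y:ℝ)) :=
              mul_le_mul_left (ENNReal.ofReal_le_one.mpr (hKle1 y y.2 y)) _
          _ = ENNReal.ofReal (f (y:ℝ)) := one_mul _
      · by_cases hc : x = y
        · simp [hc]
        · rw [if_neg hc, if_neg (fun hc' => hc (Subtype.ext hc'))]
    calc (∑' y : T, W y)
        ≤ ∑' y : T, (ENNReal.ofReal (f (y:ℝ)) +
            (∑' x : T, if (x:ℝ) = (y:ℝ) then (0:ENNReal)
              else ENNReal.ofReal (K (y:ℝ) h (x:ℝ)) * ENNReal.ofReal (f (x:ℝ)))) :=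
          ENNReal.tsum_le_tsum hWle
      _ = (∑' y : T, ENNReal.ofReal (f (y:ℝ))) +
            ∑' y : T, ∑' x : T, (if (x:ℝ) = (y:ℝ) then (0:ENNReal)
              else ENNReal.ofReal (K (y:ℝ) h (x:ℝ)) * ENNReal.ofReal (f (x:ℝ))) :=
          ENNReal.tsum_add
      _ ≤ 1 + ENNReal.ofReal (4 * v * Jr) := by
          rw [hsum1]
          refine add_le_add_right ?_ 1
          rw [ENNReal.tsum_comm]
          calc (∑' x : T, ∑' y : T, (if (x:ℝ) = (y:ℝ) then (0:ENNReal)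
                  else ENNReal.ofReal (K (y:ℝ) h (x:ℝ)) * ENNReal.ofReal (f (x:ℝ))))
              = ∑' x : T, ENNReal.ofReal (f (x:ℝ)) *
                  ∑' y : T, (if (y:ℝ) = (x:ℝ) then (0:ENNReal)
                    else ENNReal.ofReal (K (y:ℝ) h (x:ℝ))) := by
                refine tsum_congr fun x => ?_
                rw [← ENNReal.tsum_mul_left]
                refine tsum_congr fun y => ?_
                by_cases hc : (x:ℝ) = (y:ℝ)
                · rw [if_pos hc, if_pos hc.symm, mul_zero]
                · rw [if_neg hc, if_neg (fun hc' => hc hc'.symm), mul_comm]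
            _ ≤ ∑' x : T, ENNReal.ofReal (f (x:ℝ)) * ENNReal.ofReal (4 * v * Jr) :=
                ENNReal.tsum_le_tsum fun x => mul_le_mul_right (hcol x x.2) _
            _ = ENNReal.ofReal (4 * v * Jr) := by
                rw [ENNReal.tsum_mul_right, hsum1, one_mul]
  have hlower : ENNReal.ofReal (1 - 4 * v / α ^ 2) ≤ ∑' y : T, W y := by
    have hterm : ∀ y : T, ENNReal.ofReal (1 - 4 * v / α ^ 2) * ENNReal.ofReal (f (y:ℝ))
        ≤ W y := by
      intro y
      calc ENNReal.ofReal (1 - 4 * v / α ^ 2) * ENNReal.ofReal (f (y:ℝ))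
          ≤ ENNReal.ofReal (K (y:ℝ) h (y:ℝ)) * ENNReal.ofReal (f (y:ℝ)) :=
            mul_le_mul_left (ENNReal.ofReal_le_ofReal (hdiag y y.2)) _
        _ ≤ W y := by simp only [hWdef]; exact ENNReal.le_tsum y
    calc ENNReal.ofReal (1 - 4 * v / α ^ 2)
        = ENNReal.ofReal (1 - 4 * v / α ^ 2) * ∑' y : T, ENNReal.ofReal (f (y:ℝ)) := by
          rw [hsum1, mul_one]
      _ = ∑' y : T, ENNReal.ofReal (1 - 4 * v / α ^ 2) * ENNReal.ofReal (f (y:ℝ)) :=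
          ENNReal.tsum_mul_left.symm
      _ ≤ ∑' y : T, W y := ENNReal.tsum_le_tsum hterm
  have htopne : (1 + ENNReal.ofReal (4 * v * Jr)) ≠ ⊤ :=
    ENNReal.add_ne_top.mpr ⟨ENNReal.one_ne_top, ENNReal.ofReal_ne_top⟩
  have hne : (∑' y : T, W y) ≠ ⊤ := ne_top_of_le_ne_top htopne hupper
  have hIeq : ∫ ω, (∑' y : T, (n:ℝ)⁻¹ * ∑ i ∈ Finset.range n, K (y:ℝ) h (X i ω)) ∂P
      = (∑' y : T, W y).toReal := by
    rw [show (fun ω => (∑' y : T, (n:ℝ)⁻¹ * ∑ i ∈ Finset.range n, K (y:ℝ) h (X i ω)))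
        = fun ω => (G ω).toReal from hpt]
    rw [integral_toReal hGmeas.aemeasurable hfin, hL]
  rw [hIeq, Real.dist_eq]
  have hα2 : (0:ℝ) < α ^ 2 := by positivity
  have hub : (∑' y : T, W y).toReal ≤ 1 + 4 * v * Jr := by
    have h1 := ENNReal.toReal_mono htopne hupper
    rwa [ENNReal.toReal_add ENNReal.one_ne_top ENNReal.ofReal_ne_top, ENNReal.toReal_one,
      ENNReal.toReal_ofReal (by positivity)] at h1
  have hlb : 1 - 4 * v / α ^ 2 ≤ (∑' y : T, W y).toReal := by
    have h1 := ENNReal.toReal_mono hne hlower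
    have h2 : 4 * v / α ^ 2 ≤ 1 / 2 := by
      rw [div_le_iff₀ hα2]; nlinarith [hv1]
    rwa [ENNReal.toReal_ofReal (by linarith)] at h1
  have hJb : 4 * v * Jr ≤ ε / 4 := by
    have h16 : (0:ℝ) < 16 * (Jr + 1) := by positivity
    have h5 : v * Jr ≤ (ε / (16 * (Jr + 1))) * Jr := mul_le_mul_of_nonneg_right hv3 hJr0
    have h6 : (ε / (16 * (Jr + 1))) * Jr ≤ ε / 16 := by
      rw [div_mul_eq_mul_div, div_le_div_iff₀ h16 (by norm_num : (0:ℝ) < 16)]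
      nlinarith [mul_nonneg hε.le hJr0]
    linarith
  have hVb2 : 4 * v / α ^ 2 ≤ ε / 4 := by
    rw [div_le_iff₀ hα2]
    nlinarith [hv2]
  rw [abs_sub_lt_iff]
  constructor
  · linarith
  · linarith
end

section
/- Under Assumptions (A1), the bias of the non-normalized estimator vanishes uniformly: sup_{x∈T} | E[f̃_n(x)] − f(x) | ≤ 3 · sup_{x∈T} P(Z_{x,h_n} ≠ x) for every n, and hence sup_{x∈T} | E[f̃_n(x)] − f(x) | → 0 as n → ∞. -/
/-!
The kernel `g = K x h` is a probability mass function, so `|g z - 1_{z = x}| ≤ 1 - g x` for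
every `z` (for `z ≠ x`, `g z + g x ≤ 1`). Integrating against the law of `X₁` gives
`|E[g(X₁)] - f(x)| ≤ 1 - g x = P(Z_{x,h} ≠ x)`, which yields the first bound. For the
convergence, the mass of `Z_{x,h}` off `x` sits at distance `≥ α` from `x`, hence at distance
`≥ α / 2` from `E Z_{x,h}` once the mean is `α / 2`-close to `x`, so Chebyshev's inequality
bounds `P(Z_{x,h} ≠ x)` by `4 Var(Z_{x,h}) / α²`, which tends to `0` uniformly by (A1).
-/

open MeasureTheory ProbabilityTheory Filter Topology

section PointMass

variable {β : Type*} {g : β → ℝ}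

lemma abs_sub_indicator_le_one_sub (hg0 : ∀ z, 0 ≤ g z) (hg1 : HasSum g 1) (x z : β) :
    |g z - ({x} : Set β).indicator 1 z| ≤ 1 - g x := by
  classical
  have hgx : g x ≤ 1 := le_hasSum hg1 x fun i _ => hg0 i
  by_cases hzx : z = x
  · subst hzx
    rw [Set.indicator_of_mem (Set.mem_singleton z), Pi.one_apply, abs_sub_comm,
      abs_of_nonneg (by linarith)]
  · have hpair : g x + g z ≤ 1 := by
      simpa [Finset.sum_pair (Ne.symm hzx)] using sum_le_hasSum {x, z} (fun i _ => hg0 i) hg1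
    rw [Set.indicator_of_notMem (Set.notMem_singleton_iff.mpr hzx), sub_zero,
      abs_of_nonneg (hg0 z)]
    linarith

lemma abs_integral_comp_sub_measureReal_le_s15 {Ω : Type*} [MeasurableSpace Ω] (P : Measure Ω)
    [IsProbabilityMeasure P] [MeasurableSpace β] [MeasurableSingletonClass β] {X : Ω → β}
    (hX : Measurable X) (hg : Measurable g) (hg0 : ∀ z, 0 ≤ g z) (hg1 : HasSum g 1) (x : β) :
    |(∫ ω, g (X ω) ∂P) - P.real (X ⁻¹' {x})| ≤ 1 - g x := by
  have hXx : MeasurableSet (X ⁻¹' {x}) := hX (measurableSet_singleton x)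
  have hint : Integrable (fun ω => g (X ω)) P := by
    refine Integrable.of_bound (hg.comp hX).aestronglyMeasurable 1 (ae_of_all _ fun ω => ?_)
    rw [Real.norm_eq_abs, abs_of_nonneg (hg0 _)]
    exact le_hasSum hg1 _ fun i _ => hg0 i
  have hind : Integrable ((X ⁻¹' {x}).indicator (1 : Ω → ℝ)) P :=
    (integrable_const 1).indicator hXx
  rw [← integral_indicator_one hXx, ← integral_sub hint hind]
  have hpt : ∀ ω, ‖g (X ω) - (X ⁻¹' {x}).indicator 1 ω‖ ≤ 1 - g x := fun ω => by
    have h := abs_sub_indicator_le_one_sub hg0 hg1 x (X ω)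
    rwa [← Set.indicator_comp_right] at h
  simpa using norm_integral_le_of_norm_le_const (ae_of_all P hpt)

end PointMass

/-- Chebyshev's inequality for the mass of a pmf on `ℝ` outside a point `x`. -/
lemma sq_mul_one_sub_le_of_hasSum_mul_sq {g : ℝ → ℝ} {x c r V : ℝ} (hr : 0 ≤ r)
    (hg0 : ∀ z, 0 ≤ g z) (hg1 : HasSum g 1) (hV : HasSum (fun z => g z * (z - c) ^ 2) V)
    (hfar : ∀ z ≠ x, g z ≠ 0 → r ≤ |z - c|) :
    r ^ 2 * (1 - g x) ≤ V := by
  classical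
  have hoff : HasSum (fun z => r ^ 2 * Function.update g x 0 z) (r ^ 2 * (1 - g x)) := by
    simpa [sub_eq_neg_add] using (hg1.update x 0).mul_left (r ^ 2)
  refine hasSum_le (fun z => ?_) hoff hV
  rcases eq_or_ne z x with rfl | hzx
  · simpa using mul_nonneg (hg0 z) (sq_nonneg (z - c))
  rw [Function.update_of_ne hzx]
  rcases eq_or_ne (g z) 0 with hgz | hgz
  · simp [hgz]
  have hsq : r ^ 2 ≤ (z - c) ^ 2 := by
    rw [← sq_abs (z - c)]
    exact pow_le_pow_left₀ hr (hfar z hzx hgz) 2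
  rw [mul_comm]
  exact mul_le_mul_of_nonneg_left hsq (hg0 z)

theorem bias_uniform_bound_and_convergence_general
    {Ω : Type*} [MeasurableSpace Ω] (P : Measure Ω) [IsProbabilityMeasure P]
    (T : Set ℝ)
    (f : ℝ → ℝ) (hf0 : ∀ x, 0 ≤ f x)
    (S : ℝ → Set ℝ)
    (K : ℝ → ℝ → ℝ → ℝ)
    (hK0 : ∀ x ∈ T, ∀ h > (0:ℝ), ∀ z, 0 ≤ K x h z)
    (hKS : ∀ x ∈ T, ∀ h > (0:ℝ), ∀ z ∉ S x, K x h z = 0)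
    (hK1 : ∀ x ∈ T, ∀ h > (0:ℝ), HasSum (K x h) 1)
    (hKm : ∀ x h, Measurable (K x h))
    (α : ℝ) (hα : 0 < α)
    (hsep : ∀ x ∈ T, ∀ z ∈ (T ∪ S x) \ {x}, α ≤ |z - x|)
    (H : ℕ → ℝ) (hH : ∀ n, 0 < H n)
    (X1 : Ω → ℝ) (hX1m : Measurable X1)
    (hX1d : ∀ x : ℝ, P (X1 ⁻¹' {x}) = ENNReal.ofReal (f x))
    (EZ VZ : ℝ → ℝ → ℝ)
    (hVZ : ∀ x ∈ T, ∀ h > (0:ℝ), HasSum (fun z : ℝ => K x h z * (z - EZ x h) ^ 2) (VZ x h))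
    (hA1E : ∀ ε > (0:ℝ), ∃ N : ℕ, ∀ n ≥ N, ∀ x ∈ T, |EZ x (H n) - x| ≤ ε)
    (hA1V : ∀ ε > (0:ℝ), ∃ N : ℕ, ∀ n ≥ N, ∀ x ∈ T, VZ x (H n) ≤ ε)
    :
    (∀ n : ℕ, ∀ x ∈ T,
      |(∫ ω, K x (H n) (X1 ω) ∂P) - f x| ≤ 3 * ⨆ y : T, (1 - K (y:ℝ) (H n) (y:ℝ))) ∧
    (∀ ε > (0:ℝ), ∃ N : ℕ, ∀ n ≥ N, ∀ x ∈ T, |(∫ ω, K x (H n) (X1 ω) ∂P) - f x| ≤ ε) := by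
  have hbias : ∀ n, ∀ x ∈ T,
      |(∫ ω, K x (H n) (X1 ω) ∂P) - f x| ≤ 1 - K x (H n) x := by
    intro n x hx
    simpa [measureReal_def, hX1d, ENNReal.toReal_ofReal (hf0 x)] using
      abs_integral_comp_sub_measureReal_le_s15 P hX1m (hKm x (H n)) (hK0 x hx _ (hH n))
        (hK1 x hx _ (hH n)) x
  refine ⟨fun n x hx => ?_, fun ε hε => ?_⟩
  · have hbdd : BddAbove (Set.range fun y : T => 1 - K y (H n) y) :=
      ⟨1, by rintro _ ⟨y, rfl⟩; linarith [hK0 y y.2 (H n) (hH n) y]⟩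
    have hsup : 1 - K x (H n) x ≤ ⨆ y : T, (1 - K (y:ℝ) (H n) (y:ℝ)) :=
      le_ciSup hbdd ⟨x, hx⟩
    linarith [hbias n x hx, abs_nonneg ((∫ ω, K x (H n) (X1 ω) ∂P) - f x)]
  obtain ⟨N₁, hN₁⟩ := hA1E (α / 2) (by positivity)
  obtain ⟨N₂, hN₂⟩ := hA1V (ε * (α / 2) ^ 2) (by positivity)
  refine ⟨max N₁ N₂, fun n hn x hx => ?_⟩
  have hfar : ∀ z ≠ x, K x (H n) z ≠ 0 → α / 2 ≤ |z - EZ x (H n)| := fun z hzx hKz => by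
    have hzS : z ∈ S x := by_contra fun hz => hKz (hKS x hx _ (hH n) z hz)
    linarith [hsep x hx z ⟨Or.inr hzS, hzx⟩, abs_sub_le z (EZ x (H n)) x,
      hN₁ n (le_of_max_le_left hn) x hx, abs_sub_comm (EZ x (H n)) x]
  have hcheb := sq_mul_one_sub_le_of_hasSum_mul_sq (by positivity) (hK0 x hx _ (hH n))
    (hK1 x hx _ (hH n)) (hVZ x hx _ (hH n)) hfar
  have hK : 1 - K x (H n) x ≤ ε :=
    le_of_mul_le_mul_left (a := (α / 2) ^ 2)
      (by linarith [hN₂ n (le_of_max_le_right hn) x hx]) (by positivity)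
  exact (hbias n x hx).trans hK

theorem bias_uniform_bound_and_convergence
    {Ω : Type*} [MeasurableSpace Ω] (P : Measure Ω) [IsProbabilityMeasure P]
    (T : Set ℝ) (hTc : T.Countable)
    (f : ℝ → ℝ) (hf0 : ∀ x, 0 ≤ f x) (hfT : ∀ x ∉ T, f x = 0) (hf1 : HasSum f 1)
    (S : ℝ → Set ℝ) (hSc : ∀ x ∈ T, (S x).Countable)
    (K : ℝ → ℝ → ℝ → ℝ)
    (hK0 : ∀ x ∈ T, ∀ h > (0:ℝ), ∀ z, 0 ≤ K x h z)
    (hKS : ∀ x ∈ T, ∀ h > (0:ℝ), ∀ z ∉ S x, K x h z = 0)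
    (hK1 : ∀ x ∈ T, ∀ h > (0:ℝ), HasSum (K x h) 1)
    (hKm : ∀ x h, Measurable (K x h))
    (hxS : ∀ x ∈ T, x ∈ S x)
    (α : ℝ) (hα : 0 < α)
    (hsep : ∀ x ∈ T, ∀ z ∈ (T ∪ S x) \ {x}, α ≤ |z - x|)
    (H : ℕ → ℝ) (hH : ∀ n, 0 < H n) (hH0 : Tendsto H atTop (𝓝 0))
    (X1 : Ω → ℝ) (hX1m : Measurable X1)
    (hX1d : ∀ x : ℝ, P (X1 ⁻¹' {x}) = ENNReal.ofReal (f x))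
    (EZ VZ : ℝ → ℝ → ℝ)
    (hEZ : ∀ x ∈ T, ∀ h > (0:ℝ), HasSum (fun z : ℝ => K x h z * z) (EZ x h))
    (hVZ : ∀ x ∈ T, ∀ h > (0:ℝ), HasSum (fun z : ℝ => K x h z * (z - EZ x h) ^ 2) (VZ x h))
    (hA1E : ∀ ε > (0:ℝ), ∃ N : ℕ, ∀ n ≥ N, ∀ x ∈ T, |EZ x (H n) - x| ≤ ε)
    (hA1V : ∀ ε > (0:ℝ), ∃ N : ℕ, ∀ n ≥ N, ∀ x ∈ T, VZ x (H n) ≤ ε)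
    :
    (∀ n : ℕ, ∀ x ∈ T,
      |(∫ ω, K x (H n) (X1 ω) ∂P) - f x| ≤ 3 * ⨆ y : T, (1 - K (y:ℝ) (H n) (y:ℝ))) ∧
    (∀ ε > (0:ℝ), ∃ N : ℕ, ∀ n ≥ N, ∀ x ∈ T, |(∫ ω, K x (H n) (X1 ω) ∂P) - f x| ≤ ε) :=
  bias_uniform_bound_and_convergence_general P T f hf0 S K hK0 hKS hK1 hKm α hα hsep H hH X1 hX1m
    hX1d EZ VZ hVZ hA1E hA1V
end
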